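/- arXiv:1603.02717 — 4 statements merged into one kernel-verified Lean document; each statement's English description precedes it below -/
import Mathlib

section
/- Let H be a coupling function, let N ≥ 2 be an integer, and let θ be a standard solution of the reduced system for lattice size N. Then there exists t₀ > 0 such that θ′_{i,j}(t) < 0 for all t with 0 < t < t₀ and all (i,j) ∈ S_N. -/
open Real Filter Topology

/-- A coupling function: infinitely differentiable, `2π`-periodic, odd,
with strictly positive derivative on `(-π/2, π/2)`. -/
def IsCoupling (H : ℝ → ℝ) : Prop :=
  ContDiff ℝ (⊤ : ℕ∞) H ∧ (∀ x : ℝ, H (x + 2 * π) = H x) ∧ (∀ x : ℝ, H (-x) = - H x) ∧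
    (∀ x ∈ Set.Ioo (-(π / 2)) (π / 2), 0 < deriv H x)

/-- The extension `Θ` of a configuration `θ` of the reduced system:
`Θ_{k,k} = 0` on the diagonal and `Θ_{k,0} = π/2 - θ_{k,1}`. -/
noncomputable def latExt (θ : ℤ → ℤ → ℝ) (i j : ℤ) : ℝ :=
  if i = j then 0 else if j = 0 then π / 2 - θ i 1 else θ i j

/-- Right-hand side of the reduced system for lattice size `N` at index `(i,j) ∈ S_N`. -/
noncomputable def reducedRHS (H : ℝ → ℝ) (N : ℤ) (θ : ℤ → ℤ → ℝ) (i j : ℤ) : ℝ :=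
  H (latExt θ (i - 1) j - θ i j) + H (latExt θ i (j + 1) - θ i j) +
    H (latExt θ i (j - 1) - θ i j) +
    (if i < N then H (θ (i + 1) j - θ i j) else 0)

/-- A standard solution of the reduced system for lattice size `N`: components are
differentiable, satisfy the reduced system for all `t`, and start at `π/4`. -/
def IsStdSolution (H : ℝ → ℝ) (N : ℤ) (θ : ℝ → ℤ → ℤ → ℝ) : Prop :=
  (∀ i j : ℤ, 1 ≤ j → j < i → i ≤ N → ∀ t : ℝ,
      HasDerivAt (fun s => θ s i j) (reducedRHS H N (θ t) i j) t) ∧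
  (∀ i j : ℤ, 1 ≤ j → j < i → i ≤ N → θ 0 i j = π / 4)

lemma aux_mono (f g : ℝ → ℝ) (ε : ℝ) (hε : 0 < ε)
    (hf : ∀ t, HasDerivAt f (g t) t) (hg : ∀ t ∈ Set.Icc 0 ε, 0 ≤ g t) :
    ∀ t ∈ Set.Icc 0 ε, f 0 ≤ f t := by
  have hmono : MonotoneOn f (Set.Icc 0 ε) := by
    apply monotoneOn_of_deriv_nonneg (convex_Icc 0 ε)
    · exact fun x _ => (hf x).continuousAt.continuousWithinAt
    · exact fun x _ => ((hf x).differentiableAt).differentiableWithinAt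
    · intro x hx
      rw [interior_Icc] at hx
      rw [(hf x).deriv]
      exact hg x ⟨hx.1.le, hx.2.le⟩
  intro t ht
  exact hmono (Set.left_mem_Icc.2 hε.le) ht ht.1

lemma aux_integ (f g : ℝ → ℝ) (k : ℕ) (K ε : ℝ) (hε : 0 < ε)
    (hf : ∀ t, HasDerivAt f (g t) t) (hf0 : f 0 = 0)
    (hg : ∀ t ∈ Set.Icc 0 ε, g t ≤ K * t ^ k) :
    ∀ t ∈ Set.Icc 0 ε, f t ≤ (K / (k + 1)) * t ^ (k + 1) := by
  have hk : ((k : ℝ) + 1) ≠ 0 := by positivity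
  have key := aux_mono (fun t => (K / (k + 1)) * t ^ (k + 1) - f t)
      (fun t => (K / (k + 1)) * ((k + 1) * t ^ k) - g t) ε hε
      (fun t => by
        have h1 : HasDerivAt (fun t : ℝ => t ^ (k + 1)) (((k : ℝ) + 1) * t ^ k) t := by
          simpa using hasDerivAt_pow (k + 1) t
        exact ((h1.const_mul (K / (k + 1))).sub (hf t)))
      (fun t ht => by
        have heq : (K / (k + 1)) * (((k : ℝ) + 1) * t ^ k) = K * t ^ k := by
          field_simp
        have := hg t ht
        nlinarith [hg t ht, heq])
  intro t ht
  have := key t ht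
  simp only [hf0] at this
  simp at this
  linarith [this]

lemma coupling_bounds (H : ℝ → ℝ) (hH : IsCoupling H) :
    ∃ m M : ℝ, 0 < m ∧ 0 < M ∧
      (∀ x : ℝ, |x| ≤ 1 → |H x| ≤ M * |x|) ∧
      (∀ x : ℝ, -1 ≤ x → x ≤ 0 → H x ≤ m * x) := by
  obtain ⟨hcd, _, hodd, hpos⟩ := hH
  have H0 : H 0 = 0 := by have := hodd 0; simp at this; linarith
  have hd : Differentiable ℝ H := hcd.differentiable (by simp)
  have hdc : Continuous (deriv H) := hcd.continuous_deriv (by simp)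
  have hsub : Set.Icc (-1:ℝ) 1 ⊆ Set.Ioo (-(π/2)) (π/2) := by
    intro x hx
    obtain ⟨h1, h2⟩ := hx
    constructor <;> nlinarith [pi_gt_three]
  obtain ⟨xm, hxmem, hxmin⟩ := isCompact_Icc.exists_isMinOn
    (⟨0, by norm_num⟩ : (Set.Icc (-1:ℝ) 1).Nonempty) hdc.continuousOn
  obtain ⟨xM, hxMem, hxMax⟩ := isCompact_Icc.exists_isMaxOn
    (⟨0, by norm_num⟩ : (Set.Icc (-1:ℝ) 1).Nonempty) hdc.continuousOn
  set m := deriv H xm with hmdef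
  set M := deriv H xM with hMdef
  have hm : 0 < m := hpos xm (hsub hxmem)
  have hM : 0 < M := hpos xM (hsub hxMem)
  have key : ∀ x : ℝ, 0 < x → x ≤ 1 → m * x ≤ H x ∧ H x ≤ M * x := by
    intro x hx0 hx1
    obtain ⟨c, hc, hceq⟩ := exists_deriv_eq_slope H hx0 hd.continuous.continuousOn
      (hd.differentiableOn)
    have hcmem : c ∈ Set.Icc (-1:ℝ) 1 := ⟨by linarith [hc.1], by linarith [hc.2]⟩
    have hHx : H x = deriv H c * x := by
      rw [hceq, H0]; simp only [sub_zero]; field_simp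
    constructor
    · rw [hHx]; exact mul_le_mul_of_nonneg_right (hxmin hcmem) hx0.le
    · rw [hHx]; exact mul_le_mul_of_nonneg_right (hxMax hcmem) hx0.le
  have keyneg : ∀ x : ℝ, -1 ≤ x → x < 0 → M * x ≤ H x ∧ H x ≤ m * x := by
    intro x h1 h2
    have := key (-x) (by linarith) (by linarith)
    have hox : H (-x) = -H x := hodd x
    constructor <;> nlinarith [this.1, this.2]
  refine ⟨m, M, hm, hM, ?_, ?_⟩
  · intro x hx
    rcases lt_trichotomy x 0 with h | h | h
    · have := keyneg x (by cases abs_le.1 hx; linarith) h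
      have hmM : m ≤ M := hxmin hxMem
      rw [abs_of_neg h]
      rw [abs_le] at hx
      cases abs_cases (H x) with
      | inl hc => nlinarith [this.2]
      | inr hc => nlinarith [this.1]
    · simp [h, H0]
    · have := key x h (by cases abs_le.1 hx; linarith)
      have hmM : m ≤ M := hxmin hxMem
      rw [abs_of_pos h]
      cases abs_cases (H x) with
      | inl hc => nlinarith [this.2]
      | inr hc => nlinarith [this.1]
  · intro x h1 h2
    rcases eq_or_lt_of_le h2 with h | h
    · simp [h, H0]
    · exact (keyneg x h1 h).2

set_option maxHeartbeats 4000000 in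
theorem stmt0 (H : ℝ → ℝ) (hH : IsCoupling H) (N : ℤ) (hN : 2 ≤ N)
    (θ : ℝ → ℤ → ℤ → ℝ) (hθ : IsStdSolution H N θ) :
    ∃ t₀ : ℝ, 0 < t₀ ∧ ∀ t : ℝ, 0 < t → t < t₀ →
      ∀ i j : ℤ, 1 ≤ j → j < i → i ≤ N → deriv (fun s => θ s i j) t < 0 := by
  obtain ⟨m, M, hm, hM, habs, hneg⟩ := coupling_bounds H hH
  obtain ⟨hode, hinit⟩ := hθ
  have hder : ∀ i j : ℤ, 1 ≤ j → j < i → i ≤ N → ∀ t,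
      HasDerivAt (fun s => θ s i j - π/4) (reducedRHS H N (θ t) i j) t :=
    fun i j h1 h2 h3 t => (hode i j h1 h2 h3 t).sub_const _
  -- per-cell smallness
  have hsmall : ∀ i j : ℤ, 1 ≤ j → j < i → i ≤ N →
      ∃ δ : ℝ, 0 < δ ∧ ∀ t ∈ Set.Icc (0:ℝ) δ, |θ t i j - π/4| ≤ 1/8 := by
    intro i j h1 h2 h3
    have hc : ContinuousAt (fun s => θ s i j) 0 := (hode i j h1 h2 h3 0).continuousAt
    rw [Metric.continuousAt_iff] at hc
    obtain ⟨δ, hδ, hδ'⟩ := hc (1/8) (by norm_num)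
    refine ⟨δ/2, by linarith, fun t ht => ?_⟩
    have : dist t 0 < δ := by
      rw [Real.dist_eq, sub_zero, abs_of_nonneg ht.1]; linarith [ht.2]
    have := hδ' this
    rw [Real.dist_eq, hinit i j h1 h2 h3] at this
    linarith [this]
  
  -- global smallness radius
  have hsmallAll : ∃ δ₀ : ℝ, 0 < δ₀ ∧ δ₀ ≤ 1 ∧ ∀ t ∈ Set.Icc (0:ℝ) δ₀,
      ∀ i j : ℤ, 1 ≤ j → j < i → i ≤ N → |θ t i j - π/4| ≤ 1/8 := by
    set F : Finset (ℤ × ℤ) := Finset.Icc 1 N ×ˢ Finset.Icc 1 N with hF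
    have hall : ∀ᶠ t in 𝓝[>] (0:ℝ), ∀ p ∈ F,
        (1 ≤ p.2 → p.2 < p.1 → p.1 ≤ N → |θ t p.1 p.2 - π/4| ≤ 1/8) := by
      rw [Filter.eventually_all_finset]
      intro p _
      by_cases hc : 1 ≤ p.2 ∧ p.2 < p.1 ∧ p.1 ≤ N
      · obtain ⟨δ, hδ, hδ'⟩ := hsmall p.1 p.2 hc.1 hc.2.1 hc.2.2
        filter_upwards [Ioo_mem_nhdsGT_of_mem (Set.mem_Ico.2 ⟨le_refl (0:ℝ), hδ⟩)] with t ht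
        intro _ _ _
        exact hδ' t ⟨ht.1.le, ht.2.le⟩
      · exact Filter.Eventually.of_forall fun t h1 h2 h3 => absurd ⟨h1, h2, h3⟩ hc
    obtain ⟨v, hv, hsub⟩ := mem_nhdsGT_iff_exists_Ioo_subset.1 hall
    refine ⟨min (v/2) 1, by simp [Set.mem_Ioi] at hv; positivity, min_le_right _ _,
      fun t ht i j h1 h2 h3 => ?_⟩
    rcases eq_or_lt_of_le ht.1 with h | h
    · simp [← h, hinit i j h1 h2 h3]
    · have hmem : t ∈ Set.Ioo (0:ℝ) v := by
        refine ⟨h, ?_⟩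
        have := ht.2
        simp only [le_min_iff] at this
        simp [Set.mem_Ioi] at hv
        linarith [this.1]
      have hp : (i, j) ∈ F := by
        simp [hF, Finset.mem_Icc]
        omega
      exact hsub hmem (i, j) hp h1 h2 h3
  obtain ⟨δ₀, hδ₀, hδ₀1, hS⟩ := hsmallAll
  -- crude bounds on the four arguments
  have hA : ∀ t ∈ Set.Icc (0:ℝ) δ₀, ∀ i j : ℤ, 1 ≤ j → j < i → i ≤ N →
      |latExt (θ t) (i-1) j - θ t i j| ≤ 1 ∧ |latExt (θ t) i (j+1) - θ t i j| ≤ 1 ∧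
      |latExt (θ t) i (j-1) - θ t i j| ≤ 1 ∧ (i < N → |θ t (i+1) j - θ t i j| ≤ 1) := by
    intro t ht i j h1 h2 h3
    have hs0 := hS t ht i j h1 h2 h3
    rw [abs_le] at hs0
    refine ⟨?_, ?_, ?_, ?_⟩
    · by_cases hc : i - 1 = j
      · rw [show latExt (θ t) (i-1) j = 0 by simp [latExt, hc]]
        rw [abs_le]
        constructor <;> nlinarith [pi_gt_three, pi_lt_d2]
      · rw [show latExt (θ t) (i-1) j = θ t (i-1) j by
          simp [latExt, hc, show j ≠ 0 by omega]]
        have hs1 := hS t ht (i-1) j h1 (by omega) (by omega)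
        rw [abs_le] at hs1 ⊢
        constructor <;> linarith
    · by_cases hc : i = j + 1
      · rw [show latExt (θ t) i (j+1) = 0 by simp [latExt, hc]]
        rw [abs_le]
        constructor <;> nlinarith [pi_gt_three, pi_lt_d2]
      · rw [show latExt (θ t) i (j+1) = θ t i (j+1) by
          simp [latExt, show i ≠ j + 1 from hc, show j + 1 ≠ 0 by omega]]
        have hs1 := hS t ht i (j+1) (by omega) (by omega) h3
        rw [abs_le] at hs1 ⊢
        constructor <;> linarith
    · by_cases hc : j = 1
      · rw [show latExt (θ t) i (j-1) = π/2 - θ t i 1 by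
          simp [latExt, show i ≠ j - 1 by omega, show j - 1 = 0 by omega,
            show i ≠ 0 by omega]]
        rw [show (1:ℤ) = j from hc.symm]
        rw [abs_le]
        constructor <;> nlinarith [pi_gt_three, pi_lt_d2]
      · rw [show latExt (θ t) i (j-1) = θ t i (j-1) by
          simp [latExt, show i ≠ j - 1 by omega, show j - 1 ≠ 0 by omega]]
        have hs1 := hS t ht i (j-1) (by omega) (by omega) h3
        rw [abs_le] at hs1 ⊢
        constructor <;> linarith
    · intro hiN
      have hs1 := hS t ht (i+1) j h1 (by omega) (by omega)
      rw [abs_le] at hs1 ⊢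
      constructor <;> linarith
  
  -- Q lemma: |u| ≤ B t^(k+1) for cells of order ≥ k+1
  have Qlem : ∀ k : ℕ, ∀ i j : ℤ, 1 ≤ j → j < i → i ≤ N → (k : ℤ) + 1 ≤ i - j →
      ∃ B : ℝ, 0 < B ∧ ∃ ε : ℝ, 0 < ε ∧ ε ≤ δ₀ ∧
        ∀ t ∈ Set.Icc (0:ℝ) ε, |θ t i j - π/4| ≤ B * t ^ (k+1) := by
    intro k
    induction k with
    | zero =>
      intro i j h1 h2 h3 _
      have hDb : ∀ t ∈ Set.Icc (0:ℝ) δ₀, |reducedRHS H N (θ t) i j| ≤ (4*M) * t ^ 0 := by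
        intro t ht
        obtain ⟨hA1, hA2, hA3, hA4⟩ := hA t ht i j h1 h2 h3
        have b1 : |H (latExt (θ t) (i-1) j - θ t i j)| ≤ M := by
          refine le_trans (habs _ hA1) ?_
          have := mul_le_mul_of_nonneg_left hA1 hM.le
          linarith
        have b2 : |H (latExt (θ t) i (j+1) - θ t i j)| ≤ M := by
          refine le_trans (habs _ hA2) ?_
          have := mul_le_mul_of_nonneg_left hA2 hM.le
          linarith
        have b3 : |H (latExt (θ t) i (j-1) - θ t i j)| ≤ M := by
          refine le_trans (habs _ hA3) ?_
          have := mul_le_mul_of_nonneg_left hA3 hM.le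
          linarith
        have b4 : |(if i < N then H (θ t (i+1) j - θ t i j) else 0)| ≤ M := by
          by_cases hiN : i < N
          · rw [if_pos hiN]
            refine le_trans (habs _ (hA4 hiN)) ?_
            have := mul_le_mul_of_nonneg_left (hA4 hiN) hM.le
            linarith
          · rw [if_neg hiN]; simp; positivity
        rw [abs_le] at b1 b2 b3 b4 ⊢
        simp only [reducedRHS, pow_zero, mul_one]
        constructor <;> linarith [b1.1, b1.2, b2.1, b2.2, b3.1, b3.2, b4.1, b4.2]
      have hup := aux_integ (fun t => θ t i j - π/4) (fun t => reducedRHS H N (θ t) i j)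
        0 (4*M) δ₀ hδ₀ (hder i j h1 h2 h3) (by simp [hinit i j h1 h2 h3])
        (fun t ht => (abs_le.1 (hDb t ht)).2)
      have hdn := aux_integ (fun t => -(θ t i j - π/4)) (fun t => -(reducedRHS H N (θ t) i j))
        0 (4*M) δ₀ hδ₀ (fun t => (hder i j h1 h2 h3 t).neg) (by simp [hinit i j h1 h2 h3])
        (fun t ht => by have := (abs_le.1 (hDb t ht)).1; simp; linarith)
      refine ⟨4*M/(0+1), by positivity, δ₀, hδ₀, le_refl _, fun t ht => ?_⟩
      rw [abs_le]
      exact ⟨by have := hdn t ht; push_cast at this ⊢; linarith,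
             by have := hup t ht; push_cast at this ⊢; linarith⟩
    | succ n IH =>
      intro i j h1 h2 h3 hord
      obtain ⟨B0, hB0, ε0, hε0, hε0', hQ0⟩ := IH i j h1 h2 h3 (by omega)
      obtain ⟨B1, hB1, ε1, hε1, hε1', hQ1⟩ := IH (i-1) j h1 (by omega) (by omega) (by omega)
      obtain ⟨B2, hB2, ε2, hε2, hε2', hQ2⟩ := IH i (j+1) (by omega) (by omega) h3 (by omega)
      have h3b : ∃ B3 : ℝ, 0 < B3 ∧ ∃ ε3 : ℝ, 0 < ε3 ∧ ε3 ≤ δ₀ ∧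
          ∀ t ∈ Set.Icc (0:ℝ) ε3, |latExt (θ t) i (j-1) - θ t i j| ≤ B3 * t ^ (n+1) := by
        by_cases hc : j = 1
        · refine ⟨2*B0, by positivity, ε0, hε0, hε0', fun t ht => ?_⟩
          rw [show latExt (θ t) i (j-1) = π/2 - θ t i 1 by
            simp [latExt, show i ≠ j - 1 by omega, show j - 1 = 0 by omega,
              show i ≠ 0 by omega]]
          rw [show (1:ℤ) = j from hc.symm]
          have := hQ0 t ht
          rw [abs_le] at this ⊢
          constructor <;> nlinarith [this.1, this.2]
        · obtain ⟨B3, hB3, ε3, hε3, hε3', hQ3⟩ := IH i (j-1) (by omega) (by omega) h3 (by omega)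
          refine ⟨B3 + B0, by positivity, min ε3 ε0, lt_min hε3 hε0,
            le_trans (min_le_left _ _) hε3', fun t ht => ?_⟩
          simp only [Set.mem_Icc, le_min_iff] at ht
          rw [show latExt (θ t) i (j-1) = θ t i (j-1) by
            simp [latExt, show i ≠ j - 1 by omega, show j - 1 ≠ 0 by omega]]
          have ha := hQ3 t ⟨ht.1, ht.2.1⟩
          have hb := hQ0 t ⟨ht.1, ht.2.2⟩
          rw [abs_le] at ha hb ⊢
          constructor <;> linarith [ha.1, ha.2, hb.1, hb.2]
      obtain ⟨B3, hB3, ε3, hε3, hε3', hQ3⟩ := h3b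
      have h4b : ∃ B4 : ℝ, 0 < B4 ∧ ∃ ε4 : ℝ, 0 < ε4 ∧ ε4 ≤ δ₀ ∧
          ∀ t ∈ Set.Icc (0:ℝ) ε4,
            |(if i < N then H (θ t (i+1) j - θ t i j) else 0)| ≤ M * (B4 * t ^ (n+1)) := by
        by_cases hiN : i < N
        · obtain ⟨B4, hB4, ε4, hε4, hε4', hQ4⟩ := IH (i+1) j h1 (by omega) (by omega) (by omega)
          refine ⟨B4 + B0, by positivity, min ε4 ε0, lt_min hε4 hε0,
            le_trans (min_le_left _ _) hε4', fun t ht => ?_⟩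
          simp only [Set.mem_Icc, le_min_iff] at ht
          rw [if_pos hiN]
          have ha := hQ4 t ⟨ht.1, ht.2.1⟩
          have hb := hQ0 t ⟨ht.1, ht.2.2⟩
          have harg : |θ t (i+1) j - θ t i j| ≤ (B4 + B0) * t ^ (n+1) := by
            rw [abs_le] at ha hb ⊢
            constructor <;> linarith [ha.1, ha.2, hb.1, hb.2]
          have hone : |θ t (i+1) j - θ t i j| ≤ 1 :=
            (hA t ⟨ht.1, le_trans ht.2.1 hε4'⟩ i j h1 h2 h3).2.2.2 hiN
          calc |H (θ t (i+1) j - θ t i j)| ≤ M * |θ t (i+1) j - θ t i j| := habs _ hone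
            _ ≤ M * ((B4 + B0) * t ^ (n+1)) := by
                apply mul_le_mul_of_nonneg_left harg hM.le
        · refine ⟨1, one_pos, δ₀, hδ₀, le_refl _, fun t ht => ?_⟩
          rw [if_neg hiN]
          simp only [abs_zero]
          have : 0 ≤ t := ht.1
          positivity
      obtain ⟨B4, hB4, ε4, hε4, hε4', hQ4⟩ := h4b
      set K : ℝ := M * ((B1 + B0) + (B2 + B0) + B3 + B4) with hK
      have hKpos : 0 < K := by positivity
      set ε : ℝ := min ε0 (min ε1 (min ε2 (min ε3 ε4))) with hε
      have hεpos : 0 < ε := by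
        simp only [hε, lt_min_iff]
        exact ⟨hε0, hε1, hε2, hε3, hε4⟩
      have hεδ : ε ≤ δ₀ := le_trans (min_le_left _ _) hε0'
      have hDb : ∀ t ∈ Set.Icc (0:ℝ) ε, |reducedRHS H N (θ t) i j| ≤ K * t ^ (n+1) := by
        intro t ht
        have htparts : 0 ≤ t ∧ t ≤ ε0 ∧ t ≤ ε1 ∧ t ≤ ε2 ∧ t ≤ ε3 ∧ t ≤ ε4 := by
          obtain ⟨ht0, ht1⟩ := ht
          simp only [hε, le_min_iff] at ht1
          exact ⟨ht0, ht1.1, ht1.2.1, ht1.2.2.1, ht1.2.2.2.1, ht1.2.2.2.2⟩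
        obtain ⟨ht0, he0, he1, he2, he3, he4⟩ := htparts
        have htδ : t ∈ Set.Icc (0:ℝ) δ₀ := ⟨ht0, le_trans he0 hε0'⟩
        obtain ⟨hA1, hA2, hA3, hA4⟩ := hA t htδ i j h1 h2 h3
        have e1 : latExt (θ t) (i-1) j = θ t (i-1) j := by
          simp [latExt, show ¬(i - 1 = j) by omega, show j ≠ 0 by omega]
        have e2 : latExt (θ t) i (j+1) = θ t i (j+1) := by
          simp [latExt, show ¬(i = j + 1) by omega, show j + 1 ≠ 0 by omega]
        have ha0 := hQ0 t ⟨ht0, he0⟩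
        have ha1 := hQ1 t ⟨ht0, he1⟩
        have ha2 := hQ2 t ⟨ht0, he2⟩
        have ha3 := hQ3 t ⟨ht0, he3⟩
        have ha4 := hQ4 t ⟨ht0, he4⟩
        have barg1 : |latExt (θ t) (i-1) j - θ t i j| ≤ (B1 + B0) * t ^ (n+1) := by
          rw [e1]; rw [abs_le] at ha0 ha1 ⊢
          constructor <;> linarith [ha0.1, ha0.2, ha1.1, ha1.2]
        have barg2 : |latExt (θ t) i (j+1) - θ t i j| ≤ (B2 + B0) * t ^ (n+1) := by
          rw [e2]; rw [abs_le] at ha0 ha2 ⊢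
          constructor <;> linarith [ha0.1, ha0.2, ha2.1, ha2.2]
        have b1 : |H (latExt (θ t) (i-1) j - θ t i j)| ≤ M * ((B1 + B0) * t ^ (n+1)) :=
          le_trans (habs _ hA1) (mul_le_mul_of_nonneg_left barg1 hM.le)
        have b2 : |H (latExt (θ t) i (j+1) - θ t i j)| ≤ M * ((B2 + B0) * t ^ (n+1)) :=
          le_trans (habs _ hA2) (mul_le_mul_of_nonneg_left barg2 hM.le)
        have b3 : |H (latExt (θ t) i (j-1) - θ t i j)| ≤ M * (B3 * t ^ (n+1)) :=
          le_trans (habs _ hA3) (mul_le_mul_of_nonneg_left ha3 hM.le)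
        rw [abs_le] at b1 b2 b3 ha4 ⊢
        simp only [reducedRHS, hK]
        constructor <;> nlinarith [b1.1, b1.2, b2.1, b2.2, b3.1, b3.2, ha4.1, ha4.2, pow_nonneg ht0 (n+1)]
      have hup := aux_integ (fun t => θ t i j - π/4) (fun t => reducedRHS H N (θ t) i j)
        (n+1) K ε hεpos (hder i j h1 h2 h3) (by simp [hinit i j h1 h2 h3])
        (fun t ht => (abs_le.1 (hDb t ht)).2)
      have hdn := aux_integ (fun t => -(θ t i j - π/4)) (fun t => -(reducedRHS H N (θ t) i j))
        (n+1) K ε hεpos (fun t => (hder i j h1 h2 h3 t).neg) (by simp [hinit i j h1 h2 h3])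
        (fun t ht => by have := (abs_le.1 (hDb t ht)).1; simp; linarith)
      refine ⟨K / ((n:ℝ) + 1 + 1), by positivity, ε, hεpos, hεδ, fun t ht => ?_⟩
      have hu := hup t ht
      have hd := hdn t ht
      rw [abs_le]
      push_cast at hu hd ⊢
      constructor <;> linarith
  
  -- combined bound for the third and fourth arguments
  have hQ34 : ∀ k : ℕ, ∀ i j : ℤ, 1 ≤ j → j < i → i ≤ N → (k : ℤ) + 1 ≤ i - j →
      ∃ C : ℝ, 0 < C ∧ ∃ ε : ℝ, 0 < ε ∧ ε ≤ δ₀ ∧ ∀ t ∈ Set.Icc (0:ℝ) ε,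
        |latExt (θ t) i (j-1) - θ t i j| ≤ C * t ^ (k+1) ∧
        |(if i < N then H (θ t (i+1) j - θ t i j) else 0)| ≤ M * (C * t ^ (k+1)) := by
    intro k i j h1 h2 h3 hord
    obtain ⟨B0, hB0, ε0, hε0, hε0', hQ0⟩ := Qlem k i j h1 h2 h3 hord
    have h3b : ∃ B3 : ℝ, 0 < B3 ∧ ∃ ε3 : ℝ, 0 < ε3 ∧ ε3 ≤ δ₀ ∧
        ∀ t ∈ Set.Icc (0:ℝ) ε3, |latExt (θ t) i (j-1) - θ t i j| ≤ B3 * t ^ (k+1) := by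
      by_cases hc : j = 1
      · refine ⟨2*B0, by positivity, ε0, hε0, hε0', fun t ht => ?_⟩
        rw [show latExt (θ t) i (j-1) = π/2 - θ t i 1 by
          simp [latExt, show i ≠ j - 1 by omega, show j - 1 = 0 by omega,
            show i ≠ 0 by omega]]
        rw [show (1:ℤ) = j from hc.symm]
        have := hQ0 t ht
        rw [abs_le] at this ⊢
        constructor <;> nlinarith [this.1, this.2]
      · obtain ⟨B3, hB3, ε3, hε3, hε3', hQ3⟩ := Qlem k i (j-1) (by omega) (by omega) h3 (by omega)
        refine ⟨B3 + B0, by positivity, min ε3 ε0, lt_min hε3 hε0,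
          le_trans (min_le_left _ _) hε3', fun t ht => ?_⟩
        simp only [Set.mem_Icc, le_min_iff] at ht
        rw [show latExt (θ t) i (j-1) = θ t i (j-1) by
          simp [latExt, show i ≠ j - 1 by omega, show j - 1 ≠ 0 by omega]]
        have ha := hQ3 t ⟨ht.1, ht.2.1⟩
        have hb := hQ0 t ⟨ht.1, ht.2.2⟩
        rw [abs_le] at ha hb ⊢
        constructor <;> linarith [ha.1, ha.2, hb.1, hb.2]
    obtain ⟨B3, hB3, ε3, hε3, hε3', hQ3⟩ := h3b
    have h4b : ∃ B4 : ℝ, 0 < B4 ∧ ∃ ε4 : ℝ, 0 < ε4 ∧ ε4 ≤ δ₀ ∧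
        ∀ t ∈ Set.Icc (0:ℝ) ε4,
          |(if i < N then H (θ t (i+1) j - θ t i j) else 0)| ≤ M * (B4 * t ^ (k+1)) := by
      by_cases hiN : i < N
      · obtain ⟨B4, hB4, ε4, hε4, hε4', hQ4⟩ := Qlem k (i+1) j h1 (by omega) (by omega) (by omega)
        refine ⟨B4 + B0, by positivity, min ε4 ε0, lt_min hε4 hε0,
          le_trans (min_le_left _ _) hε4', fun t ht => ?_⟩
        simp only [Set.mem_Icc, le_min_iff] at ht
        rw [if_pos hiN]
        have ha := hQ4 t ⟨ht.1, ht.2.1⟩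
        have hb := hQ0 t ⟨ht.1, ht.2.2⟩
        have harg : |θ t (i+1) j - θ t i j| ≤ (B4 + B0) * t ^ (k+1) := by
          rw [abs_le] at ha hb ⊢
          constructor <;> linarith [ha.1, ha.2, hb.1, hb.2]
        have hone : |θ t (i+1) j - θ t i j| ≤ 1 :=
          (hA t ⟨ht.1, le_trans ht.2.1 hε4'⟩ i j h1 h2 h3).2.2.2 hiN
        calc |H (θ t (i+1) j - θ t i j)| ≤ M * |θ t (i+1) j - θ t i j| := habs _ hone
          _ ≤ M * ((B4 + B0) * t ^ (k+1)) := by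
              apply mul_le_mul_of_nonneg_left harg hM.le
      · refine ⟨1, one_pos, δ₀, hδ₀, le_refl _, fun t ht => ?_⟩
        rw [if_neg hiN]
        simp only [abs_zero]
        have : 0 ≤ t := ht.1
        positivity
    obtain ⟨B4, hB4, ε4, hε4, hε4', hQ4⟩ := h4b
    refine ⟨B3 + B4, by positivity, min ε3 ε4, lt_min hε3 hε4,
      le_trans (min_le_left _ _) hε3', fun t ht => ?_⟩
    simp only [Set.mem_Icc, le_min_iff] at ht
    have ha := hQ3 t ⟨ht.1, ht.2.1⟩
    have hb := hQ4 t ⟨ht.1, ht.2.2⟩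
    have hp : 0 ≤ t ^ (k+1) := pow_nonneg ht.1 _
    constructor
    · nlinarith [ha, hB4, hp, mul_nonneg hB4.le hp]
    · nlinarith [hb, hp, mul_nonneg (mul_nonneg hM.le hB3.le) hp]
  -- P lemma
  have Plem : ∀ e : ℕ, ∀ i j : ℤ, 1 ≤ j → j < i → i ≤ N → i - j = (e : ℤ) + 1 →
      ∃ c : ℝ, 0 < c ∧ ∃ ε : ℝ, 0 < ε ∧ ε ≤ δ₀ ∧
        (∀ t ∈ Set.Icc (0:ℝ) ε, reducedRHS H N (θ t) i j ≤ -c * t ^ e) ∧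
        (∀ t ∈ Set.Icc (0:ℝ) ε, θ t i j - π/4 ≤ -c * t ^ (e+1)) := by
    intro e
    induction e with
    | zero =>
      intro i j h1 h2 h3 hord
      obtain ⟨C, hC, εc, hεc, hεc', hQc⟩ := hQ34 0 i j h1 h2 h3 (by omega)
      set ε : ℝ := min εc ((m/8)/(2*M*C+1)) with hεdef
      have hεpos : 0 < ε := lt_min hεc (by positivity)
      have hεδ : ε ≤ δ₀ := le_trans (min_le_left _ _) hεc'
      have hDb : ∀ t ∈ Set.Icc (0:ℝ) ε, reducedRHS H N (θ t) i j ≤ -(m/8) * t ^ 0 := by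
        intro t ht
        have ht0 : 0 ≤ t := ht.1
        have htc : t ≤ εc := le_trans ht.2 (min_le_left _ _)
        have htm : t ≤ (m/8)/(2*M*C+1) := le_trans ht.2 (min_le_right _ _)
        have htδ : t ∈ Set.Icc (0:ℝ) δ₀ := ⟨ht0, le_trans ht.2 hεδ⟩
        have hs := hS t htδ i j h1 h2 h3
        rw [abs_le] at hs
        have e1 : latExt (θ t) (i-1) j = 0 := by simp [latExt, show i - 1 = j by omega]
        have e2 : latExt (θ t) i (j+1) = 0 := by simp [latExt, show i = j + 1 by omega]
        have hH1 : H (latExt (θ t) (i-1) j - θ t i j) ≤ -(m/8) := by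
          rw [e1]
          have hb1 : -1 ≤ 0 - θ t i j := by nlinarith [pi_gt_three, pi_lt_d2, hs.1, hs.2]
          have hb2 : 0 - θ t i j ≤ -(1/8) := by nlinarith [pi_gt_three, hs.2, hs.1]
          have := hneg _ hb1 (by linarith)
          nlinarith [this, hm]
        have hH2 : H (latExt (θ t) i (j+1) - θ t i j) ≤ -(m/8) := by
          rw [e2]
          have hb1 : -1 ≤ 0 - θ t i j := by nlinarith [pi_gt_three, pi_lt_d2, hs.1, hs.2]
          have hb2 : 0 - θ t i j ≤ -(1/8) := by nlinarith [pi_gt_three, hs.2, hs.1]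
          have := hneg _ hb1 (by linarith)
          nlinarith [this, hm]
        obtain ⟨hq3, hq4⟩ := hQc t ⟨ht0, htc⟩
        have hA3 := (hA t htδ i j h1 h2 h3).2.2.1
        have hH3 : H (latExt (θ t) i (j-1) - θ t i j) ≤ M * (C * t ^ 1) :=
          le_trans (le_abs_self _)
            (le_trans (habs _ hA3) (mul_le_mul_of_nonneg_left hq3 hM.le))
        have hH4 : (if i < N then H (θ t (i+1) j - θ t i j) else 0) ≤ M * (C * t ^ 1) :=
          le_trans (le_abs_self _) hq4
        rw [le_div_iff₀ (by positivity : (0:ℝ) < 2*M*C+1)] at htm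
        simp only [reducedRHS, pow_zero, mul_one, pow_one] at hH3 hH4 ⊢
        linarith [hH1, hH2, hH3, hH4, ht0, htm]
      have hup := aux_integ (fun t => θ t i j - π/4) (fun t => reducedRHS H N (θ t) i j)
        0 (-(m/8)) ε hεpos (hder i j h1 h2 h3) (by simp [hinit i j h1 h2 h3])
        (fun t ht => hDb t ht)
      refine ⟨m/8, by positivity, ε, hεpos, hεδ, fun t ht => hDb t ht, fun t ht => ?_⟩
      have := hup t ht
      norm_num at this ⊢
      linarith
    | succ n IH =>
      intro i j h1 h2 h3 hord
      obtain ⟨c1, hc1, εa, hεa, hεa', hDa, hua⟩ := IH (i-1) j h1 (by omega) (by omega) (by omega)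
      obtain ⟨c2, hc2, εb, hεb, hεb', hDbb, hub⟩ := IH i (j+1) (by omega) (by omega) h3 (by omega)
      obtain ⟨B0, hB0, ε0, hε0, hε0', hQ0⟩ := Qlem (n+1) i j h1 h2 h3 (by omega)
      obtain ⟨C, hC, εc, hεc, hεc', hQc⟩ := hQ34 (n+1) i j h1 h2 h3 (by omega)
      set ε : ℝ := min εa (min εb (min ε0 (min εc
        (min (c1/(2*B0+1)) (min (c2/(B0+1)) ((m*c1/4)/(2*M*C+1))))))) with hεdef
      have hεpos : 0 < ε := by
        simp only [hεdef, lt_min_iff]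
        refine ⟨hεa, hεb, hε0, hεc, by positivity, by positivity, by positivity⟩
      have hεδ : ε ≤ δ₀ := le_trans (min_le_left _ _) hεa'
      set c' : ℝ := m * c1 / 4 with hc'def
      have hc'pos : 0 < c' := by positivity
      have hDb : ∀ t ∈ Set.Icc (0:ℝ) ε, reducedRHS H N (θ t) i j ≤ -c' * t ^ (n+1) := by
        intro t ht
        have ht0 : 0 ≤ t := ht.1
        have htall := ht.2
        simp only [hεdef, le_min_iff] at htall
        obtain ⟨hta, htb, ht00, htc, htm1, htm2, htm3⟩ := htall
        have htδ : t ∈ Set.Icc (0:ℝ) δ₀ := ⟨ht0, le_trans ht.2 hεδ⟩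
        have hp1 : (0:ℝ) ≤ t ^ (n+1) := pow_nonneg ht0 _
        have e1 : latExt (θ t) (i-1) j = θ t (i-1) j := by
          simp [latExt, show ¬(i - 1 = j) by omega, show j ≠ 0 by omega]
        have e2 : latExt (θ t) i (j+1) = θ t i (j+1) := by
          simp [latExt, show ¬(i = j + 1) by omega, show j + 1 ≠ 0 by omega]
        have hu0 := hQ0 t ⟨ht0, ht00⟩
        rw [abs_le] at hu0
        have hpow : t ^ (n+1+1) = t * t ^ (n+1) := by ring
        -- first argument
        have hA1b := (hA t htδ i j h1 h2 h3).1
        have harg1 : latExt (θ t) (i-1) j - θ t i j ≤ -(c1/2) * t ^ (n+1) := by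
          rw [e1]
          have h1' := hua t ⟨ht0, hta⟩
          rw [le_div_iff₀ (by positivity : (0:ℝ) < 2*B0+1)] at htm1
          have hkey : B0 * t ^ (n+1+1) ≤ (c1/2) * t ^ (n+1) := by
            rw [hpow]
            nlinarith [mul_le_mul_of_nonneg_right htm1 hp1, mul_nonneg ht0 hp1, hB0, hp1]
          linarith [h1', hu0.1, hkey]
        have hH1 : H (latExt (θ t) (i-1) j - θ t i j) ≤ m * (-(c1/2) * t ^ (n+1)) := by
          have hge : -1 ≤ latExt (θ t) (i-1) j - θ t i j := (abs_le.1 hA1b).1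
          have hle0 : latExt (θ t) (i-1) j - θ t i j ≤ 0 := by nlinarith [harg1, hc1, hp1]
          exact le_trans (hneg _ hge hle0) (mul_le_mul_of_nonneg_left harg1 hm.le)
        -- second argument
        have hA2b := (hA t htδ i j h1 h2 h3).2.1
        have harg2 : latExt (θ t) i (j+1) - θ t i j ≤ 0 := by
          rw [e2]
          have h2' := hub t ⟨ht0, htb⟩
          rw [le_div_iff₀ (by positivity : (0:ℝ) < B0+1)] at htm2
          have hkey : B0 * t ^ (n+1+1) ≤ c2 * t ^ (n+1) := by
            rw [hpow]
            nlinarith [mul_le_mul_of_nonneg_right htm2 hp1, mul_nonneg ht0 hp1, hB0, hp1]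
          linarith [h2', hu0.1, hkey]
        have hH2 : H (latExt (θ t) i (j+1) - θ t i j) ≤ 0 := by
          have hge : -1 ≤ latExt (θ t) i (j+1) - θ t i j := (abs_le.1 hA2b).1
          have := hneg _ hge harg2
          nlinarith [hm, harg2]
        -- third and fourth arguments
        obtain ⟨hq3, hq4⟩ := hQc t ⟨ht0, htc⟩
        have hA3b := (hA t htδ i j h1 h2 h3).2.2.1
        have hH3 : H (latExt (θ t) i (j-1) - θ t i j) ≤ M * (C * t ^ (n+1+1)) :=
          le_trans (le_abs_self _)
            (le_trans (habs _ hA3b) (mul_le_mul_of_nonneg_left hq3 hM.le))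
        have hH4 : (if i < N then H (θ t (i+1) j - θ t i j) else 0) ≤ M * (C * t ^ (n+1+1)) :=
          le_trans (le_abs_self _) hq4
        -- absorb the higher order terms
        rw [le_div_iff₀ (by positivity : (0:ℝ) < 2*M*C+1)] at htm3
        have habsorb : M * (C * t ^ (n+1+1)) + M * (C * t ^ (n+1+1)) ≤ (m*c1/4) * t ^ (n+1) := by
          rw [hpow]
          nlinarith [mul_le_mul_of_nonneg_right htm3 hp1, mul_nonneg ht0 hp1, hp1,
            mul_nonneg hM.le hC.le]
        simp only [reducedRHS, hc'def]
        linarith [hH1, hH2, hH3, hH4, habsorb]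
      have hup := aux_integ (fun t => θ t i j - π/4) (fun t => reducedRHS H N (θ t) i j)
        (n+1) (-c') ε hεpos (hder i j h1 h2 h3) (by simp [hinit i j h1 h2 h3])
        (fun t ht => hDb t ht)
      refine ⟨c' / ((n:ℝ) + 2), by positivity, ε, hεpos, hεδ, fun t ht => ?_, fun t ht => ?_⟩
      · have := hDb t ht
        have hp1 : (0:ℝ) ≤ t ^ (n+1) := pow_nonneg ht.1 _
        have hcle : c' / ((n:ℝ) + 2) ≤ c' := by
          rw [div_le_iff₀ (by positivity)]
          nlinarith [hc'pos]
        nlinarith [this, hcle, hp1]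
      · have := hup t ht
        have hcoef : (-c') / ((n:ℝ) + 1 + 1) = -(c' / ((n:ℝ) + 2)) := by ring
        push_cast at this
        rw [hcoef] at this
        push_cast
        linarith
  
  -- final assembly
  have hfin : ∀ i j : ℤ, 1 ≤ j → j < i → i ≤ N →
      ∀ᶠ t in 𝓝[>] (0:ℝ), deriv (fun s => θ s i j) t < 0 := by
    intro i j h1 h2 h3
    obtain ⟨c, hc, ε, hε, hεδ, hD, _⟩ := Plem (i - j - 1).toNat i j h1 h2 h3 (by omega)
    filter_upwards [Ioo_mem_nhdsGT_of_mem (Set.mem_Ico.2 ⟨le_refl (0:ℝ), hε⟩)] with t ht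
    rw [(hode i j h1 h2 h3 t).deriv]
    have hle := hD t ⟨ht.1.le, ht.2.le⟩
    have hp : 0 < c * t ^ (i - j - 1).toNat := mul_pos hc (pow_pos ht.1 _)
    linarith
  set F : Finset (ℤ × ℤ) := Finset.Icc 1 N ×ˢ Finset.Icc 1 N with hF
  have hall : ∀ᶠ t in 𝓝[>] (0:ℝ), ∀ p ∈ F,
      (1 ≤ p.2 → p.2 < p.1 → p.1 ≤ N → deriv (fun s => θ s p.1 p.2) t < 0) := by
    rw [Filter.eventually_all_finset]
    intro p _
    by_cases hc : 1 ≤ p.2 ∧ p.2 < p.1 ∧ p.1 ≤ N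
    · filter_upwards [hfin p.1 p.2 hc.1 hc.2.1 hc.2.2] with t ht
      intro _ _ _
      exact ht
    · exact Filter.Eventually.of_forall fun t h1 h2 h3 => absurd ⟨h1, h2, h3⟩ hc
  obtain ⟨v, hv, hsub⟩ := mem_nhdsGT_iff_exists_Ioo_subset.1 hall
  refine ⟨v, Set.mem_Ioi.1 hv, fun t ht1 ht2 i j h1 h2 h3 => ?_⟩
  have hp : (i, j) ∈ F := by
    simp [hF, Finset.mem_Icc]
    omega
  exact hsub ⟨ht1, ht2⟩ (i, j) hp h1 h2 h3
end

section
/- Let H be a coupling function, let N ≥ 2 be an integer, and let θ be a standard solution of the reduced system for lattice size N whose components θ_{i,j} : ℝ → ℝ are infinitely differentiable. Then for every (i,j) ∈ S_N, the k-th derivative of θ_{i,j} at t = 0 equals 0 for every k with 1 ≤ k ≤ i − j − 1, and the (i − j)-th derivative of θ_{i,j} at t = 0 is strictly negative. -/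
open Real Filter Topology

open scoped ContDiff

namespace Stmt1Aux

lemma one_le_inf : (1 : WithTop ℕ∞) ≤ ∞ := by exact_mod_cast (le_top : (1:ℕ∞) ≤ ⊤)

lemma coe_le_inf (n : ℕ) : (n : WithTop ℕ∞) ≤ ∞ := by
  exact_mod_cast (le_top : ((n:ℕ∞)) ≤ ⊤)

lemma diff_of_inf {f : ℝ → ℝ} (h : ContDiff ℝ ∞ f) : Differentiable ℝ f :=
  h.differentiable (by simp)

lemma deriv_smooth {f : ℝ → ℝ} (h : ContDiff ℝ ∞ f) : ContDiff ℝ ∞ (deriv f) :=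
  (contDiff_infty_iff_deriv.mp h).2

lemma itD_add {n : ℕ} {f g : ℝ → ℝ} (hf : ContDiff ℝ ∞ f) (hg : ContDiff ℝ ∞ g) (x : ℝ) :
    iteratedDeriv n (fun t => f t + g t) x = iteratedDeriv n f x + iteratedDeriv n g x := by
  simp only [← iteratedDerivWithin_univ]
  exact iteratedDerivWithin_add (Set.mem_univ x) uniqueDiffOn_univ
    (hf.of_le (coe_le_inf n)).contDiffWithinAt (hg.of_le (coe_le_inf n)).contDiffWithinAt

lemma itD_sub {n : ℕ} {f g : ℝ → ℝ} (hf : ContDiff ℝ ∞ f) (hg : ContDiff ℝ ∞ g) (x : ℝ) :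
    iteratedDeriv n (fun t => f t - g t) x = iteratedDeriv n f x - iteratedDeriv n g x := by
  simp only [← iteratedDerivWithin_univ]
  exact iteratedDerivWithin_sub (Set.mem_univ x) uniqueDiffOn_univ
    (hf.of_le (coe_le_inf n)).contDiffWithinAt (hg.of_le (coe_le_inf n)).contDiffWithinAt

lemma itD_add4 (n : ℕ) (a b c d : ℝ → ℝ) (ha : ContDiff ℝ ∞ a) (hb : ContDiff ℝ ∞ b)
    (hc : ContDiff ℝ ∞ c) (hd : ContDiff ℝ ∞ d) (x : ℝ) :
    iteratedDeriv n (fun t => a t + b t + c t + d t) x =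
      iteratedDeriv n a x + iteratedDeriv n b x + iteratedDeriv n c x + iteratedDeriv n d x := by
  calc iteratedDeriv n (fun t => a t + b t + c t + d t) x
      = iteratedDeriv n (fun t => a t + b t + c t) x + iteratedDeriv n d x :=
        itD_add (f := fun t => a t + b t + c t) ((ha.add hb).add hc) hd x
    _ = iteratedDeriv n (fun t => a t + b t) x + iteratedDeriv n c x + iteratedDeriv n d x := by
        rw [itD_add (f := fun t => a t + b t) (ha.add hb) hc x]
    _ = _ := by rw [itD_add ha hb x]

lemma itD_zero_fun (n : ℕ) : iteratedDeriv n (fun _ : ℝ => (0:ℝ)) = fun _ => 0 := by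
  induction n with
  | zero => exact iteratedDeriv_zero
  | succ n ih => rw [iteratedDeriv_succ', deriv_const']; exact ih

lemma itD_c_sub_two_mul {f : ℝ → ℝ} (hf : ContDiff ℝ ∞ f) (c : ℝ) {n : ℕ} (hn : 1 ≤ n) (x : ℝ) :
    iteratedDeriv n (fun t => c - 2 * f t) x = -(2 * iteratedDeriv n f x) := by
  rw [← iteratedDerivWithin_univ, ← iteratedDerivWithin_univ,
    iteratedDerivWithin_const_sub (s := Set.univ) (x := x) hn c,
    iteratedDerivWithin_fun_neg (s := Set.univ) (x := x) (fun t => 2 * f t),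
    iteratedDerivWithin_const_mul (Set.mem_univ x) uniqueDiffOn_univ (2:ℝ)
      (hf.of_le (coe_le_inf n)).contDiffWithinAt]

lemma mul_vanish : ∀ n : ℕ, ∀ u v : ℝ → ℝ, ContDiff ℝ ∞ u → ContDiff ℝ ∞ v →
    (∀ l, l ≤ n → iteratedDeriv l v 0 = 0) →
    iteratedDeriv n (fun t => u t * v t) 0 = 0 := by
  intro n
  induction n with
  | zero =>
    intro u v hu hv h0
    have h := h0 0 le_rfl
    simp only [iteratedDeriv_zero] at h ⊢
    simp [h]
  | succ n ih =>
    intro u v hu hv h0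
    have hder : deriv (fun t => u t * v t) = fun t => deriv u t * v t + u t * deriv v t := by
      funext t
      exact deriv_mul (diff_of_inf hu t) (diff_of_inf hv t)
    rw [iteratedDeriv_succ', hder,
      itD_add ((deriv_smooth hu).mul hv) (hu.mul (deriv_smooth hv)),
      ih (deriv u) v (deriv_smooth hu) hv (fun l hl => h0 l (hl.trans n.le_succ)),
      ih u (deriv v) hu (deriv_smooth hv) ?_, add_zero]
    intro l hl
    rw [← iteratedDeriv_succ']
    exact h0 (l+1) (by omega)

lemma mul_factor : ∀ n : ℕ, ∀ u v : ℝ → ℝ, ContDiff ℝ ∞ u → ContDiff ℝ ∞ v →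
    (∀ l, l < n → iteratedDeriv l v 0 = 0) →
    iteratedDeriv n (fun t => u t * v t) 0 = u 0 * iteratedDeriv n v 0 := by
  intro n
  induction n with
  | zero =>
    intro u v hu hv h0
    simp [iteratedDeriv_zero]
  | succ n ih =>
    intro u v hu hv h0
    have hder : deriv (fun t => u t * v t) = fun t => deriv u t * v t + u t * deriv v t := by
      funext t
      exact deriv_mul (diff_of_inf hu t) (diff_of_inf hv t)
    rw [iteratedDeriv_succ', hder,
      itD_add ((deriv_smooth hu).mul hv) (hu.mul (deriv_smooth hv)),
      mul_vanish n (deriv u) v (deriv_smooth hu) hv (fun l hl => h0 l (by omega)), zero_add,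
      ih u (deriv v) hu (deriv_smooth hv) ?_]
    · rw [← iteratedDeriv_succ']
    · intro l hl
      rw [← iteratedDeriv_succ']
      exact h0 (l+1) (by omega)

lemma comp_formula {Hf g : ℝ → ℝ} (hHf : ContDiff ℝ ∞ Hf) (hg : ContDiff ℝ ∞ g)
    (hH0 : Hf 0 = 0) (hg0 : g 0 = 0) (m : ℕ)
    (hv : ∀ l, 1 ≤ l → l < m → iteratedDeriv l g 0 = 0) :
    iteratedDeriv m (fun t => Hf (g t)) 0 = deriv Hf 0 * iteratedDeriv m g 0 := by
  cases m with
  | zero =>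
    simp only [iteratedDeriv_zero]
    rw [hg0, hH0, mul_zero]
  | succ m =>
    have hcomp : deriv (fun t => Hf (g t)) = fun t => deriv Hf (g t) * deriv g t := by
      funext t
      rw [show (fun t => Hf (g t)) = Hf ∘ g from rfl]
      exact deriv_comp t (diff_of_inf hHf (g t)) (diff_of_inf hg t)
    rw [iteratedDeriv_succ', hcomp,
      mul_factor m (fun t => deriv Hf (g t)) (deriv g) ((deriv_smooth hHf).comp hg)
        (deriv_smooth hg) ?_]
    · rw [hg0, ← iteratedDeriv_succ']
    · intro l hl
      rw [← iteratedDeriv_succ']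
      exact hv (l+1) (by omega) (by omega)

lemma comp_zero {Hf g : ℝ → ℝ} (hHf : ContDiff ℝ ∞ Hf) (hg : ContDiff ℝ ∞ g)
    (hH0 : Hf 0 = 0) (hg0 : g 0 = 0) {m l : ℕ} (hl : l < m)
    (hv : ∀ l', 1 ≤ l' → l' < m → iteratedDeriv l' g 0 = 0) :
    iteratedDeriv l (fun t => Hf (g t)) 0 = 0 := by
  cases l with
  | zero => simp only [iteratedDeriv_zero]; rw [hg0, hH0]
  | succ l =>
    rw [comp_formula hHf hg hH0 hg0 (l+1) (fun l' h1 h2 => hv l' h1 (by omega)),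
      hv (l+1) (by omega) hl, mul_zero]

section Main

variable {H : ℝ → ℝ} {N : ℤ} {θ : ℝ → ℤ → ℤ → ℝ}

lemma H_zero (hH : IsCoupling H) : H 0 = 0 := by
  have h := hH.2.2.1 0
  simp only [neg_zero] at h
  linarith

lemma H_pi4_pos (hH : IsCoupling H) : 0 < H (π / 4) := by
  have hHs : ContDiff ℝ ∞ H := hH.1.of_le (by simp)
  have hmono : StrictMonoOn H (Set.Icc 0 (π/4)) := by
    apply strictMonoOn_of_deriv_pos (convex_Icc _ _) hHs.continuous.continuousOn
    intro x hx
    rw [interior_Icc] at hx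
    refine hH.2.2.2 x ⟨?_, ?_⟩
    · linarith [hx.1, pi_pos]
    · linarith [hx.2, pi_pos]
  have h := hmono (Set.left_mem_Icc.mpr (by positivity)) (Set.right_mem_Icc.mpr (by positivity))
    (by positivity)
  rwa [H_zero hH] at h

lemma dH_zero_pos (hH : IsCoupling H) : 0 < deriv H 0 :=
  hH.2.2.2 0 ⟨by linarith [pi_pos], by linarith [pi_pos]⟩

lemma core (hH : IsCoupling H) (hθ : IsStdSolution H N θ)
    (hsm : ∀ i j : ℤ, 1 ≤ j → j < i → i ≤ N → ContDiff ℝ (⊤ : ℕ∞) (fun s => θ s i j))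
    (i j : ℤ) (h1 : 1 ≤ j) (h2 : j + 1 < i) (h3 : i ≤ N)
    (n : ℕ) (hn : 1 ≤ n) (hnd : (n : ℤ) ≤ i - j - 1)
    (hV : ∀ l : ℕ, 1 ≤ l → l ≤ n → ∀ a b : ℤ, 1 ≤ b → b < a → a ≤ N →
      (l : ℤ) ≤ a - b - 1 → iteratedDeriv l (fun s => θ s a b) 0 = 0) :
    iteratedDeriv (n + 1) (fun s => θ s i j) 0 =
      deriv H 0 * iteratedDeriv n (fun s => θ s (i - 1) j) 0 +
      deriv H 0 * iteratedDeriv n (fun s => θ s i (j + 1)) 0 := by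
  have hHs : ContDiff ℝ ∞ H := hH.1.of_le (by simp)
  have hH0 : H 0 = 0 := H_zero hH
  have sm : ∀ a b : ℤ, 1 ≤ b → b < a → a ≤ N → ContDiff ℝ ∞ (fun s => θ s a b) :=
    fun a b hb hba haN => (hsm a b hb hba haN).of_le (by simp)
  have v0 := hθ.2
  -- the four raw pieces
  set T1 : ℝ → ℝ := fun t => H (latExt (θ t) (i-1) j - θ t i j) with hT1
  set T2 : ℝ → ℝ := fun t => H (latExt (θ t) i (j+1) - θ t i j) with hT2
  set T3 : ℝ → ℝ := fun t => H (latExt (θ t) i (j-1) - θ t i j) with hT3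
  set T4 : ℝ → ℝ := fun t => if i < N then H (θ t (i+1) j - θ t i j) else 0 with hT4
  have hDf : deriv (fun s => θ s i j) = fun t => T1 t + T2 t + T3 t + T4 t := by
    funext t
    rw [(hθ.1 i j h1 (by omega) h3 t).deriv]
    rfl
  -- rewriting the pieces without latExt
  have e1 : T1 = fun t => H (θ t (i-1) j - θ t i j) := by
    funext t
    simp only [hT1, latExt]
    rw [if_neg (by omega), if_neg (by omega)]
  have e2 : T2 = fun t => H (θ t i (j+1) - θ t i j) := by
    funext t
    simp only [hT2, latExt]
    rw [if_neg (by omega), if_neg (by omega)]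
  -- smoothness and values of the basic differences
  have smij := sm i j h1 (by omega) h3
  have sm1 := sm (i-1) j h1 (by omega) (by omega)
  have sm2 := sm i (j+1) (by omega) (by omega) h3
  have g1sm : ContDiff ℝ ∞ (fun t => θ t (i-1) j - θ t i j) := sm1.sub smij
  have g2sm : ContDiff ℝ ∞ (fun t => θ t i (j+1) - θ t i j) := sm2.sub smij
  have g10 : θ 0 (i-1) j - θ 0 i j = 0 := by
    rw [v0 (i-1) j h1 (by omega) (by omega), v0 i j h1 (by omega) h3, sub_self]
  have g20 : θ 0 i (j+1) - θ 0 i j = 0 := by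
    rw [v0 i (j+1) (by omega) (by omega) h3, v0 i j h1 (by omega) h3, sub_self]
  have g1v : ∀ l : ℕ, 1 ≤ l → l < n → iteratedDeriv l (fun t => θ t (i-1) j - θ t i j) 0 = 0 := by
    intro l hl1 hl2
    rw [itD_sub sm1 smij, hV l hl1 (by omega) (i-1) j h1 (by omega) (by omega) (by omega),
      hV l hl1 (by omega) i j h1 (by omega) h3 (by omega), sub_zero]
  have g2v : ∀ l : ℕ, 1 ≤ l → l < n → iteratedDeriv l (fun t => θ t i (j+1) - θ t i j) 0 = 0 := by
    intro l hl1 hl2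
    rw [itD_sub sm2 smij, hV l hl1 (by omega) i (j+1) (by omega) (by omega) h3 (by omega),
      hV l hl1 (by omega) i j h1 (by omega) h3 (by omega), sub_zero]
  have t1sm : ContDiff ℝ ∞ T1 := by rw [e1]; exact hHs.comp g1sm
  have t2sm : ContDiff ℝ ∞ T2 := by rw [e2]; exact hHs.comp g2sm
  -- piece 3
  have h3main : ContDiff ℝ ∞ T3 ∧ iteratedDeriv n T3 0 = 0 := by
    by_cases hj : j = 1
    · subst hj
      have smi1 := sm i 1 le_rfl (by omega) h3
      have e3 : T3 = fun t => H (π/2 - 2 * θ t i 1) := by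
        funext t
        simp only [hT3, latExt]
        rw [if_neg (by omega), if_pos (by omega)]
        ring_nf
      constructor
      · rw [e3]
        exact hHs.comp (contDiff_const.sub (contDiff_const.mul smi1))
      · rw [e3]
        refine comp_zero hHs (contDiff_const.sub (contDiff_const.mul smi1)) hH0 ?_
          (Nat.lt_succ_self n) ?_
        · rw [v0 i 1 le_rfl (by omega) h3]; ring
        · intro l hl1 hl2
          rw [itD_c_sub_two_mul smi1 _ hl1,
            hV l hl1 (by omega) i 1 le_rfl (by omega) h3 (by omega)]
          ring
    · have smj1 := sm i (j-1) (by omega) (by omega) h3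
      have e3 : T3 = fun t => H (θ t i (j-1) - θ t i j) := by
        funext t
        simp only [hT3, latExt]
        rw [if_neg (by omega), if_neg (by omega)]
      constructor
      · rw [e3]; exact hHs.comp (smj1.sub smij)
      · rw [e3]
        refine comp_zero hHs (smj1.sub smij) hH0 ?_ (Nat.lt_succ_self n) ?_
        · show θ 0 i (j-1) - θ 0 i j = 0
          rw [v0 i (j-1) (by omega) (by omega) h3, v0 i j h1 (by omega) h3, sub_self]
        · intro l hl1 hl2
          rw [itD_sub smj1 smij,
            hV l hl1 (by omega) i (j-1) (by omega) (by omega) h3 (by omega),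
            hV l hl1 (by omega) i j h1 (by omega) h3 (by omega), sub_zero]
  -- piece 4
  have h4main : ContDiff ℝ ∞ T4 ∧ iteratedDeriv n T4 0 = 0 := by
    by_cases hiN : i < N
    · have smi1 := sm (i+1) j h1 (by omega) (by omega)
      have e4 : T4 = fun t => H (θ t (i+1) j - θ t i j) := by
        funext t
        simp only [hT4]
        rw [if_pos hiN]
      constructor
      · rw [e4]; exact hHs.comp (smi1.sub smij)
      · rw [e4]
        refine comp_zero hHs (smi1.sub smij) hH0 ?_ (Nat.lt_succ_self n) ?_
        · show θ 0 (i+1) j - θ 0 i j = 0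
          rw [v0 (i+1) j h1 (by omega) (by omega), v0 i j h1 (by omega) h3, sub_self]
        · intro l hl1 hl2
          rw [itD_sub smi1 smij,
            hV l hl1 (by omega) (i+1) j h1 (by omega) (by omega) (by omega),
            hV l hl1 (by omega) i j h1 (by omega) h3 (by omega), sub_zero]
    · have e4 : T4 = fun _ => (0:ℝ) := by
        funext t
        simp only [hT4]
        rw [if_neg hiN]
      constructor
      · rw [e4]; exact contDiff_const
      · rw [e4, itD_zero_fun]
  -- final computation
  rw [iteratedDeriv_succ', hDf, itD_add4 n T1 T2 T3 T4 t1sm t2sm h3main.1 h4main.1 0,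
    h3main.2, h4main.2, add_zero, add_zero]
  have t1val : iteratedDeriv n T1 0 =
      deriv H 0 * iteratedDeriv n (fun s => θ s (i-1) j) 0 := by
    rw [e1, comp_formula hHs g1sm hH0 g10 n g1v,
      itD_sub sm1 smij, hV n hn le_rfl i j h1 (by omega) h3 (by omega), sub_zero]
  have t2val : iteratedDeriv n T2 0 =
      deriv H 0 * iteratedDeriv n (fun s => θ s i (j+1)) 0 := by
    rw [e2, comp_formula hHs g2sm hH0 g20 n g2v,
      itD_sub sm2 smij, hV n hn le_rfl i j h1 (by omega) h3 (by omega), sub_zero]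
  rw [t1val, t2val]

lemma claimW (hH : IsCoupling H) (hθ : IsStdSolution H N θ)
    (hsm : ∀ i j : ℤ, 1 ≤ j → j < i → i ≤ N → ContDiff ℝ (⊤ : ℕ∞) (fun s => θ s i j)) :
    ∀ k : ℕ, 1 ≤ k → ∀ i j : ℤ, 1 ≤ j → j < i → i ≤ N → (k : ℤ) ≤ i - j - 1 →
      iteratedDeriv k (fun s => θ s i j) 0 = 0 := by
  have hH0 : H 0 = 0 := H_zero hH
  have v0 := hθ.2
  intro k
  induction k using Nat.strong_induction_on with
  | _ k IH =>
    intro hk1 i j h1 h2 h3 hk2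
    have hd2 : j + 1 < i := by omega
    rcases Nat.lt_or_ge k 2 with hk | hk
    · have hk1' : k = 1 := by omega
      subst hk1'
      rw [iteratedDeriv_one, (hθ.1 i j h1 h2 h3 0).deriv]
      have l1 : latExt (θ 0) (i-1) j = π/4 := by
        simp only [latExt]
        rw [if_neg (by omega), if_neg (by omega)]
        exact v0 (i-1) j h1 (by omega) (by omega)
      have l2 : latExt (θ 0) i (j+1) = π/4 := by
        simp only [latExt]
        rw [if_neg (by omega), if_neg (by omega)]
        exact v0 i (j+1) (by omega) (by omega) h3
      have l3 : latExt (θ 0) i (j-1) = π/4 := by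
        by_cases hj : j = 1
        · subst hj
          simp only [latExt]
          rw [if_neg (by omega), if_pos (by omega), v0 i 1 le_rfl (by omega) h3]
          ring
        · simp only [latExt]
          rw [if_neg (by omega), if_neg (by omega)]
          exact v0 i (j-1) (by omega) (by omega) h3
      rw [reducedRHS, l1, l2, l3, v0 i j h1 h2 h3, sub_self, hH0]
      by_cases hiN : i < N
      · rw [if_pos hiN, v0 (i+1) j h1 (by omega) (by omega), sub_self, hH0]
        ring
      · rw [if_neg hiN]
        ring
    · obtain ⟨n, rfl⟩ : ∃ n, k = n + 1 := ⟨k-1, by omega⟩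
      rw [core hH hθ hsm i j h1 hd2 h3 n (by omega) (by omega)
        (fun l hl1 hl2 a b hb hba haN hlab => IH l (by omega) hl1 a b hb hba haN hlab),
        IH n (by omega) (by omega) (i-1) j h1 (by omega) (by omega) (by omega),
        IH n (by omega) (by omega) i (j+1) (by omega) (by omega) h3 (by omega),
        mul_zero, add_zero]

lemma claimNeg (hH : IsCoupling H) (hθ : IsStdSolution H N θ)
    (hsm : ∀ i j : ℤ, 1 ≤ j → j < i → i ≤ N → ContDiff ℝ (⊤ : ℕ∞) (fun s => θ s i j)) :
    ∀ d : ℕ, 1 ≤ d → ∀ i j : ℤ, 1 ≤ j → j < i → i ≤ N → i - j = (d : ℤ) →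
      iteratedDeriv d (fun s => θ s i j) 0 < 0 := by
  have hH0 : H 0 = 0 := H_zero hH
  have v0 := hθ.2
  intro d
  induction d using Nat.strong_induction_on with
  | _ d IH =>
    intro hd1 i j h1 h2 h3 hdij
    rcases Nat.lt_or_ge d 2 with hd | hd
    · have hd1' : d = 1 := by omega
      subst hd1'
      have hij : i = j + 1 := by omega
      rw [iteratedDeriv_one, (hθ.1 i j h1 h2 h3 0).deriv]
      have l1 : latExt (θ 0) (i-1) j = 0 := by
        simp only [latExt]
        rw [if_pos (by omega)]
      have l2 : latExt (θ 0) i (j+1) = 0 := by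
        simp only [latExt]
        rw [if_pos (by omega)]
      have l3 : latExt (θ 0) i (j-1) = π/4 := by
        by_cases hj : j = 1
        · subst hj
          simp only [latExt]
          rw [if_neg (by omega), if_pos (by omega), v0 i 1 le_rfl (by omega) h3]
          ring
        · simp only [latExt]
          rw [if_neg (by omega), if_neg (by omega)]
          exact v0 i (j-1) (by omega) (by omega) h3
      rw [reducedRHS, l1, l2, l3, v0 i j h1 h2 h3, sub_self, hH0]
      have hodd : H (0 - π/4) = - H (π/4) := by
        rw [show (0:ℝ) - π/4 = -(π/4) by ring]
        exact hH.2.2.1 _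
      rw [hodd]
      have hp := H_pi4_pos hH
      by_cases hiN : i < N
      · rw [if_pos hiN, v0 (i+1) j h1 (by omega) (by omega), sub_self, hH0]
        linarith
      · rw [if_neg hiN]
        linarith
    · obtain ⟨n, rfl⟩ : ∃ n, d = n + 1 := ⟨d-1, by omega⟩
      rw [core hH hθ hsm i j h1 (by omega) h3 n (by omega) (by omega)
        (fun l hl1 hl2 a b hb hba haN hlab =>
          claimW hH hθ hsm l hl1 a b hb hba haN hlab)]
      have hA1 := IH n (by omega) (by omega) (i-1) j h1 (by omega) (by omega) (by omega)
      have hA2 := IH n (by omega) (by omega) i (j+1) (by omega) (by omega) h3 (by omega)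
      have hd0 : 0 < deriv H 0 := dH_zero_pos hH
      have m1 : deriv H 0 * iteratedDeriv n (fun s => θ s (i-1) j) 0 < 0 :=
        mul_neg_of_pos_of_neg hd0 hA1
      have m2 : deriv H 0 * iteratedDeriv n (fun s => θ s i (j+1)) 0 < 0 :=
        mul_neg_of_pos_of_neg hd0 hA2
      linarith

end Main

end Stmt1Aux

theorem stmt1 (H : ℝ → ℝ) (hH : IsCoupling H) (N : ℤ) (hN : 2 ≤ N)
    (θ : ℝ → ℤ → ℤ → ℝ) (hθ : IsStdSolution H N θ)
    (hsmooth : ∀ i j : ℤ, 1 ≤ j → j < i → i ≤ N → ContDiff ℝ (⊤ : ℕ∞) (fun s => θ s i j)) :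
    ∀ i j : ℤ, 1 ≤ j → j < i → i ≤ N →
      (∀ k : ℕ, 1 ≤ k → (k : ℤ) ≤ i - j - 1 → iteratedDeriv k (fun s => θ s i j) 0 = 0) ∧
      iteratedDeriv (i - j).toNat (fun s => θ s i j) 0 < 0 := by
  intro i j h1 h2 h3
  constructor
  · intro k hk1 hk2
    exact Stmt1Aux.claimW hH hθ hsmooth k hk1 i j h1 h2 h3 hk2
  · exact Stmt1Aux.claimNeg hH hθ hsmooth (i-j).toNat (by omega) i j h1 h2 h3 (by omega)
end

section
/- Let H be a coupling function, let N ≥ 2 be an integer, and let θ be a standard solution of the reduced system for lattice size N. Then for all t > 0 and all (i,j) ∈ S_N one has 0 < θ_{i,j}(t) < π/4 and θ′_{i,j}(t) < 0. -/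
open Real Filter Topology

open Real Filter Topology Set

-- generic calculus helpers

lemma deriv_nonneg_of_left_neg {f : ℝ → ℝ} {d τ a : ℝ} (hd : HasDerivAt f d τ)
    (ha : a < τ) (hneg : ∀ r ∈ Set.Ico a τ, f r < 0) (h0 : f τ = 0) : 0 ≤ d := by
  have h := hasDerivAt_iff_tendsto_slope.1 hd
  have h' : Tendsto (slope f τ) (𝓝[<] τ) (𝓝 d) :=
    h.mono_left (nhdsWithin_mono _ (fun x hx => ne_of_lt hx))
  refine ge_of_tendsto h' ?_
  filter_upwards [Ioo_mem_nhdsLT ha] with r hr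
  have h1 : f r < 0 := hneg r ⟨hr.1.le, hr.2⟩
  have h2 : r - τ < 0 := by linarith [hr.2]
  rw [slope_def_field]
  have : (0:ℝ) < (f r - f τ) / (r - τ) := div_pos_iff.2 (Or.inr ⟨by linarith, h2⟩)
  linarith

lemma antitoneOn_Icc_of_hasDerivAt {f f' : ℝ → ℝ} {a b : ℝ}
    (hf : ∀ r ∈ Set.Icc a b, HasDerivAt f (f' r) r)
    (h0 : ∀ r ∈ Set.Icc a b, f' r ≤ 0) : AntitoneOn f (Set.Icc a b) := by
  apply antitoneOn_of_deriv_nonpos (convex_Icc a b)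
  · exact fun r hr => (hf r hr).continuousAt.continuousWithinAt
  · intro r hr
    rw [interior_Icc] at hr
    exact (hf r (Ioo_subset_Icc_self hr)).differentiableAt.differentiableWithinAt
  · intro r hr
    rw [interior_Icc] at hr
    rw [(hf r (Ioo_subset_Icc_self hr)).deriv]
    exact h0 r (Ioo_subset_Icc_self hr)

lemma sub_decay {f f' : ℝ → ℝ} {a b δ : ℝ} (hab : a ≤ b)
    (hf : ∀ r ∈ Set.Icc a b, HasDerivAt f (f' r) r)
    (h0 : ∀ r ∈ Set.Icc a b, f' r ≤ -δ) : f b ≤ f a - δ * (b - a) := by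
  have key : AntitoneOn (fun r => f r + δ * r) (Set.Icc a b) := by
    apply antitoneOn_Icc_of_hasDerivAt (f' := fun r => f' r + δ)
    · intro r hr
      exact (hf r hr).add (((hasDerivAt_id r).const_mul δ).congr_deriv (by ring))
    · intro r hr; linarith [h0 r hr]
  have := key (Set.left_mem_Icc.2 hab) (Set.right_mem_Icc.2 hab) hab
  simp only at this
  linarith

lemma exp_antitone_core {v dv : ℝ → ℝ} {C a b : ℝ} (hab : a ≤ b)
    (hv : ∀ r ∈ Set.Icc a b, HasDerivAt v (dv r) r)
    (hb : ∀ r ∈ Set.Icc a b, dv r ≤ C * (-(v r))) :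
    AntitoneOn (fun r => Real.exp (C * r) * v r) (Set.Icc a b) := by
  apply antitoneOn_Icc_of_hasDerivAt
    (f' := fun r => Real.exp (C * r) * C * v r + Real.exp (C * r) * dv r)
  · intro r hr
    have he : HasDerivAt (fun y => Real.exp (C * y)) (Real.exp (C * r) * C) r := by
      have := ((hasDerivAt_id r).const_mul C).exp
      simpa using this
    exact he.mul (hv r hr)
  · intro r hr
    have h1 := hb r hr
    have h2 : Real.exp (C * r) * dv r ≤ Real.exp (C * r) * (C * (-(v r))) :=
      mul_le_mul_of_nonneg_left h1 (Real.exp_pos _).le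
    nlinarith [Real.exp_pos (C * r)]

lemma persistence_core {v dv : ℝ → ℝ} {C a b : ℝ} (hab : a ≤ b)
    (hv : ∀ r ∈ Set.Icc a b, HasDerivAt v (dv r) r)
    (hb : ∀ r ∈ Set.Icc a b, dv r ≤ C * (-(v r))) (hva : v a < 0) : v b < 0 := by
  have key := exp_antitone_core hab hv hb (Set.left_mem_Icc.2 hab) (Set.right_mem_Icc.2 hab) hab
  simp only at key
  nlinarith [Real.exp_pos (C * a), Real.exp_pos (C * b)]

lemma propagation_core {v dv w : ℝ → ℝ} {C a b : ℝ} (hab : a < b)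
    (hv : ∀ r ∈ Set.Icc a b, HasDerivAt v (dv r) r)
    (hb : ∀ r ∈ Set.Icc a b, dv r ≤ C * (-(v r)) - w r)
    (hwc : ContinuousOn w (Set.Icc a b))
    (hwp : ∀ r ∈ Set.Icc a b, 0 < w r)
    (hva : v a ≤ 0) : v b < 0 := by
  -- δ := min of exp(C r) * w r on [a,b]
  obtain ⟨x, hx, hmin⟩ := isCompact_Icc.exists_isMinOn (Set.nonempty_Icc.2 hab.le)
    (((Real.continuous_exp.comp (continuous_const.mul continuous_id)).continuousOn).mul hwc)
  set δ := Real.exp (C * x) * w x with hδ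
  have hδpos : 0 < δ := mul_pos (Real.exp_pos _) (hwp x hx)
  have key : Real.exp (C * b) * v b ≤ Real.exp (C * a) * v a - δ * (b - a) := by
    apply sub_decay hab.le
      (f' := fun r => Real.exp (C * r) * C * v r + Real.exp (C * r) * dv r)
    · intro r hr
      have he : HasDerivAt (fun y => Real.exp (C * y)) (Real.exp (C * r) * C) r := by
        have := ((hasDerivAt_id r).const_mul C).exp
        simpa using this
      exact he.mul (hv r hr)
    · intro r hr
      have h1 := hb r hr
      have h2 : Real.exp (C * r) * dv r ≤ Real.exp (C * r) * (C * (-(v r)) - w r) :=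
        mul_le_mul_of_nonneg_left h1 (Real.exp_pos _).le
      have h3 : δ ≤ Real.exp (C * r) * w r := hmin hr
      nlinarith [Real.exp_pos (C * r)]
  have h4 : Real.exp (C * a) * v a ≤ 0 := mul_nonpos_of_nonneg_of_nonpos (Real.exp_pos _).le hva
  have h5 : Real.exp (C * b) * v b < 0 := by nlinarith
  nlinarith [Real.exp_pos (C * b)]

lemma left_lim_le {f : ℝ → ℝ} {τ c : ℝ} (hτ : 0 < τ) (hf : Continuous f)
    (h : ∀ s ∈ Set.Ico 0 τ, f s ≤ c) : f τ ≤ c := by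
  have ht : Tendsto f (𝓝[<] τ) (𝓝 (f τ)) := (hf.tendsto τ).mono_left nhdsWithin_le_nhds
  refine le_of_tendsto ht ?_
  filter_upwards [Ioo_mem_nhdsLT hτ] with s hs using h s ⟨hs.1.le, hs.2⟩

lemma left_lim_ge {f : ℝ → ℝ} {τ c : ℝ} (hτ : 0 < τ) (hf : Continuous f)
    (h : ∀ s ∈ Set.Ico 0 τ, c ≤ f s) : c ≤ f τ := by
  have ht : Tendsto f (𝓝[<] τ) (𝓝 (f τ)) := (hf.tendsto τ).mono_left nhdsWithin_le_nhds
  refine ge_of_tendsto ht ?_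
  filter_upwards [Ioo_mem_nhdsLT hτ] with s hs using h s ⟨hs.1.le, hs.2⟩

lemma coupling_zero {H : ℝ → ℝ} (hH : IsCoupling H) : H 0 = 0 := by
  have := hH.2.2.1 0
  simp at this
  linarith

lemma coupling_mono {H : ℝ → ℝ} (hH : IsCoupling H) :
    StrictMonoOn H (Set.Icc (-(π/2)) (π/2)) := by
  apply strictMonoOn_of_deriv_pos (convex_Icc _ _)
    (hH.1.continuous.continuousOn)
  intro x hx
  rw [interior_Icc] at hx
  exact hH.2.2.2 x (by simpa [div_eq_mul_inv] using hx)

lemma coupling_nonneg {H : ℝ → ℝ} (hH : IsCoupling H) {x : ℝ}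
    (h0 : 0 ≤ x) (h1 : x ≤ π/2) : 0 ≤ H x := by
  rcases eq_or_lt_of_le h0 with h | h
  · rw [← h, coupling_zero hH]
  · have h2 : (0:ℝ) ∈ Set.Icc (-(π/2)) (π/2) := by
      constructor <;> nlinarith [pi_pos]
    have h3 : x ∈ Set.Icc (-(π/2)) (π/2) := by
      constructor <;> nlinarith [pi_pos]
    have := coupling_mono hH h2 h3 h
    rw [coupling_zero hH] at this
    linarith

lemma coupling_neg_quarter {H : ℝ → ℝ} (hH : IsCoupling H) : H (-(π/4)) < 0 := by
  have h2 : (0:ℝ) ∈ Set.Icc (-(π/2)) (π/2) := by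
    constructor <;> nlinarith [pi_pos]
  have h3 : -(π/4) ∈ Set.Icc (-(π/2)) (π/2) := by
    constructor <;> nlinarith [pi_pos]
  have := coupling_mono hH h3 h2 (by nlinarith [pi_pos])
  rw [coupling_zero hH] at this
  linarith

lemma coupling_bound {H : ℝ → ℝ} (hH : IsCoupling H) :
    ∃ Cb : ℝ, 0 ≤ Cb ∧ ∀ x ∈ Set.Icc (-π) π, |deriv H x| ≤ Cb := by
  have hc : Continuous (deriv H) := hH.1.continuous_deriv (by simp)
  obtain ⟨C, hC⟩ := isCompact_Icc.exists_bound_of_continuousOn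
    (s := Set.Icc (-π) π) hc.continuousOn
  refine ⟨max C 0, le_max_right _ _, fun x hx => ?_⟩
  have := hC x hx
  rw [Real.norm_eq_abs] at this
  exact this.trans (le_max_left _ _)

noncomputable def vv (H : ℝ → ℝ) (N : ℤ) (θ : ℝ → ℤ → ℤ → ℝ) (t : ℝ) (i j : ℤ) : ℝ :=
  reducedRHS H N (θ t) i j

noncomputable def VV (H : ℝ → ℝ) (N : ℤ) (θ : ℝ → ℤ → ℤ → ℝ) (t : ℝ) (i j : ℤ) : ℝ :=
  if i = j then 0 else if j = 0 then -(vv H N θ t i 1) else vv H N θ t i j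

noncomputable def DV (H : ℝ → ℝ) (N : ℤ) (θ : ℝ → ℤ → ℤ → ℝ) (t : ℝ) (i j : ℤ) : ℝ :=
  deriv H (latExt (θ t) (i-1) j - θ t i j) * (VV H N θ t (i-1) j - vv H N θ t i j)
  + deriv H (latExt (θ t) i (j+1) - θ t i j) * (VV H N θ t i (j+1) - vv H N θ t i j)
  + deriv H (latExt (θ t) i (j-1) - θ t i j) * (VV H N θ t i (j-1) - vv H N θ t i j)
  + (if i < N then deriv H (θ t (i+1) j - θ t i j) * (vv H N θ t (i+1) j - vv H N θ t i j) else 0)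

section dyn

variable {H : ℝ → ℝ} {N : ℤ} {θ : ℝ → ℤ → ℤ → ℝ}

lemma hasDerivAt_latExt
    (hode : ∀ i j : ℤ, 1 ≤ j → j < i → i ≤ N → ∀ t : ℝ,
      HasDerivAt (fun s => θ s i j) (vv H N θ t i j) t)
    (a b : ℤ) (hab : a = b ∨ (b = 0 ∧ 1 < a ∧ a ≤ N) ∨ (1 ≤ b ∧ b < a ∧ a ≤ N)) (t : ℝ) :
    HasDerivAt (fun s => latExt (θ s) a b) (VV H N θ t a b) t := by
  rcases hab with h | ⟨h0, h1, h2⟩ | ⟨h1, h2, h3⟩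
  · subst h
    simp only [latExt, VV, if_pos rfl]
    exact hasDerivAt_const t 0
  · have hne : a ≠ b := by omega
    simp only [latExt, VV, if_neg hne, if_pos h0]
    exact (hode a 1 le_rfl h1 h2 t).const_sub (π/2)
  · have hne : a ≠ b := by omega
    have hb0 : b ≠ 0 := by omega
    simp only [latExt, VV, if_neg hne, if_neg hb0]
    exact hode a b h1 h2 h3 t

lemma hasDerivAt_vv (hH : IsCoupling H)
    (hode : ∀ i j : ℤ, 1 ≤ j → j < i → i ≤ N → ∀ t : ℝ,
      HasDerivAt (fun s => θ s i j) (vv H N θ t i j) t)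
    (i j : ℤ) (h1 : 1 ≤ j) (h2 : j < i) (h3 : i ≤ N) (t : ℝ) :
    HasDerivAt (fun s => vv H N θ s i j) (DV H N θ t i j) t := by
  have hHd : ∀ x : ℝ, HasDerivAt H (deriv H x) x := fun x =>
    ((hH.1.differentiable (by simp)) x).hasDerivAt
  -- neighbor trichotomies
  have t1 : i - 1 = j ∨ (j = 0 ∧ 1 < i - 1 ∧ i - 1 ≤ N) ∨ (1 ≤ j ∧ j < i - 1 ∧ i - 1 ≤ N) := by
    omega
  have t2 : i = j + 1 ∨ (j + 1 = 0 ∧ 1 < i ∧ i ≤ N) ∨ (1 ≤ j + 1 ∧ j + 1 < i ∧ i ≤ N) := by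
    omega
  have t3 : i = j - 1 ∨ (j - 1 = 0 ∧ 1 < i ∧ i ≤ N) ∨ (1 ≤ j - 1 ∧ j - 1 < i ∧ i ≤ N) := by
    omega
  have g1 : HasDerivAt (fun s => latExt (θ s) (i-1) j - θ s i j)
      (VV H N θ t (i-1) j - vv H N θ t i j) t :=
    (hasDerivAt_latExt hode _ _ t1 t).sub (hode i j h1 h2 h3 t)
  have g2 : HasDerivAt (fun s => latExt (θ s) i (j+1) - θ s i j)
      (VV H N θ t i (j+1) - vv H N θ t i j) t :=
    (hasDerivAt_latExt hode _ _ t2 t).sub (hode i j h1 h2 h3 t)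
  have g3 : HasDerivAt (fun s => latExt (θ s) i (j-1) - θ s i j)
      (VV H N θ t i (j-1) - vv H N θ t i j) t :=
    (hasDerivAt_latExt hode _ _ t3 t).sub (hode i j h1 h2 h3 t)
  have c1 : HasDerivAt (fun s => H (latExt (θ s) (i-1) j - θ s i j))
      (deriv H (latExt (θ t) (i-1) j - θ t i j) * (VV H N θ t (i-1) j - vv H N θ t i j)) t :=
    (hHd _).comp t g1
  have c2 : HasDerivAt (fun s => H (latExt (θ s) i (j+1) - θ s i j))
      (deriv H (latExt (θ t) i (j+1) - θ t i j) * (VV H N θ t i (j+1) - vv H N θ t i j)) t :=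
    (hHd _).comp t g2
  have c3 : HasDerivAt (fun s => H (latExt (θ s) i (j-1) - θ s i j))
      (deriv H (latExt (θ t) i (j-1) - θ t i j) * (VV H N θ t i (j-1) - vv H N θ t i j)) t :=
    (hHd _).comp t g3
  by_cases hiN : i < N
  · have g4 : HasDerivAt (fun s => θ s (i+1) j - θ s i j)
        (vv H N θ t (i+1) j - vv H N θ t i j) t :=
      (hode (i+1) j h1 (by omega) (by omega) t).sub (hode i j h1 h2 h3 t)
    have c4 : HasDerivAt (fun s => H (θ s (i+1) j - θ s i j))
        (deriv H (θ t (i+1) j - θ t i j) * (vv H N θ t (i+1) j - vv H N θ t i j)) t :=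
      (hHd _).comp t g4
    have hfun : (fun s => vv H N θ s i j) = (fun s => H (latExt (θ s) (i-1) j - θ s i j)
        + H (latExt (θ s) i (j+1) - θ s i j) + H (latExt (θ s) i (j-1) - θ s i j)
        + H (θ s (i+1) j - θ s i j)) := by
      funext s; simp only [vv, reducedRHS, if_pos hiN]
    rw [hfun, DV, if_pos hiN]
    exact ((c1.add c2).add c3).add c4
  · have hfun : (fun s => vv H N θ s i j) = (fun s => H (latExt (θ s) (i-1) j - θ s i j)
        + H (latExt (θ s) i (j+1) - θ s i j) + H (latExt (θ s) i (j-1) - θ s i j)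
        + 0) := by
      funext s; simp only [vv, reducedRHS, if_neg hiN]
    rw [hfun, DV, if_neg hiN]
    exact ((c1.add c2).add c3).add (hasDerivAt_const t 0)

end dyn

def inBox (N : ℤ) (θ : ℝ → ℤ → ℤ → ℝ) (t : ℝ) : Prop :=
  ∀ i j : ℤ, 1 ≤ j → j < i → i ≤ N → θ t i j ∈ Set.Icc (-(π/16)) (π/4 + π/16)

lemma arg_coop_mem {x y : ℝ} (hx : x ∈ Set.Icc (-(π/16)) (π/4 + π/16))
    (hy : y ∈ Set.Icc (-(π/16)) (π/4 + π/16)) : x - y ∈ Set.Ioo (-(π/2)) (π/2) := by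
  obtain ⟨a1, a2⟩ := hx; obtain ⟨b1, b2⟩ := hy
  constructor <;> nlinarith [pi_pos]

lemma arg_diag_mem {y : ℝ} (hy : y ∈ Set.Icc (-(π/16)) (π/4 + π/16)) :
    0 - y ∈ Set.Ioo (-(π/2)) (π/2) := by
  obtain ⟨b1, b2⟩ := hy
  constructor <;> nlinarith [pi_pos]

lemma dH_coop {H : ℝ → ℝ} {Cb : ℝ} (hH : IsCoupling H)
    (hCb : ∀ x ∈ Set.Icc (-π) π, |deriv H x| ≤ Cb) {a : ℝ}
    (ha : a ∈ Set.Ioo (-(π/2)) (π/2)) : 0 < deriv H a ∧ deriv H a ≤ Cb := by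
  obtain ⟨a1, a2⟩ := ha
  refine ⟨hH.2.2.2 a ⟨a1, a2⟩, ?_⟩
  have := hCb a ⟨by nlinarith [pi_pos], by nlinarith [pi_pos]⟩
  exact (abs_le.1 this).2

lemma dH_bdry {H : ℝ → ℝ} {Cb : ℝ} (hH : IsCoupling H)
    (hCb : ∀ x ∈ Set.Icc (-π) π, |deriv H x| ≤ Cb) {x y : ℝ}
    (hx : x ∈ Set.Icc (-(π/16)) (π/4 + π/16)) (hy : y ∈ Set.Icc (-(π/16)) (π/4 + π/16)) :
    |deriv H ((π/2 - x) - y)| ≤ Cb := by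
  obtain ⟨a1, a2⟩ := hx; obtain ⟨b1, b2⟩ := hy
  exact hCb _ ⟨by nlinarith [pi_pos], by nlinarith [pi_pos]⟩

lemma term_coop {d q p Cb : ℝ} (hd0 : 0 ≤ d) (hdC : d ≤ Cb) (hq : q ≤ 0) (hp : p ≤ 0) :
    d * (q - p) ≤ 2*Cb*(-p) := by nlinarith

lemma term_self {d p Cb : ℝ} (hd : |d| ≤ Cb) (hp : p ≤ 0) : d * (-p - p) ≤ 2*Cb*(-p) := by
  obtain ⟨l, r⟩ := abs_le.1 hd
  nlinarith

lemma term_coop1 {d q m Cb : ℝ} (hd0 : 0 ≤ d) (hdC : d ≤ Cb) (hq : q ≤ m) (hm : 0 ≤ m)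
    (hCb0 : 0 ≤ Cb) : d * (q - m) ≤ 2*Cb*m := by nlinarith

lemma term_self1 {d m Cb : ℝ} (hd : |d| ≤ Cb) (hm : 0 ≤ m) : d * (-m - m) ≤ 2*Cb*m := by
  obtain ⟨l, r⟩ := abs_le.1 hd
  nlinarith

section rows

variable {H : ℝ → ℝ} {N : ℤ} {θ : ℝ → ℤ → ℤ → ℝ} {Cb : ℝ}

lemma rowbound2 (hH : IsCoupling H) (hCb0 : 0 ≤ Cb)
    (hCb : ∀ x ∈ Set.Icc (-π) π, |deriv H x| ≤ Cb)
    {i j : ℤ} (h1 : 1 ≤ j) (h2 : j < i) (h3 : i ≤ N) {t : ℝ} (hbox : inBox N θ t)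
    (hvle : ∀ a b : ℤ, 1 ≤ b → b < a → a ≤ N → vv H N θ t a b ≤ 0) :
    DV H N θ t i j ≤ (8*Cb) * (-(vv H N θ t i j)) := by
  have hbp := hbox i j h1 h2 h3
  have hp : vv H N θ t i j ≤ 0 := hvle i j h1 h2 h3
  have T1 : deriv H (latExt (θ t) (i-1) j - θ t i j) * (VV H N θ t (i-1) j - vv H N θ t i j)
      ≤ 2*Cb*(-(vv H N θ t i j)) := by
    by_cases hd : i - 1 = j
    · rw [latExt, if_pos hd, VV, if_pos hd]
      obtain ⟨d0, dC⟩ := dH_coop hH hCb (arg_diag_mem hbp)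
      exact term_coop d0.le dC le_rfl hp
    · have hS : 1 ≤ j ∧ j < i - 1 ∧ i - 1 ≤ N := by omega
      have hj0 : j ≠ 0 := by omega
      rw [latExt, if_neg hd, if_neg hj0, VV, if_neg hd, if_neg hj0]
      obtain ⟨d0, dC⟩ := dH_coop hH hCb (arg_coop_mem (hbox _ _ hS.1 hS.2.1 hS.2.2) hbp)
      exact term_coop d0.le dC (hvle _ _ hS.1 hS.2.1 hS.2.2) hp
  have T2 : deriv H (latExt (θ t) i (j+1) - θ t i j) * (VV H N θ t i (j+1) - vv H N θ t i j)
      ≤ 2*Cb*(-(vv H N θ t i j)) := by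
    by_cases hd : i = j + 1
    · rw [latExt, if_pos hd, VV, if_pos hd]
      obtain ⟨d0, dC⟩ := dH_coop hH hCb (arg_diag_mem hbp)
      exact term_coop d0.le dC le_rfl hp
    · have hS : 1 ≤ j + 1 ∧ j + 1 < i ∧ i ≤ N := by omega
      have hj0 : j + 1 ≠ 0 := by omega
      rw [latExt, if_neg hd, if_neg hj0, VV, if_neg hd, if_neg hj0]
      obtain ⟨d0, dC⟩ := dH_coop hH hCb (arg_coop_mem (hbox _ _ hS.1 hS.2.1 hS.2.2) hbp)
      exact term_coop d0.le dC (hvle _ _ hS.1 hS.2.1 hS.2.2) hp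
  have T3 : deriv H (latExt (θ t) i (j-1) - θ t i j) * (VV H N θ t i (j-1) - vv H N θ t i j)
      ≤ 2*Cb*(-(vv H N θ t i j)) := by
    have hd : i ≠ j - 1 := by omega
    by_cases hj : j = 1
    · subst hj
      have hd0' : i ≠ (0:ℤ) := by omega
      rw [show (1:ℤ) - 1 = 0 by norm_num, latExt, if_neg hd0', if_pos rfl,
        VV, if_neg hd0', if_pos rfl]
      exact term_self (dH_bdry hH hCb hbp hbp) hp
    · have hS : 1 ≤ j - 1 ∧ j - 1 < i ∧ i ≤ N := by omega
      have hj0 : j - 1 ≠ 0 := by omega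
      rw [latExt, if_neg hd, if_neg hj0, VV, if_neg hd, if_neg hj0]
      obtain ⟨d0, dC⟩ := dH_coop hH hCb (arg_coop_mem (hbox _ _ hS.1 hS.2.1 hS.2.2) hbp)
      exact term_coop d0.le dC (hvle _ _ hS.1 hS.2.1 hS.2.2) hp
  have T4 : (if i < N then deriv H (θ t (i+1) j - θ t i j) * (vv H N θ t (i+1) j - vv H N θ t i j)
      else 0) ≤ 2*Cb*(-(vv H N θ t i j)) := by
    by_cases hiN : i < N
    · rw [if_pos hiN]
      have hS : 1 ≤ j ∧ j < i + 1 ∧ i + 1 ≤ N := by omega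
      obtain ⟨d0, dC⟩ := dH_coop hH hCb (arg_coop_mem (hbox _ _ hS.1 hS.2.1 hS.2.2) hbp)
      exact term_coop d0.le dC (hvle _ _ hS.1 hS.2.1 hS.2.2) hp
    · rw [if_neg hiN]
      nlinarith
  rw [DV]
  linarith

end rows

section rows2

variable {H : ℝ → ℝ} {N : ℤ} {θ : ℝ → ℤ → ℤ → ℝ} {Cb : ℝ}

lemma rowbound1 (hH : IsCoupling H) (hCb0 : 0 ≤ Cb)
    (hCb : ∀ x ∈ Set.Icc (-π) π, |deriv H x| ≤ Cb)
    {i j : ℤ} (h1 : 1 ≤ j) (h2 : j < i) (h3 : i ≤ N) {t : ℝ} (hbox : inBox N θ t)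
    {m : ℝ} (hm : 0 ≤ m)
    (hvle : ∀ a b : ℤ, 1 ≤ b → b < a → a ≤ N → vv H N θ t a b ≤ m)
    (hpm : vv H N θ t i j = m) :
    DV H N θ t i j ≤ (8*Cb) * m := by
  have hbp := hbox i j h1 h2 h3
  have T1 : deriv H (latExt (θ t) (i-1) j - θ t i j) * (VV H N θ t (i-1) j - vv H N θ t i j)
      ≤ 2*Cb*m := by
    rw [hpm]
    by_cases hd : i - 1 = j
    · rw [latExt, if_pos hd, VV, if_pos hd]
      obtain ⟨d0, dC⟩ := dH_coop hH hCb (arg_diag_mem hbp)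
      exact term_coop1 d0.le dC hm hm hCb0
    · have hS : 1 ≤ j ∧ j < i - 1 ∧ i - 1 ≤ N := by omega
      have hj0 : j ≠ 0 := by omega
      rw [latExt, if_neg hd, if_neg hj0, VV, if_neg hd, if_neg hj0]
      obtain ⟨d0, dC⟩ := dH_coop hH hCb (arg_coop_mem (hbox _ _ hS.1 hS.2.1 hS.2.2) hbp)
      exact term_coop1 d0.le dC (hvle _ _ hS.1 hS.2.1 hS.2.2) hm hCb0
  have T2 : deriv H (latExt (θ t) i (j+1) - θ t i j) * (VV H N θ t i (j+1) - vv H N θ t i j)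
      ≤ 2*Cb*m := by
    rw [hpm]
    by_cases hd : i = j + 1
    · rw [latExt, if_pos hd, VV, if_pos hd]
      obtain ⟨d0, dC⟩ := dH_coop hH hCb (arg_diag_mem hbp)
      exact term_coop1 d0.le dC hm hm hCb0
    · have hS : 1 ≤ j + 1 ∧ j + 1 < i ∧ i ≤ N := by omega
      have hj0 : j + 1 ≠ 0 := by omega
      rw [latExt, if_neg hd, if_neg hj0, VV, if_neg hd, if_neg hj0]
      obtain ⟨d0, dC⟩ := dH_coop hH hCb (arg_coop_mem (hbox _ _ hS.1 hS.2.1 hS.2.2) hbp)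
      exact term_coop1 d0.le dC (hvle _ _ hS.1 hS.2.1 hS.2.2) hm hCb0
  have T3 : deriv H (latExt (θ t) i (j-1) - θ t i j) * (VV H N θ t i (j-1) - vv H N θ t i j)
      ≤ 2*Cb*m := by
    have hd : i ≠ j - 1 := by omega
    by_cases hj : j = 1
    · subst hj
      have hd0' : i ≠ (0:ℤ) := by omega
      rw [show (1:ℤ) - 1 = 0 by norm_num, latExt, if_neg hd0', if_pos rfl,
        VV, if_neg hd0', if_pos rfl, hpm]
      exact term_self1 (dH_bdry hH hCb hbp hbp) hm
    · have hS : 1 ≤ j - 1 ∧ j - 1 < i ∧ i ≤ N := by omega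
      have hj0 : j - 1 ≠ 0 := by omega
      rw [latExt, if_neg hd, if_neg hj0, VV, if_neg hd, if_neg hj0, hpm]
      obtain ⟨d0, dC⟩ := dH_coop hH hCb (arg_coop_mem (hbox _ _ hS.1 hS.2.1 hS.2.2) hbp)
      exact term_coop1 d0.le dC (hvle _ _ hS.1 hS.2.1 hS.2.2) hm hCb0
  have T4 : (if i < N then deriv H (θ t (i+1) j - θ t i j) * (vv H N θ t (i+1) j - vv H N θ t i j)
      else 0) ≤ 2*Cb*m := by
    by_cases hiN : i < N
    · rw [if_pos hiN, hpm]
      have hS : 1 ≤ j ∧ j < i + 1 ∧ i + 1 ≤ N := by omega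
      obtain ⟨d0, dC⟩ := dH_coop hH hCb (arg_coop_mem (hbox _ _ hS.1 hS.2.1 hS.2.2) hbp)
      exact term_coop1 d0.le dC (hvle _ _ hS.1 hS.2.1 hS.2.2) hm hCb0
    · rw [if_neg hiN]
      nlinarith
  rw [DV]
  linarith

lemma rowbound3 (hH : IsCoupling H) (hCb0 : 0 ≤ Cb)
    (hCb : ∀ x ∈ Set.Icc (-π) π, |deriv H x| ≤ Cb)
    {i j : ℤ} (h1 : 1 ≤ j) (h2 : j + 1 < i) (h3 : i ≤ N) {t : ℝ} (hbox : inBox N θ t)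
    (hvle : ∀ a b : ℤ, 1 ≤ b → b < a → a ≤ N → vv H N θ t a b ≤ 0) :
    DV H N θ t i j ≤ (8*Cb) * (-(vv H N θ t i j))
      + deriv H (θ t i (j+1) - θ t i j) * vv H N θ t i (j+1) := by
  have h2' : j < i := by omega
  have hbp := hbox i j h1 h2' h3
  have hp : vv H N θ t i j ≤ 0 := hvle i j h1 h2' h3
  have T1 : deriv H (latExt (θ t) (i-1) j - θ t i j) * (VV H N θ t (i-1) j - vv H N θ t i j)
      ≤ 2*Cb*(-(vv H N θ t i j)) := by
    by_cases hd : i - 1 = j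
    · rw [latExt, if_pos hd, VV, if_pos hd]
      obtain ⟨d0, dC⟩ := dH_coop hH hCb (arg_diag_mem hbp)
      exact term_coop d0.le dC le_rfl hp
    · have hS : 1 ≤ j ∧ j < i - 1 ∧ i - 1 ≤ N := by omega
      have hj0 : j ≠ 0 := by omega
      rw [latExt, if_neg hd, if_neg hj0, VV, if_neg hd, if_neg hj0]
      obtain ⟨d0, dC⟩ := dH_coop hH hCb (arg_coop_mem (hbox _ _ hS.1 hS.2.1 hS.2.2) hbp)
      exact term_coop d0.le dC (hvle _ _ hS.1 hS.2.1 hS.2.2) hp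
  have T2 : deriv H (latExt (θ t) i (j+1) - θ t i j) * (VV H N θ t i (j+1) - vv H N θ t i j)
      ≤ 2*Cb*(-(vv H N θ t i j)) + deriv H (θ t i (j+1) - θ t i j) * vv H N θ t i (j+1) := by
    have hd : i ≠ j + 1 := by omega
    have hS : 1 ≤ j + 1 ∧ j + 1 < i ∧ i ≤ N := by omega
    have hj0 : j + 1 ≠ 0 := by omega
    rw [latExt, if_neg hd, if_neg hj0, VV, if_neg hd, if_neg hj0]
    obtain ⟨d0, dC⟩ := dH_coop hH hCb (arg_coop_mem (hbox _ _ hS.1 hS.2.1 hS.2.2) hbp)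
    nlinarith
  have T3 : deriv H (latExt (θ t) i (j-1) - θ t i j) * (VV H N θ t i (j-1) - vv H N θ t i j)
      ≤ 2*Cb*(-(vv H N θ t i j)) := by
    have hd : i ≠ j - 1 := by omega
    by_cases hj : j = 1
    · subst hj
      have hd0' : i ≠ (0:ℤ) := by omega
      rw [show (1:ℤ) - 1 = 0 by norm_num, latExt, if_neg hd0', if_pos rfl,
        VV, if_neg hd0', if_pos rfl]
      exact term_self (dH_bdry hH hCb hbp hbp) hp
    · have hS : 1 ≤ j - 1 ∧ j - 1 < i ∧ i ≤ N := by omega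
      have hj0 : j - 1 ≠ 0 := by omega
      rw [latExt, if_neg hd, if_neg hj0, VV, if_neg hd, if_neg hj0]
      obtain ⟨d0, dC⟩ := dH_coop hH hCb (arg_coop_mem (hbox _ _ hS.1 hS.2.1 hS.2.2) hbp)
      exact term_coop d0.le dC (hvle _ _ hS.1 hS.2.1 hS.2.2) hp
  have T4 : (if i < N then deriv H (θ t (i+1) j - θ t i j) * (vv H N θ t (i+1) j - vv H N θ t i j)
      else 0) ≤ 2*Cb*(-(vv H N θ t i j)) := by
    by_cases hiN : i < N
    · rw [if_pos hiN]
      have hS : 1 ≤ j ∧ j < i + 1 ∧ i + 1 ≤ N := by omega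
      obtain ⟨d0, dC⟩ := dH_coop hH hCb (arg_coop_mem (hbox _ _ hS.1 hS.2.1 hS.2.2) hbp)
      exact term_coop d0.le dC (hvle _ _ hS.1 hS.2.1 hS.2.2) hp
    · rw [if_neg hiN]
      nlinarith
  rw [DV]
  linarith

lemma dH_pos_between (hH : IsCoupling H) {x y : ℝ}
    (hx : x ∈ Set.Icc (-(π/16)) (π/4 + π/16)) (hy : y ∈ Set.Icc (-(π/16)) (π/4 + π/16)) :
    0 < deriv H (x - y) :=
  hH.2.2.2 _ (arg_coop_mem hx hy)

end rows2

section init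

variable {H : ℝ → ℝ} {N : ℤ} {θ : ℝ → ℤ → ℤ → ℝ}

lemma vv_init (hH : IsCoupling H)
    (hinit : ∀ i j : ℤ, 1 ≤ j → j < i → i ≤ N → θ 0 i j = π / 4)
    {i j : ℤ} (h1 : 1 ≤ j) (h2 : j < i) (h3 : i ≤ N) :
    vv H N θ 0 i j = if i - 1 = j then 2 * H (-(π/4)) else 0 := by
  have e0 : θ 0 i j = π / 4 := hinit i j h1 h2 h3
  have L1 : latExt (θ 0) (i-1) j = if i - 1 = j then 0 else π/4 := by
    by_cases hd : i - 1 = j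
    · rw [latExt, if_pos hd, if_pos hd]
    · rw [latExt, if_neg hd, if_neg (show j ≠ 0 by omega),
        hinit (i-1) j h1 (by omega) (by omega), if_neg hd]
  have L2 : latExt (θ 0) i (j+1) = if i - 1 = j then 0 else π/4 := by
    by_cases hd : i - 1 = j
    · rw [latExt, if_pos (show i = j + 1 by omega), if_pos hd]
    · rw [latExt, if_neg (show i ≠ j + 1 by omega), if_neg (show j + 1 ≠ 0 by omega),
        hinit i (j+1) (by omega) (by omega) h3, if_neg hd]
  have L3 : latExt (θ 0) i (j-1) = π/4 := by
    by_cases hj : j = 1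
    · subst hj
      rw [show (1:ℤ) - 1 = 0 by norm_num, latExt, if_neg (show i ≠ 0 by omega), if_pos rfl,
        hinit i 1 le_rfl h2 h3]
      ring
    · rw [latExt, if_neg (show i ≠ j - 1 by omega), if_neg (show j - 1 ≠ 0 by omega),
        hinit i (j-1) (by omega) (by omega) h3]
  have L4 : (if i < N then H (θ 0 (i+1) j - θ 0 i j) else 0) = 0 := by
    by_cases hiN : i < N
    · rw [if_pos hiN, hinit (i+1) j h1 (by omega) (by omega), e0, sub_self, coupling_zero hH]
    · rw [if_neg hiN]
  rw [vv, reducedRHS, L1, L2, L3, L4, e0]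
  by_cases hd : i - 1 = j
  · rw [if_pos hd]
    rw [if_pos hd,
      show (0:ℝ) - π/4 = -(π/4) by ring, show π/4 - π/4 = (0:ℝ) by ring, coupling_zero hH]
    ring
  · rw [if_neg hd]
    rw [if_neg hd, show π/4 - π/4 = (0:ℝ) by ring, coupling_zero hH]
    ring

lemma vv_init_le (hH : IsCoupling H)
    (hinit : ∀ i j : ℤ, 1 ≤ j → j < i → i ≤ N → θ 0 i j = π / 4)
    {i j : ℤ} (h1 : 1 ≤ j) (h2 : j < i) (h3 : i ≤ N) :
    vv H N θ 0 i j ≤ 0 := by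
  rw [vv_init hH hinit h1 h2 h3]
  by_cases hd : i - 1 = j
  · rw [if_pos hd]
    have := coupling_neg_quarter hH
    linarith
  · rw [if_neg hd]

lemma vv_init_diag (hH : IsCoupling H)
    (hinit : ∀ i j : ℤ, 1 ≤ j → j < i → i ≤ N → θ 0 i j = π / 4)
    {i j : ℤ} (h1 : 1 ≤ j) (h2 : j < i) (h3 : i ≤ N) (hd : i - 1 = j) :
    vv H N θ 0 i j < 0 := by
  rw [vv_init hH hinit h1 h2 h3, if_pos hd]
  have := coupling_neg_quarter hH
  linarith

noncomputable def Sfin (N : ℤ) : Finset (ℤ × ℤ) :=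
  (Finset.Icc ((1:ℤ),(1:ℤ)) (N,N)).filter (fun p => p.2 < p.1)

lemma mem_Sfin {N i j : ℤ} : (i,j) ∈ Sfin N ↔ 1 ≤ j ∧ j < i ∧ i ≤ N := by
  simp only [Sfin, Finset.mem_filter, Finset.mem_Icc, Prod.mk_le_mk]
  omega

section cont

variable {H : ℝ → ℝ} {N : ℤ} {θ : ℝ → ℤ → ℤ → ℝ}

lemma theta_cont
    (hode : ∀ i j : ℤ, 1 ≤ j → j < i → i ≤ N → ∀ t : ℝ,
      HasDerivAt (fun s => θ s i j) (vv H N θ t i j) t)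
    {i j : ℤ} (h1 : 1 ≤ j) (h2 : j < i) (h3 : i ≤ N) :
    Continuous (fun t => θ t i j) :=
  continuous_iff_continuousAt.2 fun t => (hode i j h1 h2 h3 t).continuousAt

lemma vv_cont (hH : IsCoupling H)
    (hode : ∀ i j : ℤ, 1 ≤ j → j < i → i ≤ N → ∀ t : ℝ,
      HasDerivAt (fun s => θ s i j) (vv H N θ t i j) t)
    {i j : ℤ} (h1 : 1 ≤ j) (h2 : j < i) (h3 : i ≤ N) :
    Continuous (fun t => vv H N θ t i j) :=
  continuous_iff_continuousAt.2 fun t => (hasDerivAt_vv hH hode i j h1 h2 h3 t).continuousAt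

lemma core_vle (hH : IsCoupling H)
    (hode : ∀ i j : ℤ, 1 ≤ j → j < i → i ≤ N → ∀ t : ℝ,
      HasDerivAt (fun s => θ s i j) (vv H N θ t i j) t)
    (hinit : ∀ i j : ℤ, 1 ≤ j → j < i → i ≤ N → θ 0 i j = π / 4)
    {Cb : ℝ} (hCb0 : 0 ≤ Cb) (hCb : ∀ x ∈ Set.Icc (-π) π, |deriv H x| ≤ Cb)
    {T : ℝ} (hT : 0 < T) (hbox : ∀ s ∈ Set.Icc (0:ℝ) T, inBox N θ s) :
    ∀ t ∈ Set.Icc (0:ℝ) T, ∀ i j : ℤ, 1 ≤ j → j < i → i ≤ N → vv H N θ t i j ≤ 0 := by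
  set C := 8*Cb + 1 with hCdef
  have hC1 : 1 ≤ C := by simp only [hCdef]; linarith
  have claim : ∀ ε, 0 < ε → ∀ t ∈ Set.Icc (0:ℝ) T, ∀ i j : ℤ, 1 ≤ j → j < i → i ≤ N →
      vv H N θ t i j < ε * Real.exp (2*C*t) := by
    intro ε hε
    by_contra hcon
    push_neg at hcon
    obtain ⟨t1, ht1, i1, j1, hj1, hji1, hiN1, hbad⟩ := hcon
    set Bad := {s : ℝ | s ∈ Set.Icc (0:ℝ) T ∧
      ∃ p ∈ Sfin N, ε * Real.exp (2*C*s) ≤ vv H N θ s p.1 p.2} with hBadDef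
    have hBadne : Bad.Nonempty := ⟨t1, ht1, ⟨(i1,j1), mem_Sfin.2 ⟨hj1,hji1,hiN1⟩, hbad⟩⟩
    have hexpc : Continuous (fun s : ℝ => ε * Real.exp (2*C*s)) :=
      continuous_const.mul (Real.continuous_exp.comp (continuous_const.mul continuous_id))
    have hBadclosed : IsClosed Bad := by
      have hrw : Bad = Set.Icc (0:ℝ) T ∩
          ⋃ p ∈ (Sfin N : Set (ℤ×ℤ)), {s | ε * Real.exp (2*C*s) ≤ vv H N θ s p.1 p.2} := by
        ext s
        simp only [hBadDef, Set.mem_setOf_eq, Set.mem_inter_iff, Set.mem_iUnion,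
          Finset.mem_coe, exists_prop]
      rw [hrw]
      refine isClosed_Icc.inter ?_
      refine (Sfin N).finite_toSet.isClosed_biUnion (fun p hp => ?_)
      obtain ⟨a, b⟩ := p
      obtain ⟨m1, m2, m3⟩ := mem_Sfin.1 (by simpa using hp)
      exact isClosed_le hexpc (vv_cont hH hode m1 m2 m3)
    have hBadbdd : BddBelow Bad := ⟨0, fun x hx => hx.1.1⟩
    set τ := sInf Bad with hτdef
    have hτmem := hBadclosed.csInf_mem hBadne hBadbdd
    obtain ⟨hτIcc, p, hpS, hpge⟩ := hτmem
    obtain ⟨a, b⟩ := p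
    obtain ⟨m1, m2, m3⟩ := mem_Sfin.1 hpS
    have hτpos : 0 < τ := by
      rcases eq_or_lt_of_le hτIcc.1 with h | h
      · exfalso
        rw [← h] at hpge
        simp only [mul_zero, Real.exp_zero, mul_one] at hpge
        have h0 : vv H N θ 0 a b ≤ 0 := vv_init_le hH hinit m1 m2 m3
        have h0' : vv H N θ 0 (a,b).1 (a,b).2 ≤ 0 := h0
        linarith
      · exact h
    have hbefore : ∀ s ∈ Set.Ico (0:ℝ) τ, ∀ a' b' : ℤ, 1 ≤ b' → b' < a' → a' ≤ N →
        vv H N θ s a' b' < ε * Real.exp (2*C*s) := by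
      intro s hs a' b' n1 n2 n3
      have hsnot : s ∉ Bad := fun hmem => absurd (csInf_le hBadbdd hmem) (not_le.2 hs.2)
      have hsIcc : s ∈ Set.Icc (0:ℝ) T := ⟨hs.1, le_trans hs.2.le hτIcc.2⟩
      by_contra hge
      push_neg at hge
      exact hsnot ⟨hsIcc, ⟨(a',b'), mem_Sfin.2 ⟨n1,n2,n3⟩, hge⟩⟩
    have hleτ : ∀ a' b' : ℤ, 1 ≤ b' → b' < a' → a' ≤ N →
        vv H N θ τ a' b' ≤ ε * Real.exp (2*C*τ) := by
      intro a' b' n1 n2 n3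
      have h5 := left_lim_le (f := fun s => vv H N θ s a' b' - ε * Real.exp (2*C*s)) (c := 0)
        hτpos ((vv_cont hH hode n1 n2 n3).sub hexpc)
        (fun s hs => by
          show vv H N θ s a' b' - ε * Real.exp (2*C*s) ≤ 0
          linarith [hbefore s hs a' b' n1 n2 n3])
      have h6 : vv H N θ τ a' b' - ε * Real.exp (2*C*τ) ≤ 0 := h5
      linarith
    have hpeq : vv H N θ τ a b = ε * Real.exp (2*C*τ) :=
      le_antisymm (hleτ a b m1 m2 m3) hpge
    have hφd : HasDerivAt (fun s => vv H N θ s a b - ε * Real.exp (2*C*s))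
        (DV H N θ τ a b - ε * (Real.exp (2*C*τ) * (2*C*1))) τ :=
      (hasDerivAt_vv hH hode a b m1 m2 m3 τ).sub
        ((((hasDerivAt_id τ).const_mul (2*C)).exp).const_mul ε)
    have hder0 : 0 ≤ DV H N θ τ a b - ε * (Real.exp (2*C*τ) * (2*C*1)) := by
      refine deriv_nonneg_of_left_neg hφd hτpos (fun r hr => ?_) (by simp [hpeq])
      show vv H N θ r a b - ε * Real.exp (2*C*r) < 0
      have := hbefore r hr a b m1 m2 m3
      linarith
    have hm : 0 < ε * Real.exp (2*C*τ) := mul_pos hε (Real.exp_pos _)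
    have hrow := rowbound1 hH hCb0 hCb m1 m2 m3 (hbox τ hτIcc) hm.le
      (fun a' b' n1 n2 n3 => hleτ a' b' n1 n2 n3) hpeq
    simp only [hCdef] at hrow hder0 ⊢
    nlinarith [Real.exp_pos (2*(8*Cb+1)*τ)]
  intro t ht i j h1 h2 h3
  by_contra hpos
  push_neg at hpos
  have hεpos : 0 < vv H N θ t i j / (2 * Real.exp (2*C*t)) :=
    div_pos hpos (by positivity)
  have hcl := claim _ hεpos t ht i j h1 h2 h3
  have hexp : (0:ℝ) < Real.exp (2*C*t) := Real.exp_pos _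
  have heq : (vv H N θ t i j / (2 * Real.exp (2*C*t))) * Real.exp (2*C*t)
      = vv H N θ t i j / 2 := by
    field_simp
  rw [heq] at hcl
  linarith

end cont

section vneg

variable {H : ℝ → ℝ} {N : ℤ} {θ : ℝ → ℤ → ℤ → ℝ}

lemma core_vneg (hH : IsCoupling H)
    (hode : ∀ i j : ℤ, 1 ≤ j → j < i → i ≤ N → ∀ t : ℝ,
      HasDerivAt (fun s => θ s i j) (vv H N θ t i j) t)
    (hinit : ∀ i j : ℤ, 1 ≤ j → j < i → i ≤ N → θ 0 i j = π / 4)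
    {Cb : ℝ} (hCb0 : 0 ≤ Cb) (hCb : ∀ x ∈ Set.Icc (-π) π, |deriv H x| ≤ Cb)
    {T : ℝ} (hT : 0 < T) (hbox : ∀ s ∈ Set.Icc (0:ℝ) T, inBox N θ s) :
    ∀ t ∈ Set.Ioc (0:ℝ) T, ∀ i j : ℤ, 1 ≤ j → j < i → i ≤ N → vv H N θ t i j < 0 := by
  have hvle := core_vle hH hode hinit hCb0 hCb hT hbox
  set C := 8*Cb + 1 with hCdef
  have hC1 : 1 ≤ C := by simp only [hCdef]; linarith
  -- persistence of strict negativity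
  have pers : ∀ i j : ℤ, 1 ≤ j → j < i → i ≤ N → ∀ s t : ℝ, 0 ≤ s → s ≤ t → t ≤ T →
      vv H N θ s i j < 0 → vv H N θ t i j < 0 := by
    intro i j h1 h2 h3 s t hs hst htT hneg
    refine persistence_core (C := C) (v := fun r => vv H N θ r i j)
      (dv := fun r => DV H N θ r i j) (a := s) (b := t) hst
      (fun r _ => hasDerivAt_vv hH hode i j h1 h2 h3 r) (fun r hr => ?_) hneg
    have hrIcc : r ∈ Set.Icc (0:ℝ) T := ⟨le_trans hs hr.1, le_trans hr.2 htT⟩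
    have hrow := rowbound2 hH hCb0 hCb h1 h2 h3 (hbox r hrIcc)
      (fun a b n1 n2 n3 => hvle r hrIcc a b n1 n2 n3)
    have hp := hvle r hrIcc i j h1 h2 h3
    simp only [hCdef]
    nlinarith
  -- induction on distance to the subdiagonal
  have main : ∀ k : ℕ, ∀ i j : ℤ, 1 ≤ j → j < i → i ≤ N → i - 1 - j = (k:ℤ) →
      ∀ t ∈ Set.Ioc (0:ℝ) T, vv H N θ t i j < 0 := by
    intro k
    induction k with
    | zero =>
      intro i j h1 h2 h3 hk t ht
      exact pers i j h1 h2 h3 0 t le_rfl ht.1.le ht.2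
        (vv_init_diag hH hinit h1 h2 h3 (by omega))
    | succ k ih =>
      intro i j h1 h2 h3 hk t ht
      have hq : 1 ≤ j + 1 ∧ j + 1 < i ∧ i ≤ N := by omega
      have ihq : ∀ s ∈ Set.Ioc (0:ℝ) T, vv H N θ s i (j+1) < 0 :=
        fun s hs => ih i (j+1) hq.1 hq.2.1 hq.2.2 (by omega) s hs
      have ht2 : 0 < t/2 := by linarith [ht.1]
      have hsub : Set.Icc (t/2) t ⊆ Set.Icc (0:ℝ) T :=
        fun r hr => ⟨le_trans ht2.le hr.1, le_trans hr.2 ht.2⟩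
      have hsub2 : Set.Icc (t/2) t ⊆ Set.Ioc (0:ℝ) T :=
        fun r hr => ⟨lt_of_lt_of_le ht2 hr.1, le_trans hr.2 ht.2⟩
      refine propagation_core (C := C) (v := fun r => vv H N θ r i j)
        (dv := fun r => DV H N θ r i j) (a := t/2) (b := t)
        (w := fun r => deriv H (θ r i (j+1) - θ r i j) * (-(vv H N θ r i (j+1))))
        (by linarith [ht.1] : t/2 < t)
        (fun r _ => hasDerivAt_vv hH hode i j h1 h2 h3 r) (fun r hr => ?_) ?_ (fun r hr => ?_) ?_
      · -- derivative bound
        have hrIcc := hsub hr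
        have hrow := rowbound3 hH hCb0 hCb h1 hq.2.1 h3 (hbox r hrIcc)
          (fun a b n1 n2 n3 => hvle r hrIcc a b n1 n2 n3)
        have hp := hvle r hrIcc i j h1 h2 h3
        simp only [hCdef]
        nlinarith
      · -- continuity of w
        refine Continuous.continuousOn ?_
        exact ((hH.1.continuous_deriv (by simp)).comp
          ((theta_cont hode hq.1 hq.2.1 hq.2.2).sub (theta_cont hode h1 h2 h3))).mul
          ((vv_cont hH hode hq.1 hq.2.1 hq.2.2).neg)
      · -- positivity of w
        have hrIcc := hsub hr
        have hbr := hbox r hrIcc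
        have hd := dH_pos_between hH (hbr i (j+1) hq.1 hq.2.1 hq.2.2) (hbr i j h1 h2 h3)
        have hv := ihq r (hsub2 hr)
        exact mul_pos hd (by linarith)
      · -- v (t/2) ≤ 0
        exact hvle (t/2) (hsub (Set.left_mem_Icc.2 (by linarith [ht.1]))) i j h1 h2 h3
  intro t ht i j h1 h2 h3
  exact main (i - 1 - j).toNat i j h1 h2 h3 (by omega) t ht

end vneg

section post

variable {H : ℝ → ℝ} {N : ℤ} {θ : ℝ → ℤ → ℤ → ℝ}

lemma core_anti (hH : IsCoupling H)
    (hode : ∀ i j : ℤ, 1 ≤ j → j < i → i ≤ N → ∀ t : ℝ,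
      HasDerivAt (fun s => θ s i j) (vv H N θ t i j) t)
    (hinit : ∀ i j : ℤ, 1 ≤ j → j < i → i ≤ N → θ 0 i j = π / 4)
    {Cb : ℝ} (hCb0 : 0 ≤ Cb) (hCb : ∀ x ∈ Set.Icc (-π) π, |deriv H x| ≤ Cb)
    {T : ℝ} (hT : 0 < T) (hbox : ∀ s ∈ Set.Icc (0:ℝ) T, inBox N θ s)
    {i j : ℤ} (h1 : 1 ≤ j) (h2 : j < i) (h3 : i ≤ N) :
    AntitoneOn (fun t => θ t i j) (Set.Icc (0:ℝ) T) := by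
  have hvle := core_vle hH hode hinit hCb0 hCb hT hbox
  exact antitoneOn_Icc_of_hasDerivAt (f' := fun t => vv H N θ t i j)
    (fun r _ => hode i j h1 h2 h3 r) (fun r hr => hvle r hr i j h1 h2 h3)

lemma core_ub_strict (hH : IsCoupling H)
    (hode : ∀ i j : ℤ, 1 ≤ j → j < i → i ≤ N → ∀ t : ℝ,
      HasDerivAt (fun s => θ s i j) (vv H N θ t i j) t)
    (hinit : ∀ i j : ℤ, 1 ≤ j → j < i → i ≤ N → θ 0 i j = π / 4)
    {Cb : ℝ} (hCb0 : 0 ≤ Cb) (hCb : ∀ x ∈ Set.Icc (-π) π, |deriv H x| ≤ Cb)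
    {T : ℝ} (hT : 0 < T) (hbox : ∀ s ∈ Set.Icc (0:ℝ) T, inBox N θ s) :
    ∀ t ∈ Set.Ioc (0:ℝ) T, ∀ i j : ℤ, 1 ≤ j → j < i → i ≤ N → θ t i j < π/4 := by
  intro t ht i j h1 h2 h3
  have hvneg := core_vneg hH hode hinit hCb0 hCb hT hbox
  have hsa : StrictAntiOn (fun s => θ s i j) (Set.Icc (0:ℝ) t) := by
    apply strictAntiOn_of_deriv_neg (convex_Icc _ _)
      ((theta_cont hode h1 h2 h3).continuousOn)
    intro x hx
    rw [interior_Icc] at hx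
    rw [(hode i j h1 h2 h3 x).deriv]
    exact hvneg x ⟨hx.1, le_trans hx.2.le ht.2⟩ i j h1 h2 h3
  have h7 : θ t i j < θ 0 i j :=
    hsa (Set.left_mem_Icc.2 ht.1.le) (Set.right_mem_Icc.2 ht.1.le) ht.1
  rwa [hinit i j h1 h2 h3] at h7

lemma core_pos (hH : IsCoupling H)
    (hode : ∀ i j : ℤ, 1 ≤ j → j < i → i ≤ N → ∀ t : ℝ,
      HasDerivAt (fun s => θ s i j) (vv H N θ t i j) t)
    (hinit : ∀ i j : ℤ, 1 ≤ j → j < i → i ≤ N → θ 0 i j = π / 4)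
    {Cb : ℝ} (hCb0 : 0 ≤ Cb) (hCb : ∀ x ∈ Set.Icc (-π) π, |deriv H x| ≤ Cb)
    {T : ℝ} (hT : 0 < T) (hbox : ∀ s ∈ Set.Icc (0:ℝ) T, inBox N θ s) :
    ∀ t ∈ Set.Icc (0:ℝ) T, ∀ i j : ℤ, 1 ≤ j → j < i → i ≤ N → 0 < θ t i j := by
  have hvneg := core_vneg hH hode hinit hCb0 hCb hT hbox
  by_contra hcon
  push_neg at hcon
  obtain ⟨t1, ht1, i1, j1, h11, h21, h31, hle1⟩ := hcon
  set Z := {s : ℝ | s ∈ Set.Icc (0:ℝ) T ∧ ∃ p ∈ Sfin N, θ s p.1 p.2 ≤ 0} with hZdef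
  have hZne : Z.Nonempty := ⟨t1, ht1, ⟨(i1,j1), mem_Sfin.2 ⟨h11,h21,h31⟩, hle1⟩⟩
  have hZclosed : IsClosed Z := by
    have hrw : Z = Set.Icc (0:ℝ) T ∩
        ⋃ p ∈ (Sfin N : Set (ℤ×ℤ)), {s | θ s p.1 p.2 ≤ 0} := by
      ext s
      simp only [hZdef, Set.mem_setOf_eq, Set.mem_inter_iff, Set.mem_iUnion,
        Finset.mem_coe, exists_prop]
    rw [hrw]
    refine isClosed_Icc.inter ?_
    refine (Sfin N).finite_toSet.isClosed_biUnion (fun p hp => ?_)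
    obtain ⟨a, b⟩ := p
    obtain ⟨m1, m2, m3⟩ := mem_Sfin.1 (by simpa using hp)
    exact isClosed_le (theta_cont hode m1 m2 m3) continuous_const
  have hZbdd : BddBelow Z := ⟨0, fun x hx => hx.1.1⟩
  set t0 := sInf Z with ht0def
  have ht0mem := hZclosed.csInf_mem hZne hZbdd
  obtain ⟨ht0Icc, p, hpS, hp0⟩ := ht0mem
  obtain ⟨a, b⟩ := p
  obtain ⟨m1, m2, m3⟩ := mem_Sfin.1 hpS
  have hp0' : θ t0 a b ≤ 0 := hp0
  have ht0pos : 0 < t0 := by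
    rcases eq_or_lt_of_le ht0Icc.1 with h | h
    · exfalso
      rw [ht0def, ← h] at hp0'
      rw [hinit a b m1 m2 m3] at hp0'
      linarith [pi_pos]
    · exact h
  have hbefore : ∀ s ∈ Set.Ico (0:ℝ) t0, ∀ a' b' : ℤ, 1 ≤ b' → b' < a' → a' ≤ N →
      0 < θ s a' b' := by
    intro s hs a' b' n1 n2 n3
    have hsnot : s ∉ Z := fun hmem => absurd (csInf_le hZbdd hmem) (not_le.2 hs.2)
    have hsIcc : s ∈ Set.Icc (0:ℝ) T := ⟨hs.1, le_trans hs.2.le ht0Icc.2⟩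
    by_contra hge
    push_neg at hge
    exact hsnot ⟨hsIcc, ⟨(a',b'), mem_Sfin.2 ⟨n1,n2,n3⟩, hge⟩⟩
  have hge0 : ∀ a' b' : ℤ, 1 ≤ b' → b' < a' → a' ≤ N → 0 ≤ θ t0 a' b' := by
    intro a' b' n1 n2 n3
    exact left_lim_ge ht0pos (theta_cont hode n1 n2 n3)
      (fun s hs => (hbefore s hs a' b' n1 n2 n3).le)
  have hub : ∀ a' b' : ℤ, 1 ≤ b' → b' < a' → a' ≤ N → θ t0 a' b' ≤ π/4 := by
    intro a' b' n1 n2 n3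
    have ha : θ t0 a' b' ≤ θ 0 a' b' := core_anti hH hode hinit hCb0 hCb hT hbox n1 n2 n3
      (Set.left_mem_Icc.2 (le_trans ht0Icc.1 ht0Icc.2)) ht0Icc ht0Icc.1
    rwa [hinit a' b' n1 n2 n3] at ha
  have hab0 : θ t0 a b = 0 := le_antisymm hp0' (hge0 a b m1 m2 m3)
  have hπ := pi_pos
  have T1 : 0 ≤ H (latExt (θ t0) (a-1) b - θ t0 a b) := by
    rw [hab0, sub_zero]
    by_cases hd : a - 1 = b
    · rw [latExt, if_pos hd, coupling_zero hH]
    · have hS : 1 ≤ b ∧ b < a - 1 ∧ a - 1 ≤ N := by omega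
      rw [latExt, if_neg hd, if_neg (show b ≠ 0 by omega)]
      exact coupling_nonneg hH (hge0 _ _ hS.1 hS.2.1 hS.2.2)
        (by linarith [hub _ _ hS.1 hS.2.1 hS.2.2])
  have T2 : 0 ≤ H (latExt (θ t0) a (b+1) - θ t0 a b) := by
    rw [hab0, sub_zero]
    by_cases hd : a = b + 1
    · rw [latExt, if_pos hd, coupling_zero hH]
    · have hS : 1 ≤ b + 1 ∧ b + 1 < a ∧ a ≤ N := by omega
      rw [latExt, if_neg hd, if_neg (show b + 1 ≠ 0 by omega)]
      exact coupling_nonneg hH (hge0 _ _ hS.1 hS.2.1 hS.2.2)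
        (by linarith [hub _ _ hS.1 hS.2.1 hS.2.2])
  have T3 : 0 ≤ H (latExt (θ t0) a (b-1) - θ t0 a b) := by
    rw [hab0, sub_zero]
    by_cases hj : b = 1
    · subst hj
      rw [show (1:ℤ) - 1 = 0 by norm_num, latExt, if_neg (show a ≠ 0 by omega), if_pos rfl]
      have : θ t0 a 1 = 0 := hab0
      rw [this, sub_zero]
      exact coupling_nonneg hH (by linarith) le_rfl
    · have hS : 1 ≤ b - 1 ∧ b - 1 < a ∧ a ≤ N := by omega
      rw [latExt, if_neg (show a ≠ b - 1 by omega), if_neg (show b - 1 ≠ 0 by omega)]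
      exact coupling_nonneg hH (hge0 _ _ hS.1 hS.2.1 hS.2.2)
        (by linarith [hub _ _ hS.1 hS.2.1 hS.2.2])
  have T4 : 0 ≤ (if a < N then H (θ t0 (a+1) b - θ t0 a b) else 0) := by
    by_cases hiN : a < N
    · rw [if_pos hiN, hab0, sub_zero]
      have hS : 1 ≤ b ∧ b < a + 1 ∧ a + 1 ≤ N := by omega
      exact coupling_nonneg hH (hge0 _ _ hS.1 hS.2.1 hS.2.2)
        (by linarith [hub _ _ hS.1 hS.2.1 hS.2.2])
    · rw [if_neg hiN]
  have hvge : 0 ≤ vv H N θ t0 a b := by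
    rw [vv, reducedRHS]
    linarith
  have hneg := hvneg t0 ⟨ht0pos, ht0Icc.2⟩ a b m1 m2 m3
  linarith

end post

section boot

variable {H : ℝ → ℝ} {N : ℤ} {θ : ℝ → ℤ → ℤ → ℝ}

lemma box_all (hH : IsCoupling H)
    (hode : ∀ i j : ℤ, 1 ≤ j → j < i → i ≤ N → ∀ t : ℝ,
      HasDerivAt (fun s => θ s i j) (vv H N θ t i j) t)
    (hinit : ∀ i j : ℤ, 1 ≤ j → j < i → i ≤ N → θ 0 i j = π / 4)
    {Cb : ℝ} (hCb0 : 0 ≤ Cb) (hCb : ∀ x ∈ Set.Icc (-π) π, |deriv H x| ≤ Cb) :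
    ∀ t : ℝ, 0 ≤ t → inBox N θ t := by
  have hπ := pi_pos
  -- an open-condition neighborhood extender
  have hopen : ∀ τ : ℝ, (∀ i j : ℤ, 1 ≤ j → j < i → i ≤ N →
      θ τ i j ∈ Set.Ioo (-(π/16)) (π/4 + π/16)) →
      ∃ ε > 0, ∀ s : ℝ, |s - τ| < ε → inBox N θ s := by
    intro τ hτ
    set U := ⋂ p ∈ (Sfin N : Set (ℤ×ℤ)),
      (fun s => θ s p.1 p.2) ⁻¹' (Set.Ioo (-(π/16)) (π/4 + π/16)) with hUdef
    have hUopen : IsOpen U := by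
      refine (Sfin N).finite_toSet.isOpen_biInter (fun p hp => ?_)
      obtain ⟨a, b⟩ := p
      obtain ⟨m1, m2, m3⟩ := mem_Sfin.1 (by simpa using hp)
      exact (theta_cont hode m1 m2 m3).isOpen_preimage _ isOpen_Ioo
    have hτU : τ ∈ U := by
      rw [hUdef]
      refine Set.mem_iInter₂.2 (fun p hp => ?_)
      obtain ⟨a, b⟩ := p
      obtain ⟨m1, m2, m3⟩ := mem_Sfin.1 (by simpa using hp)
      exact hτ a b m1 m2 m3
    obtain ⟨ε, hε, hball⟩ := Metric.mem_nhds_iff.1 (hUopen.mem_nhds hτU)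
    refine ⟨ε, hε, fun s hs => ?_⟩
    have hsU : s ∈ U := hball (by simpa [Real.dist_eq] using hs)
    intro i j h1 h2 h3
    have := Set.mem_iInter₂.1 hsU (i,j) (by simp [mem_Sfin.2 ⟨h1,h2,h3⟩])
    exact ⟨this.1.le, this.2.le⟩
  -- initial margin
  obtain ⟨δ, hδpos, hδ⟩ := hopen 0 (fun i j h1 h2 h3 => by
    rw [hinit i j h1 h2 h3]
    constructor <;> linarith)
  by_contra hcon
  push_neg at hcon
  obtain ⟨tb, htb0, htbbad⟩ := hcon
  set B := {t : ℝ | 0 ≤ t ∧ ¬ inBox N θ t} with hBdef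
  have hBne : B.Nonempty := ⟨tb, htb0, htbbad⟩
  have hBbdd : BddBelow B := ⟨0, fun x hx => hx.1⟩
  set τ := sInf B with hτdef
  have hτge : δ ≤ τ := by
    refine le_csInf hBne (fun b hb => ?_)
    by_contra hlt
    push_neg at hlt
    exact hb.2 (hδ b (by rw [sub_zero, abs_of_nonneg hb.1]; exact hlt))
  have hτpos : 0 < τ := lt_of_lt_of_le hδpos hτge
  have hbefore : ∀ s ∈ Set.Ico (0:ℝ) τ, inBox N θ s := by
    intro s hs
    by_contra hbad
    exact absurd (csInf_le hBbdd ⟨hs.1, hbad⟩) (not_le.2 hs.2)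
  have hboxτ : inBox N θ τ := by
    intro i j h1 h2 h3
    constructor
    · exact left_lim_ge hτpos (theta_cont hode h1 h2 h3)
        (fun s hs => (hbefore s hs i j h1 h2 h3).1)
    · exact left_lim_le hτpos (theta_cont hode h1 h2 h3)
        (fun s hs => (hbefore s hs i j h1 h2 h3).2)
  have hboxIcc : ∀ s ∈ Set.Icc (0:ℝ) τ, inBox N θ s := by
    intro s hs
    rcases lt_or_eq_of_le hs.2 with h | h
    · exact hbefore s ⟨hs.1, h⟩
    · rw [h]; exact hboxτ
  have hpos := core_pos hH hode hinit hCb0 hCb hτpos hboxIcc τ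
    (Set.right_mem_Icc.2 hτpos.le)
  have hub : ∀ i j : ℤ, 1 ≤ j → j < i → i ≤ N → θ τ i j ≤ π/4 := by
    intro i j h1 h2 h3
    have ha : θ τ i j ≤ θ 0 i j := core_anti hH hode hinit hCb0 hCb hτpos hboxIcc h1 h2 h3
      (Set.left_mem_Icc.2 hτpos.le) (Set.right_mem_Icc.2 hτpos.le) hτpos.le
    rwa [hinit i j h1 h2 h3] at ha
  obtain ⟨ε, hεpos, hε⟩ := hopen τ (fun i j h1 h2 h3 => by
    constructor
    · have := hpos i j h1 h2 h3; linarith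
    · have := hub i j h1 h2 h3; linarith)
  have hτlt : τ < τ + min ε δ / 2 := by
    have : 0 < min ε δ := lt_min hεpos hδpos
    linarith
  obtain ⟨b, hbB, hblt⟩ := (csInf_lt_iff hBbdd hBne).1 hτlt
  refine hbB.2 ?_
  rcases le_or_gt b τ with h | h
  · exact hboxIcc b ⟨hbB.1, h⟩
  · refine hε b ?_
    rw [abs_of_nonneg (by linarith)]
    have : 0 < min ε δ := lt_min hεpos hδpos
    have hmin : min ε δ ≤ ε := min_le_left _ _
    linarith

end boot

theorem stmt2 (H : ℝ → ℝ) (hH : IsCoupling H) (N : ℤ) (hN : 2 ≤ N)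
    (θ : ℝ → ℤ → ℤ → ℝ) (hθ : IsStdSolution H N θ) :
    ∀ t : ℝ, 0 < t → ∀ i j : ℤ, 1 ≤ j → j < i → i ≤ N →
      (0 < θ t i j ∧ θ t i j < π / 4) ∧ deriv (fun s => θ s i j) t < 0 := by
  obtain ⟨hode', hinit⟩ := hθ
  have hode : ∀ i j : ℤ, 1 ≤ j → j < i → i ≤ N → ∀ t : ℝ,
      HasDerivAt (fun s => θ s i j) (vv H N θ t i j) t := hode'
  obtain ⟨Cb, hCb0, hCb⟩ := coupling_bound hH
  intro t ht i j h1 h2 h3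
  have hboxIcc : ∀ s ∈ Set.Icc (0:ℝ) t, inBox N θ s :=
    fun s hs => box_all hH hode hinit hCb0 hCb s hs.1
  have hvneg := core_vneg hH hode hinit hCb0 hCb ht hboxIcc t
    (Set.right_mem_Ioc.2 ht) i j h1 h2 h3
  refine ⟨⟨?_, ?_⟩, ?_⟩
  · exact core_pos hH hode hinit hCb0 hCb ht hboxIcc t
      (Set.right_mem_Icc.2 ht.le) i j h1 h2 h3
  · exact core_ub_strict hH hode hinit hCb0 hCb ht hboxIcc t
      (Set.right_mem_Ioc.2 ht) i j h1 h2 h3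
  · rw [(hode i j h1 h2 h3 t).deriv]
    exact hvneg
end init
end

section
/- Let H be a coupling function, let N ≥ 2 be an integer, and let θ be a standard solution of the reduced system for lattice size N. Then, with the convention θ_{i,i}(t) = 0 for 1 ≤ i ≤ N, one has θ_{i,j}(t) < θ_{i+1,j}(t) for all t > 0 and all indices with 1 ≤ j ≤ i ≤ N − 1. -/
open Real Filter Topology

open Set in
/-! ### Auxiliary definitions -/

open Set

noncomputable def Xf (θ : ℝ → ℤ → ℤ → ℝ) (t : ℝ) (i j : ℤ) : ℝ := latExt (θ t) i j

noncomputable def Ffx (H : ℝ → ℝ) (N : ℤ) (θ : ℝ → ℤ → ℤ → ℝ) (t : ℝ) (i j : ℤ) : ℝ :=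
  H (Xf θ t (i - 1) j - Xf θ t i j) + H (Xf θ t i (j + 1) - Xf θ t i j) +
    H (Xf θ t i (j - 1) - Xf θ t i j) +
    (if i < N then H (Xf θ t (i + 1) j - Xf θ t i j) else 0)

lemma latExt_diag (θ : ℤ → ℤ → ℝ) (i : ℤ) : latExt θ i i = 0 := by
  simp [latExt]

lemma latExt_off (θ : ℤ → ℤ → ℝ) {i j : ℤ} (h1 : 1 ≤ j) (h2 : j < i) :
    latExt θ i j = θ i j := by
  unfold latExt; rw [if_neg (by omega), if_neg (by omega)]

lemma latExt_bot (θ : ℤ → ℤ → ℝ) {i : ℤ} (h2 : 2 ≤ i) :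
    latExt θ i 0 = π / 2 - latExt θ i 1 := by
  unfold latExt
  rw [if_neg (by omega), if_pos rfl, if_neg (by omega), if_neg (by omega)]

lemma Xf_diag (θ : ℝ → ℤ → ℤ → ℝ) (t : ℝ) (i : ℤ) : Xf θ t i i = 0 := latExt_diag _ i

lemma Xf_off (θ : ℝ → ℤ → ℤ → ℝ) (t : ℝ) {i j : ℤ} (h1 : 1 ≤ j) (h2 : j < i) :
    Xf θ t i j = θ t i j := latExt_off _ h1 h2

lemma Xf_bot (θ : ℝ → ℤ → ℤ → ℝ) (t : ℝ) {i : ℤ} (h2 : 2 ≤ i) :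
    Xf θ t i 0 = π / 2 - Xf θ t i 1 := latExt_bot _ h2

lemma hasDeriv_off {H : ℝ → ℝ} {N : ℤ} {θ : ℝ → ℤ → ℤ → ℝ} (hθ : IsStdSolution H N θ)
    {i j : ℤ} (h1 : 1 ≤ j) (h2 : j < i) (h3 : i ≤ N) (t : ℝ) :
    HasDerivAt (fun s => Xf θ s i j) (Ffx H N θ t i j) t := by
  have hfun : (fun s => Xf θ s i j) = fun s => θ s i j := by
    funext s; exact Xf_off θ s h1 h2
  rw [hfun]
  have h := hθ.1 i j h1 h2 h3 t
  have he : reducedRHS H N (θ t) i j = Ffx H N θ t i j := by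
    unfold reducedRHS Ffx Xf
    rw [latExt_off (θ t) h1 h2]
    congr 1
    by_cases hiN : i < N
    · rw [if_pos hiN, if_pos hiN, latExt_off (θ t) h1 (by omega)]
    · rw [if_neg hiN, if_neg hiN]
  rwa [he] at h

lemma hasDeriv_diag (θ : ℝ → ℤ → ℤ → ℝ) (i : ℤ) (t : ℝ) :
    HasDerivAt (fun s => Xf θ s i i) 0 t := by
  have : (fun s => Xf θ s i i) = fun _ => (0:ℝ) := by
    funext s; exact Xf_diag θ s i
  rw [this]; exact hasDerivAt_const t 0

lemma hasDeriv_bot {H : ℝ → ℝ} {N : ℤ} {θ : ℝ → ℤ → ℤ → ℝ} (hθ : IsStdSolution H N θ)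
    {i : ℤ} (h2 : 2 ≤ i) (h3 : i ≤ N) (t : ℝ) :
    HasDerivAt (fun s => Xf θ s i 0) (-(Ffx H N θ t i 1)) t := by
  have hfun : (fun s => Xf θ s i 0) = fun s => π / 2 - Xf θ s i 1 := by
    funext s; exact Xf_bot θ s h2
  rw [hfun]
  have h := (hasDerivAt_const t (π/2)).sub (hasDeriv_off hθ le_rfl (by omega) h3 t)
  rw [zero_sub] at h
  exact h

variable {H : ℝ → ℝ}

lemma cf_zero (hH : IsCoupling H) : H 0 = 0 := by
  have := hH.2.2.1 0
  simp at this
  linarith [this]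

lemma cf_mono (hH : IsCoupling H) : StrictMonoOn H (Icc (-(π/2)) (π/2)) := by
  apply strictMonoOn_of_deriv_pos (convex_Icc _ _) hH.1.continuous.continuousOn
  rw [interior_Icc]
  exact hH.2.2.2

lemma cf_lip (hH : IsCoupling H) :
    ∃ L : ℝ, 1 ≤ L ∧ ∀ a b : ℝ, a ∈ Icc (-π) π → b ∈ Icc (-π) π →
      |H a - H b| ≤ L * |a - b| := by
  obtain ⟨C, hC⟩ := isCompact_Icc.exists_bound_of_continuousOn
    ((hH.1.continuous_deriv (by simp)).continuousOn (s := Icc (-π) π))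
  refine ⟨max 1 C, le_max_left _ _, fun a b ha hb => ?_⟩
  have := Convex.norm_image_sub_le_of_norm_deriv_le (f := H) (s := Icc (-π) π)
    (fun x _ => (hH.1.differentiable (by simp)).differentiableAt)
    (fun x hx => le_trans (hC x hx) (le_max_right 1 C)) (convex_Icc _ _) hb ha
  simpa [Real.norm_eq_abs] using this

lemma slope_nonpos {f : ℝ → ℝ} {f' t0 : ℝ} (ht0 : 0 < t0) (hf : HasDerivAt f f' t0)
    (h0 : f t0 = 0) (hpos : ∀ s, 0 ≤ s → s < t0 → 0 < f s) : f' ≤ 0 := by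
  have hW := (hf.hasDerivWithinAt (s := Iio t0))
  rw [hasDerivWithinAt_iff_tendsto_slope] at hW
  have hset : Iio t0 \ {t0} = Iio t0 := by
    apply diff_singleton_eq_self; simp
  rw [hset] at hW
  refine le_of_tendsto hW ?_
  filter_upwards [Ioo_mem_nhdsLT_of_mem (show t0 ∈ Ioc 0 t0 from ⟨ht0, le_rfl⟩)] with s hs
  have h1 : 0 < f s := hpos s hs.1.le hs.2
  have h2 : s - t0 < 0 := by linarith [hs.2]
  rw [slope_def_field, h0, sub_zero]
  exact le_of_lt (div_neg_of_pos_of_neg h1 h2)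



/-- Bundled facts used throughout the proof. -/
structure Setup (H : ℝ → ℝ) (N : ℤ) (θ : ℝ → ℤ → ℤ → ℝ) (L : ℝ) : Prop where
  hN : 2 ≤ N
  std : IsStdSolution H N θ
  hL1 : 1 ≤ L
  lip : ∀ a b : ℝ, a ∈ Icc (-π) π → b ∈ Icc (-π) π → |H a - H b| ≤ L * |a - b|
  odd : ∀ x : ℝ, H (-x) = - H x
  zero : H 0 = 0
  mono : ∀ a b : ℝ, -(π/2) ≤ a → a ≤ b → b ≤ π/2 → H a ≤ H b
  monoS : ∀ a b : ℝ, -(π/2) ≤ a → a < b → b ≤ π/2 → H a < H b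

namespace Setup

variable {H : ℝ → ℝ} {N : ℤ} {θ : ℝ → ℤ → ℤ → ℝ} {L : ℝ}

lemma pi3 : (3:ℝ) < π := Real.pi_gt_three

lemma Hnn (S : Setup H N θ L) : ∀ x : ℝ, 0 ≤ x → x ≤ π/2 → 0 ≤ H x := by
  intro x h1 h2
  have := S.mono 0 x (by linarith [pi3]) h1 h2
  rwa [S.zero] at this

lemma Hple (S : Setup H N θ L) : ∀ x : ℝ, 0 ≤ x → x ≤ π → H x ≤ L * x := by
  intro x h1 h2
  have := S.lip x 0 ⟨by linarith [pi3], h2⟩ ⟨by linarith [pi3], by linarith [pi3]⟩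
  rw [S.zero, sub_zero, sub_zero, abs_of_nonneg h1] at this
  calc H x ≤ |H x| := le_abs_self _
  _ ≤ L * x := this

lemma P2 (S : Setup H N θ L) : 0 < H (π/2) := by
  have := S.monoS 0 (π/2) (by linarith [pi3]) (by linarith [pi3]) le_rfl
  rwa [S.zero] at this

lemma hL0 (S : Setup H N θ L) : (0:ℝ) < L := by linarith [S.hL1]

end Setup

/-- the smallness threshold -/
noncomputable def dlt0 (H : ℝ → ℝ) (N : ℤ) (L : ℝ) : ℝ :=
  min (1/(8*(N:ℝ))) (H (π/2)/(2*(N:ℝ)*L))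

lemma dlt0_pos {H : ℝ → ℝ} {N : ℤ} {θ : ℝ → ℤ → ℤ → ℝ} {L : ℝ} (S : Setup H N θ L) :
    0 < dlt0 H N L := by
  have hN : (2:ℝ) ≤ (N:ℝ) := by exact_mod_cast S.hN
  apply lt_min
  · apply div_pos one_pos; linarith
  · apply div_pos S.P2; nlinarith [S.hL1]

/-- all horizontal differences at time `t` are `≥ -δ` -/
def Ph (N : ℤ) (θ : ℝ → ℤ → ℤ → ℝ) (t δ : ℝ) : Prop :=
  ∀ i j : ℤ, 1 ≤ j → j ≤ i → i ≤ N - 1 → -δ ≤ Xf θ t (i+1) j - Xf θ t i j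

/-- all vertical differences at time `t` are `≥ -δ` -/
def Pv (N : ℤ) (θ : ℝ → ℤ → ℤ → ℝ) (t δ : ℝ) : Prop :=
  ∀ i j : ℤ, 0 ≤ j → j < i → i ≤ N → (1 ≤ j ∨ 2 ≤ i) → -δ ≤ Xf θ t i j - Xf θ t i (j+1)

section Ranges
variable {H : ℝ → ℝ} {N : ℤ} {θ : ℝ → ℤ → ℤ → ℝ} {L t δ : ℝ}

lemma rng_lo (S : Setup H N θ L) (hδ : 0 ≤ δ) (hPv : Pv N θ t δ) :
    ∀ i j : ℤ, 1 ≤ j → j ≤ i → i ≤ N → -((N:ℝ)*δ) ≤ Xf θ t i j := by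
  intro i j h1 h2 h3
  have key : ∀ j : ℤ, j ≤ i → 1 ≤ j → -(((i:ℝ)-(j:ℝ))*δ) ≤ Xf θ t i j := by
    refine Int.le_induction_down ?_ ?_
    · intro _; rw [Xf_diag]; simp
    · intro n hn ih h1'
      have hn1 : 1 ≤ n := by omega
      have ihn : -(((i:ℝ)-(n:ℝ))*δ) ≤ Xf θ t i n := ih hn1
      have hv := hPv i (n-1) (by omega) (by omega) h3 (Or.inl (by omega))
      rw [sub_add_cancel] at hv
      push_cast
      push_cast at ihn
      nlinarith [hv, ihn]
  have := key j h2 h1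
  have hij : ((i:ℝ)-(j:ℝ)) ≤ (N:ℝ) := by
    have : (i:ℝ) ≤ (N:ℝ) := by exact_mod_cast h3
    have : (1:ℝ) ≤ (j:ℝ) := by exact_mod_cast h1
    linarith [(show (i:ℝ) ≤ (N:ℝ) by exact_mod_cast h3)]
  nlinarith [this, hij, hδ]

lemma rng_hi (S : Setup H N θ L) (hδ : 0 ≤ δ) (hPv : Pv N θ t δ) :
    ∀ i j : ℤ, 1 ≤ j → j ≤ i → i ≤ N → Xf θ t i j ≤ π/4 + (N:ℝ)*δ := by
  intro i j h1 h2 h3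
  rcases eq_or_lt_of_le h2 with rfl | hji
  · rw [Xf_diag]
    have : (0:ℝ) ≤ (N:ℝ)*δ := by
      have : (0:ℝ) ≤ (N:ℝ) := by exact_mod_cast (by omega : (0:ℤ) ≤ N)
      positivity
    linarith [Setup.pi3]
  · -- j < i, so i ≥ 2
    have hi2 : 2 ≤ i := by omega
    have base : Xf θ t i 1 ≤ π/4 + δ/2 := by
      have hv := hPv i 0 le_rfl (by omega) h3 (Or.inr hi2)
      rw [Xf_bot θ t hi2] at hv
      norm_num at hv ⊢
      linarith
    have key : ∀ j : ℤ, 1 ≤ j → j ≤ i → Xf θ t i j ≤ π/4 + δ/2 + ((j:ℝ)-1)*δ := by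
      refine Int.le_induction ?_ ?_
      · intro _
        push_cast
        linarith [base]
      · intro n hn ih hni
        have ihn := ih (by omega)
        have hv := hPv i n (by omega) (by omega) h3 (Or.inl hn)
        push_cast
        push_cast at ihn
        nlinarith [hv, ihn]
    have := key j h1 h2
    have hjN : ((j:ℝ)) ≤ (N:ℝ) := by exact_mod_cast le_trans h2 h3
    nlinarith [this, hδ, hjN]
end Ranges

section Faces
variable {H : ℝ → ℝ} {N : ℤ} {θ : ℝ → ℤ → ℤ → ℝ} {L t δ : ℝ}

lemma basics (S : Setup H N θ L) (hδ : 0 ≤ δ) (hδ0 : δ ≤ dlt0 H N L) :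
    (N:ℝ)*δ ≤ 1/8 ∧ δ ≤ 1/8 ∧ 2*(N:ℝ)*L*δ ≤ H (π/2) := by
  have hN2 : (2:ℝ) ≤ (N:ℝ) := by exact_mod_cast S.hN
  have h1 : δ ≤ 1/(8*(N:ℝ)) := le_trans hδ0 (min_le_left _ _)
  have he : (N:ℝ)*(1/(8*(N:ℝ))) = 1/8 := by field_simp
  have hNδ : (N:ℝ)*δ ≤ 1/8 := by nlinarith
  have hδ8 : δ ≤ 1/8 := by nlinarith [mul_nonneg hδ (by linarith : (0:ℝ) ≤ (N:ℝ)-1)]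
  refine ⟨hNδ, hδ8, ?_⟩
  have h2 : δ ≤ H (π/2)/(2*(N:ℝ)*L) := le_trans hδ0 (min_le_right _ _)
  have hpos : 0 < 2*(N:ℝ)*L := by nlinarith [S.hL1]
  rw [le_div_iff₀ hpos] at h2
  linarith

lemma HargA (S : Setup H N θ L) (hδ : 0 ≤ δ) (hδ0 : δ ≤ dlt0 H N L) :
    ∀ a : ℝ, -δ ≤ a → a ≤ π/2 + 2*(N:ℝ)*δ → -(L*δ) ≤ H a := by
  obtain ⟨hNδ, hδ8, hNL⟩ := basics S hδ hδ0
  have hπ := Real.pi_gt_three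
  intro a ha1 ha2
  by_cases hc : a ≤ π/2
  · have h1 : H (-δ) ≤ H a := S.mono (-δ) a (by linarith) ha1 hc
    have h2 : H (-δ) = -H δ := S.odd δ
    have h3 : H δ ≤ L*δ := S.Hple δ hδ (by linarith)
    linarith
  · push_neg at hc
    have hmem1 : a ∈ Icc (-π) π := ⟨by linarith, by linarith⟩
    have hmem2 : (π/2) ∈ Icc (-π) π := ⟨by linarith, by linarith⟩
    have hl := S.lip a (π/2) hmem1 hmem2
    rw [abs_of_nonneg (by linarith : (0:ℝ) ≤ a - π/2)] at hl
    have h4 : H (π/2) - H a ≤ L*(a - π/2) := by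
      calc H (π/2) - H a ≤ |H a - H (π/2)| := by rw [abs_sub_comm]; exact le_abs_self _
      _ ≤ L*(a - π/2) := hl
    have h5 : L*(a - π/2) ≤ L*(2*(N:ℝ)*δ) := by
      apply mul_le_mul_of_nonneg_left (by linarith) (by linarith [S.hL1])
    nlinarith [S.hL1]

lemma hXub (S : Setup H N θ L) (hδ : 0 ≤ δ) (hPv : Pv N θ t δ) :
    ∀ i j : ℤ, 0 ≤ j → j ≤ i → i ≤ N → (1 ≤ j ∨ 2 ≤ i) →
      Xf θ t i j ≤ π/2 + (N:ℝ)*δ := by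
  intro i j h0 h2 h3 h4
  have hπ := Real.pi_gt_three
  have hN0 : (0:ℝ) ≤ (N:ℝ)*δ := by
    have : (0:ℝ) ≤ (N:ℝ) := by exact_mod_cast (by omega : (0:ℤ) ≤ N)
    positivity
  rcases h4 with h4 | h4
  · have := rng_hi S hδ hPv i j h4 h2 h3
    linarith
  · by_cases hj : 1 ≤ j
    · have := rng_hi S hδ hPv i j hj h2 h3; linarith
    · have hj0 : j = 0 := by omega
      subst hj0
      rw [Xf_bot θ t h4]
      have := rng_lo S hδ hPv i 1 le_rfl (by omega) h3
      linarith

lemma hXlb (S : Setup H N θ L) (hδ : 0 ≤ δ) (hPv : Pv N θ t δ) :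
    ∀ i j : ℤ, 0 ≤ j → j ≤ i → i ≤ N → (1 ≤ j ∨ 2 ≤ i) →
      -((N:ℝ)*δ) ≤ Xf θ t i j := by
  intro i j h0 h2 h3 h4
  have hπ := Real.pi_gt_three
  by_cases hj : 1 ≤ j
  · exact rng_lo S hδ hPv i j hj h2 h3
  · have hj0 : j = 0 := by omega
    subst hj0
    have hi2 : 2 ≤ i := by rcases h4 with h|h; omega; exact h
    rw [Xf_bot θ t hi2]
    have := rng_hi S hδ hPv i 1 le_rfl (by omega) h3
    linarith
end Faces

section Faces2
variable {H : ℝ → ℝ} {N : ℤ} {θ : ℝ → ℤ → ℤ → ℝ} {L t δ : ℝ}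

lemma faceH (S : Setup H N θ L) (hδ : 0 ≤ δ) (hδ0 : δ ≤ dlt0 H N L)
    (hPh : Ph N θ t δ) (hPv : Pv N θ t δ) :
    ∀ i j : ℤ, 1 ≤ j → j < i → i ≤ N - 1 → Xf θ t (i+1) j - Xf θ t i j = -δ →
      -(4*L*δ) ≤ Ffx H N θ t (i+1) j - Ffx H N θ t i j := by
  obtain ⟨hNδ, hδ8, hNL⟩ := basics S hδ hδ0
  have hπ := Real.pi_gt_three
  have hL1 := S.hL1
  intro i j h1 h2 h3 hact
  have hlo := rng_lo S hδ hPv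
  have hhi := rng_hi S hδ hPv
  -- term 1
  have hb1 : H (Xf θ t (i-1) j - Xf θ t i j) ≤ H (Xf θ t i j - Xf θ t (i+1) j) := by
    have e1 := hlo (i-1) j h1 (by omega) (by omega)
    have e2 := hhi i j h1 (by omega) (by omega)
    have hh := hPh (i-1) j h1 (by omega) (by omega)
    rw [(by ring : i-1+1 = i)] at hh
    exact S.mono _ _ (by linarith) (by linarith) (by linarith)
  -- term 2
  have hb2 : H (Xf θ t i (j+1) - Xf θ t i j) ≤ H (Xf θ t (i+1) (j+1) - Xf θ t (i+1) j) := by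
    have e1 := hlo i (j+1) (by omega) (by omega) (by omega)
    have e2 := hhi i j h1 (by omega) (by omega)
    have e3 := hhi (i+1) (j+1) (by omega) (by omega) (by omega)
    have e4 := hlo (i+1) j h1 (by omega) (by omega)
    have hh := hPh i (j+1) (by omega) (by omega) h3
    exact S.mono _ _ (by linarith) (by linarith) (by linarith)
  -- term 3
  have hb3 : -(2*L*δ) ≤ H (Xf θ t (i+1) (j-1) - Xf θ t (i+1) j)
      - H (Xf θ t i (j-1) - Xf θ t i j) := by
    rcases (by omega : j = 1 ∨ 2 ≤ j) with hj1 | hj2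
    · subst hj1
      have hi2 : 2 ≤ i := by omega
      have ebot1 : Xf θ t (i+1) (1-1) = π/2 - Xf θ t (i+1) 1 := by
        rw [(by ring : (1:ℤ)-1 = 0)]; exact Xf_bot θ t (by omega)
      have ebot2 : Xf θ t i (1-1) = π/2 - Xf θ t i 1 := by
        rw [(by ring : (1:ℤ)-1 = 0)]; exact Xf_bot θ t hi2
      rw [ebot1, ebot2]
      have e1 := hlo (i+1) 1 le_rfl (by omega) (by omega)
      have e2 := hhi (i+1) 1 le_rfl (by omega) (by omega)
      have e3 := hlo i 1 le_rfl (by omega) (by omega)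
      have e4 := hhi i 1 le_rfl (by omega) (by omega)
      have hl := S.lip (π/2 - Xf θ t (i+1) 1 - Xf θ t (i+1) 1)
        (π/2 - Xf θ t i 1 - Xf θ t i 1) ⟨by linarith, by linarith⟩ ⟨by linarith, by linarith⟩
      have habs : |π/2 - Xf θ t (i+1) 1 - Xf θ t (i+1) 1 -
          (π/2 - Xf θ t i 1 - Xf θ t i 1)| = 2*δ := by
        rw [(by linarith [hact] : π/2 - Xf θ t (i+1) 1 - Xf θ t (i+1) 1 -
          (π/2 - Xf θ t i 1 - Xf θ t i 1) = 2*δ)]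
        exact abs_of_nonneg (by linarith)
      rw [habs] at hl
      have := abs_le.mp hl
      linarith [this.1]
    · have hh := hPh i (j-1) (by omega) (by omega) h3
      have e1 := hlo i (j-1) (by omega) (by omega) (by omega)
      have e2 := hhi i j h1 (by omega) (by omega)
      have e3 := hhi (i+1) (j-1) (by omega) (by omega) (by omega)
      have e4 := hlo (i+1) j h1 (by omega) (by omega)
      have := S.mono (Xf θ t i (j-1) - Xf θ t i j) (Xf θ t (i+1) (j-1) - Xf θ t (i+1) j)
        (by linarith) (by linarith) (by linarith)
      nlinarith
  -- term 5
  have hb5 : H (Xf θ t (i+1) j - Xf θ t i j) ≤ 0 := by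
    rw [hact, S.odd δ]
    have := S.Hnn δ hδ (by linarith)
    linarith
  -- final assembly
  show -(4*L*δ) ≤ Ffx H N θ t (i+1) j - Ffx H N θ t i j
  unfold Ffx
  rw [(by ring : i+1-1 = i), if_pos (by omega : i < N)]
  by_cases hiN : i + 1 < N
  · rw [if_pos hiN]
    have hb4 : -(L*δ) ≤ H (Xf θ t (i+1+1) j - Xf θ t (i+1) j) := by
      apply HargA S hδ hδ0
      · exact hPh (i+1) j h1 (by omega) (by omega)
      · have e3 := hhi (i+1+1) j h1 (by omega) (by omega)
        have e4 := hlo (i+1) j h1 (by omega) (by omega)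
        linarith
    nlinarith
  · rw [if_neg hiN]
    nlinarith
end Faces2

section Faces3
variable {H : ℝ → ℝ} {N : ℤ} {θ : ℝ → ℤ → ℤ → ℝ} {L t δ : ℝ}

lemma faceHD (S : Setup H N θ L) (hδ : 0 ≤ δ) (hδ0 : δ ≤ dlt0 H N L)
    (hPh : Ph N θ t δ) (hPv : Pv N θ t δ) :
    ∀ i : ℤ, 1 ≤ i → i ≤ N - 1 → Xf θ t (i+1) i = -δ →
      -(4*L*δ) ≤ Ffx H N θ t (i+1) i := by
  obtain ⟨hNδ, hδ8, hNL⟩ := basics S hδ hδ0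
  have hπ := Real.pi_gt_three
  have hL1 := S.hL1
  intro i h1 h3 hact
  have hlo := rng_lo S hδ hPv
  have hhi := rng_hi S hδ hPv
  have t1 : 0 ≤ H (Xf θ t (i+1-1) i - Xf θ t (i+1) i) := by
    have e : Xf θ t (i+1-1) i - Xf θ t (i+1) i = δ := by
      rw [(by ring : i+1-1 = i), Xf_diag, hact]; ring
    rw [e]; exact S.Hnn δ hδ (by linarith)
  have t2 : 0 ≤ H (Xf θ t (i+1) (i+1) - Xf θ t (i+1) i) := by
    have e : Xf θ t (i+1) (i+1) - Xf θ t (i+1) i = δ := by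
      rw [Xf_diag, hact]; ring
    rw [e]; exact S.Hnn δ hδ (by linarith)
  have t3 : -(L*δ) ≤ H (Xf θ t (i+1) (i-1) - Xf θ t (i+1) i) := by
    apply HargA S hδ hδ0
    · have hv := hPv (i+1) (i-1) (by omega) (by omega) (by omega) (Or.inr (by omega))
      rw [(by ring : i-1+1 = i)] at hv
      exact hv
    · have e1 := hXub S hδ hPv (i+1) (i-1) (by omega) (by omega) (by omega)
        (by omega)
      have e2 := hXlb S hδ hPv (i+1) i (by omega) (by omega) (by omega) (Or.inl h1)
      linarith
  show -(4*L*δ) ≤ Ffx H N θ t (i+1) i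
  unfold Ffx
  by_cases hiN : i + 1 < N
  · rw [if_pos hiN]
    have t4 : -(L*δ) ≤ H (Xf θ t (i+1+1) i - Xf θ t (i+1) i) := by
      apply HargA S hδ hδ0
      · exact hPh (i+1) i h1 (by omega) (by omega)
      · have e3 := hhi (i+1+1) i h1 (by omega) (by omega)
        have e4 := hlo (i+1) i h1 (by omega) (by omega)
        linarith
    nlinarith
  · rw [if_neg hiN]
    nlinarith

lemma faceV (S : Setup H N θ L) (hδ : 0 ≤ δ) (hδ0 : δ ≤ dlt0 H N L)
    (hPh : Ph N θ t δ) (hPv : Pv N θ t δ) :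
    ∀ i j : ℤ, 1 ≤ j → j + 1 < i → i ≤ N → Xf θ t i j - Xf θ t i (j+1) = -δ →
      -(4*L*δ) ≤ Ffx H N θ t i j - Ffx H N θ t i (j+1) := by
  obtain ⟨hNδ, hδ8, hNL⟩ := basics S hδ hδ0
  have hπ := Real.pi_gt_three
  have hL1 := S.hL1
  intro i j h1 h2 h3 hact
  have hlo := rng_lo S hδ hPv
  have hhi := rng_hi S hδ hPv
  -- west terms
  have c1 : H (Xf θ t (i-1) (j+1) - Xf θ t i (j+1)) ≤ H (Xf θ t (i-1) j - Xf θ t i j) := by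
    have hv := hPv (i-1) j (by omega) (by omega) (by omega) (Or.inl h1)
    have hh := hPh (i-1) j h1 (by omega) (by omega)
    rw [(by ring : i-1+1 = i)] at hh
    have e1 := hlo (i-1) (j+1) (by omega) (by omega) (by omega)
    have e2 := hhi i (j+1) (by omega) (by omega) h3
    exact S.mono _ _ (by linarith) (by linarith) (by linarith)
  -- south terms
  have c2 : H (Xf θ t i (j+1+1) - Xf θ t i (j+1)) ≤ H (Xf θ t i (j+1) - Xf θ t i j) := by
    have hv := hPv i (j+1) (by omega) (by omega) h3 (Or.inl (by omega))
    have e1 := hlo i (j+1+1) (by omega) (by omega) h3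
    have e2 := hhi i (j+1) (by omega) (by omega) h3
    exact S.mono _ _ (by linarith) (by linarith) (by linarith)
  -- north terms
  have c3a : -(L*δ) ≤ H (Xf θ t i (j-1) - Xf θ t i j) := by
    apply HargA S hδ hδ0
    · have hv := hPv i (j-1) (by omega) (by omega) h3 (Or.inr (by omega))
      rw [(by ring : j-1+1 = j)] at hv
      exact hv
    · have e1 := hXub S hδ hPv i (j-1) (by omega) (by omega) h3 (Or.inr (by omega))
      have e2 := hXlb S hδ hPv i j (by omega) (by omega) h3 (Or.inl h1)
      linarith
  have c3b : H (Xf θ t i (j+1-1) - Xf θ t i (j+1)) ≤ 0 := by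
    have e : Xf θ t i (j+1-1) - Xf θ t i (j+1) = -δ := by
      rw [(by ring : j+1-1 = j)]; exact hact
    rw [e, S.odd δ]
    have := S.Hnn δ hδ (by linarith)
    linarith
  show _ ≤ Ffx H N θ t i j - Ffx H N θ t i (j+1)
  unfold Ffx
  by_cases hiN : i < N
  · rw [if_pos hiN, if_pos hiN]
    have c4 : H (Xf θ t (i+1) (j+1) - Xf θ t i (j+1)) ≤ H (Xf θ t (i+1) j - Xf θ t i j) := by
      have hv := hPv (i+1) j (by omega) (by omega) (by omega) (Or.inl h1)
      have hh := hPh i (j+1) (by omega) (by omega) (by omega)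
      have e1 := hhi (i+1) j h1 (by omega) (by omega)
      have e2 := hlo i j h1 (by omega) h3
      exact S.mono _ _ (by linarith) (by linarith) (by linarith)
    nlinarith
  · rw [if_neg hiN, if_neg hiN]
    nlinarith

lemma faceV0 (S : Setup H N θ L) (hδ : 0 ≤ δ) (hδ0 : δ ≤ dlt0 H N L)
    (hPh : Ph N θ t δ) (hPv : Pv N θ t δ) :
    ∀ i : ℤ, 2 ≤ i → i ≤ N → Xf θ t i 0 - Xf θ t i 1 = -δ →
      -(4*L*δ) ≤ -(2 * Ffx H N θ t i 1) := by
  obtain ⟨hNδ, hδ8, hNL⟩ := basics S hδ hδ0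
  have hπ := Real.pi_gt_three
  have hL1 := S.hL1
  intro i h1 h3 hact
  have hlo := rng_lo S hδ hPv
  have hhi := rng_hi S hδ hPv
  have hHδ : H δ ≤ L * δ := S.Hple δ hδ (by linarith)
  have u1 : H (Xf θ t (i-1) 1 - Xf θ t i 1) ≤ L*δ := by
    have hh := hPh (i-1) 1 le_rfl (by omega) (by omega)
    rw [(by ring : i-1+1 = i)] at hh
    have e1 := hlo (i-1) 1 le_rfl (by omega) (by omega)
    have e2 := hhi i 1 le_rfl (by omega) h3
    have := S.mono (Xf θ t (i-1) 1 - Xf θ t i 1) δ (by linarith) (by linarith) (by linarith)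
    linarith
  have u2 : H (Xf θ t i 2 - Xf θ t i 1) ≤ L*δ := by
    have hv := hPv i 1 (by omega) (by omega) h3 (Or.inl le_rfl)
    have hv' : -δ ≤ Xf θ t i 1 - Xf θ t i 2 := by
      rwa [(by norm_num : (1:ℤ)+1 = 2)] at hv
    have e1 := hlo i 2 (by omega) (by omega) h3
    have e2 := hhi i 1 le_rfl (by omega) h3
    have := S.mono (Xf θ t i 2 - Xf θ t i 1) δ (by linarith) (by linarith) (by linarith)
    linarith
  have u3 : H (Xf θ t i 0 - Xf θ t i 1) ≤ 0 := by
    rw [hact, S.odd δ]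
    have := S.Hnn δ hδ (by linarith)
    linarith
  have hexp : Ffx H N θ t i 1 = H (Xf θ t (i-1) 1 - Xf θ t i 1) +
      H (Xf θ t i 2 - Xf θ t i 1) + H (Xf θ t i 0 - Xf θ t i 1) +
      (if i < N then H (Xf θ t (i+1) 1 - Xf θ t i 1) else 0) := by
    unfold Ffx
    norm_num
  rw [hexp]
  by_cases hiN : i < N
  · rw [if_pos hiN]
    have u4 : H (Xf θ t (i+1) 1 - Xf θ t i 1) ≤ 0 := by
      have hv := hPv (i+1) 0 le_rfl (by omega) (by omega) (Or.inr (by omega))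
      have hv' : -δ ≤ Xf θ t (i+1) 0 - Xf θ t (i+1) 1 := by
        rwa [(by norm_num : (0:ℤ)+1 = 1)] at hv
      rw [Xf_bot θ t (by omega : 2 ≤ i+1)] at hv'
      have hact' := hact
      rw [Xf_bot θ t h1] at hact'
      have e1 := hlo (i+1) 1 le_rfl (by omega) (by omega)
      have e2 := hhi (i+1) 1 le_rfl (by omega) (by omega)
      have e3 := hlo i 1 le_rfl (by omega) h3
      have e4 := hhi i 1 le_rfl (by omega) h3
      have := S.mono (Xf θ t (i+1) 1 - Xf θ t i 1) 0 (by linarith) (by linarith) (by linarith)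
      rw [S.zero] at this
      linarith
    nlinarith
  · rw [if_neg hiN]
    nlinarith
end Faces3

section Stage1
variable {H : ℝ → ℝ} {N : ℤ} {θ : ℝ → ℤ → ℤ → ℝ} {L : ℝ}

/-- difference functions indexed by (i, j, isHorizontal) -/
noncomputable def Dd (θ : ℝ → ℤ → ℤ → ℝ) : ℤ × ℤ × Bool → ℝ → ℝ
  | (i, j, true) => fun s => Xf θ s (i+1) j - Xf θ s i j
  | (i, j, false) => fun s => Xf θ s i j - Xf θ s i (j+1)

/-- validity of an index -/
def Vv (N : ℤ) : ℤ × ℤ × Bool → Prop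
  | (i, j, true) => 1 ≤ j ∧ j ≤ i ∧ i ≤ N - 1
  | (i, j, false) => 0 ≤ j ∧ j < i ∧ i ≤ N ∧ (1 ≤ j ∨ 2 ≤ i)

lemma contX (S : Setup H N θ L) : ∀ i j : ℤ, 0 ≤ j → j ≤ i → i ≤ N → (2 ≤ i ∨ 1 ≤ j) →
    Continuous (fun s => Xf θ s i j) := by
  intro i j h0 h2 h3 h4
  rcases eq_or_lt_of_le h2 with rfl | hji
  · have : (fun s => Xf θ s j j) = fun _ => (0:ℝ) := by
      funext s; exact Xf_diag θ s j
    rw [this]; exact continuous_const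
  · by_cases hj : 1 ≤ j
    · exact continuous_iff_continuousAt.2 fun s =>
        (hasDeriv_off S.std hj hji h3 s).continuousAt
    · have hj0 : j = 0 := by omega
      subst hj0
      have hi2 : 2 ≤ i := by rcases h4 with h|h; exact h; omega
      exact continuous_iff_continuousAt.2 fun s =>
        (hasDeriv_bot S.std hi2 h3 s).continuousAt

lemma contD (S : Setup H N θ L) : ∀ p, Vv N p → Continuous (Dd θ p) := by
  rintro ⟨i, j, b⟩ hV
  cases b
  · obtain ⟨h0, h2, h3, h4⟩ := hV
    exact (contX S i j h0 h2.le h3 (by omega)).sub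
      (contX S i (j+1) (by omega) (by omega) h3 (by omega))
  · obtain ⟨h1, h2, h3⟩ := hV
    exact (contX S (i+1) j (by omega) (by omega) (by omega) (by omega)).sub
      (contX S i j (by omega) h2 (by omega) (by omega))

lemma init (S : Setup H N θ L) : ∀ p, Vv N p → 0 ≤ Dd θ p 0 := by
  have hπ := Real.pi_gt_three
  have hX0 : ∀ i j : ℤ, 1 ≤ j → j ≤ i → i ≤ N → Xf θ 0 i j = if i = j then 0 else π/4 := by
    intro i j h1 h2 h3
    rcases eq_or_lt_of_le h2 with rfl | hji
    · rw [Xf_diag, if_pos rfl]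
    · rw [Xf_off θ 0 h1 hji, if_neg (by omega), S.std.2 i j h1 hji h3]
  rintro ⟨i, j, b⟩ hV
  cases b
  · obtain ⟨h0, h2, h3, h4⟩ := hV
    show 0 ≤ Xf θ 0 i j - Xf θ 0 i (j+1)
    by_cases hj : 1 ≤ j
    · rw [hX0 i j hj (by omega) h3, hX0 i (j+1) (by omega) (by omega) h3,
        if_neg (by omega)]
      by_cases he : i = j + 1
      · rw [if_pos he]; linarith
      · rw [if_neg he]; linarith
    · have hj0 : j = 0 := by omega
      subst hj0
      have hi2 : 2 ≤ i := by rcases h4 with h|h; omega; exact h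
      rw [Xf_bot θ 0 hi2, (by norm_num : (0:ℤ)+1 = 1), hX0 i 1 le_rfl (by omega) h3,
        if_neg (by omega)]
      linarith
  · obtain ⟨h1, h2, h3⟩ := hV
    show 0 ≤ Xf θ 0 (i+1) j - Xf θ 0 i j
    rw [hX0 (i+1) j h1 (by omega) (by omega), hX0 i j h1 h2 (by omega), if_neg (by omega)]
    by_cases he : i = j
    · rw [if_pos he]; linarith
    · rw [if_neg he]; linarith
end Stage1

section Stage1b
variable {H : ℝ → ℝ} {N : ℤ} {θ : ℝ → ℤ → ℤ → ℝ} {L : ℝ}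

lemma expDeriv (ε C t : ℝ) :
    HasDerivAt (fun s => ε * Real.exp (C*s)) (C * (ε * Real.exp (C*t))) t := by
  have h := ((Real.hasDerivAt_exp (C*t)).comp t ((hasDerivAt_id t).const_mul C)).const_mul ε
  simpa [mul_comm, mul_assoc, mul_left_comm] using h

/-- The key barrier argument: no difference can cross `-ε e^{Cs}` on `[0,T]`. -/
lemma barrier (S : Setup H N θ L) (T : ℝ) (hT : 0 < T) (ε : ℝ) (hε : 0 < ε)
    (hεd : ε * Real.exp ((4*L+1)*T) ≤ dlt0 H N L) :
    ∀ s, s ∈ Icc (0:ℝ) T → ∀ p, Vv N p → 0 < Dd θ p s + ε * Real.exp ((4*L+1)*s) := by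
  set C := 4*L+1 with hCdef
  have hL1 := S.hL1
  have hC : 0 < C := by rw [hCdef]; linarith
  set PP : Finset (ℤ × ℤ × Bool) :=
    (Finset.Icc 0 N) ×ˢ ((Finset.Icc 0 N) ×ˢ (Finset.univ : Finset Bool)) with hPP
  have hmemPP : ∀ p, Vv N p → p ∈ PP := by
    rintro ⟨i, j, b⟩ hV
    have hN := S.hN
    simp only [hPP, Finset.mem_product, Finset.mem_Icc, Finset.mem_univ, and_true]
    cases b
    · obtain ⟨h0, h2, h3, h4⟩ := hV; omega
    · obtain ⟨h1, h2, h3⟩ := hV; omega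
  set SS : Set ℝ :=
    ⋃ p ∈ (PP : Set (ℤ × ℤ × Bool)),
      {s | s ∈ Icc (0:ℝ) T ∧ Vv N p ∧ Dd θ p s + ε * Real.exp (C*s) ≤ 0} with hSS
  have hSSmem : ∀ s ∈ Icc (0:ℝ) T, ∀ p, Vv N p → Dd θ p s + ε * Real.exp (C*s) ≤ 0 →
      s ∈ SS := by
    intro s hs p hV hle
    rw [hSS]
    exact mem_iUnion₂.2 ⟨p, hmemPP p hV, ⟨hs, hV, hle⟩⟩
  have hSSsub : SS ⊆ Icc 0 T := by
    rw [hSS]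
    intro s hs
    obtain ⟨p, _, hs2⟩ := mem_iUnion₂.1 hs
    exact hs2.1
  have hclosed : IsClosed SS := by
    rw [hSS]
    apply Set.Finite.isClosed_biUnion (PP.finite_toSet)
    intro p _
    by_cases hV : Vv N p
    · have heq : {s | s ∈ Icc (0:ℝ) T ∧ Vv N p ∧ Dd θ p s + ε * Real.exp (C*s) ≤ 0}
          = Icc (0:ℝ) T ∩ {s | Dd θ p s + ε * Real.exp (C*s) ≤ 0} := by
        ext s; simp [hV, and_assoc]
      rw [heq]
      apply isClosed_Icc.inter
      apply isClosed_le
      · exact (contD S p hV).add (continuous_const.mul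
          (Real.continuous_exp.comp (continuous_const.mul continuous_id)))
      · exact continuous_const
    · have heq : {s | s ∈ Icc (0:ℝ) T ∧ Vv N p ∧ Dd θ p s + ε * Real.exp (C*s) ≤ 0}
          = (∅ : Set ℝ) := by
        ext s; simp [hV]
      rw [heq]; exact isClosed_empty
  -- main claim: SS is empty
  have hmain : SS = ∅ := by
    by_contra hne
    have hne' : SS.Nonempty := nonempty_iff_ne_empty.2 hne
    have hbdd : BddBelow SS := ⟨0, fun s hs => (hSSsub hs).1⟩
    set t0 := sInf SS with ht0def
    have ht0mem : t0 ∈ SS := hclosed.csInf_mem hne' hbdd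
    have ht0Icc : t0 ∈ Icc (0:ℝ) T := hSSsub ht0mem
    obtain ⟨p, hpPP, ht0Icc', hVp, hgp⟩ :
        ∃ p ∈ PP, t0 ∈ Icc (0:ℝ) T ∧ Vv N p ∧ Dd θ p t0 + ε * Real.exp (C*t0) ≤ 0 := by
      have := ht0mem
      rw [hSS] at this
      obtain ⟨p, hp1, hp2⟩ := mem_iUnion₂.1 this
      exact ⟨p, hp1, hp2.1, hp2.2.1, hp2.2.2⟩
    have hD00 : ∀ q, Vv N q → 0 < Dd θ q 0 + ε * Real.exp (C*0) := by
      intro q hq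
      have := init S q hq
      have : 0 < ε * Real.exp (C*0) := by positivity
      linarith [init S q hq]
    have ht0pos : 0 < t0 := by
      rcases eq_or_lt_of_le ht0Icc.1 with h | h
      · exfalso
        rw [← h] at hgp
        linarith [hD00 p hVp]
      · exact h
    have hbefore : ∀ s, 0 ≤ s → s < t0 → ∀ q, Vv N q →
        0 < Dd θ q s + ε * Real.exp (C*s) := by
      intro s hs0 hst q hq
      by_contra hle
      push_neg at hle
      have hsmem : s ∈ Icc (0:ℝ) T := ⟨hs0, le_trans hst.le ht0Icc.2⟩
      have := hSSmem s hsmem q hq hle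
      have := csInf_le hbdd this
      rw [← ht0def] at *
      linarith
    set δ := ε * Real.exp (C*t0) with hδdef
    have hδpos : 0 < δ := by positivity
    have hδd : δ ≤ dlt0 H N L := by
      have : Real.exp (C*t0) ≤ Real.exp (C*T) := by
        apply Real.exp_le_exp.2
        exact mul_le_mul_of_nonneg_left ht0Icc.2 hC.le
      calc δ ≤ ε * Real.exp (C*T) := by
            rw [hδdef]; exact mul_le_mul_of_nonneg_left this hε.le
      _ ≤ dlt0 H N L := hεd
    -- all differences at t0 are ≥ -δ
    have hlim : ∀ q, Vv N q → -δ ≤ Dd θ q t0 := by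
      intro q hq
      have htend : Tendsto (Dd θ q) (𝓝[<] t0) (𝓝 (Dd θ q t0)) :=
        ((contD S q hq).tendsto t0).mono_left nhdsWithin_le_nhds
      refine ge_of_tendsto htend ?_
      filter_upwards [Ioo_mem_nhdsLT_of_mem (show t0 ∈ Ioc 0 t0 from ⟨ht0pos, le_rfl⟩)]
        with s hs
      have h1 := hbefore s hs.1.le hs.2 q hq
      have h2 : Real.exp (C*s) ≤ Real.exp (C*t0) := by
        apply Real.exp_le_exp.2
        exact mul_le_mul_of_nonneg_left hs.2.le hC.le
      have h3 : ε * Real.exp (C*s) ≤ δ := by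
        rw [hδdef]; exact mul_le_mul_of_nonneg_left h2 hε.le
      linarith
    have hPh' : Ph N θ t0 δ := by
      intro i j h1 h2 h3
      exact hlim (i, j, true) ⟨h1, h2, h3⟩
    have hPv' : Pv N θ t0 δ := by
      intro i j h0 h2 h3 h4
      exact hlim (i, j, false) ⟨h0, h2, h3, h4⟩
    -- the active difference equals -δ exactly
    have hact : Dd θ p t0 = -δ := by
      have := hlim p hVp
      linarith
    -- g(t0) = 0 and g > 0 before t0
    have hg0 : Dd θ p t0 + ε * Real.exp (C*t0) = 0 := by rw [hact, ← hδdef]; ring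
    have hgpos : ∀ s, 0 ≤ s → s < t0 → 0 < Dd θ p s + ε * Real.exp (C*s) :=
      fun s hs0 hst => hbefore s hs0 hst p hVp
    -- derivative facts and contradiction, by cases on the face
    obtain ⟨i, j, b⟩ := p
    cases b
    · -- vertical face
      obtain ⟨h0, h2, h3, h4⟩ := hVp
      by_cases hj : 1 ≤ j
      · by_cases hji : j + 1 < i
        · -- interior vertical face
          have hder : HasDerivAt (fun s => Dd θ (i,j,false) s + ε * Real.exp (C*s))
              ((Ffx H N θ t0 i j - Ffx H N θ t0 i (j+1)) + C * δ) t0 := by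
            rw [hδdef]
            exact (((hasDeriv_off S.std hj (by omega) h3 t0).sub
              (hasDeriv_off S.std (by omega) hji h3 t0)).add (expDeriv ε C t0))
          have hsl := slope_nonpos ht0pos hder hg0 hgpos
          have hface := faceV S hδpos.le hδd hPh' hPv' i j hj hji h3 hact
          nlinarith
        · -- j+1 = i : diagonal-adjacent vertical face
          have hji' : i = j + 1 := by omega
          subst hji'
          have hXd : ∀ s, Dd θ (j+1,j,false) s = Xf θ s (j+1) j := by
            intro s
            show Xf θ s (j+1) j - Xf θ s (j+1) (j+1) = Xf θ s (j+1) j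
            rw [Xf_diag]; ring
          have hder : HasDerivAt (fun s => Dd θ (j+1,j,false) s + ε * Real.exp (C*s))
              (Ffx H N θ t0 (j+1) j + C * δ) t0 := by
            rw [hδdef]
            have h1 := (hasDeriv_off (i := j+1) (j := j) S.std hj (by omega) h3 t0).add
              (expDeriv ε C t0)
            have : (fun s => Dd θ (j+1,j,false) s + ε * Real.exp (C*s))
                = fun s => Xf θ s (j+1) j + ε * Real.exp (C*s) := by
              funext s; rw [hXd s]
            rw [this]
            exact h1
          have hsl := slope_nonpos ht0pos hder hg0 hgpos
          have hact' : Xf θ t0 (j+1) j = -δ := by rw [← hXd t0]; exact hact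
          have hface := faceHD S hδpos.le hδd hPh' hPv' j hj (by omega) hact'
          nlinarith
      · -- j = 0 : bottom vertical face
        have hj0 : j = 0 := by omega
        subst hj0
        have hi2 : 2 ≤ i := by rcases h4 with h|h; omega; exact h
        have hXd : ∀ s, Dd θ (i,0,false) s = Xf θ s i 0 - Xf θ s i 1 := by
          intro s
          show Xf θ s i 0 - Xf θ s i (0+1) = Xf θ s i 0 - Xf θ s i 1
          norm_num
        have hder : HasDerivAt (fun s => Dd θ (i,0,false) s + ε * Real.exp (C*s))
            ((-(Ffx H N θ t0 i 1) - Ffx H N θ t0 i 1) + C * δ) t0 := by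
          rw [hδdef]
          have h1 := ((hasDeriv_bot S.std hi2 h3 t0).sub
            (hasDeriv_off S.std le_rfl (by omega) h3 t0)).add (expDeriv ε C t0)
          have : (fun s => Dd θ (i,0,false) s + ε * Real.exp (C*s))
              = fun s => (Xf θ s i 0 - Xf θ s i 1) + ε * Real.exp (C*s) := by
            funext s; rw [hXd s]
          rw [this]
          exact h1
        have hsl := slope_nonpos ht0pos hder hg0 hgpos
        have hact' : Xf θ t0 i 0 - Xf θ t0 i 1 = -δ := by rw [← hXd t0]; exact hact
        have hface := faceV0 S hδpos.le hδd hPh' hPv' i hi2 h3 hact'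
        nlinarith
    · -- horizontal face
      obtain ⟨h1, h2, h3⟩ := hVp
      rcases eq_or_lt_of_le h2 with rfl | hji
      · -- diagonal horizontal face (j = i)
        have hXd : ∀ s, Dd θ (j,j,true) s = Xf θ s (j+1) j := by
          intro s
          show Xf θ s (j+1) j - Xf θ s j j = Xf θ s (j+1) j
          rw [Xf_diag]; ring
        have hder : HasDerivAt (fun s => Dd θ (j,j,true) s + ε * Real.exp (C*s))
            (Ffx H N θ t0 (j+1) j + C * δ) t0 := by
          rw [hδdef]
          have hd1 := (hasDeriv_off (i := j+1) (j := j) S.std h1 (by omega) (by omega) t0).add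
            (expDeriv ε C t0)
          have : (fun s => Dd θ (j,j,true) s + ε * Real.exp (C*s))
              = fun s => Xf θ s (j+1) j + ε * Real.exp (C*s) := by
            funext s; rw [hXd s]
          rw [this]
          exact hd1
        have hsl := slope_nonpos ht0pos hder hg0 hgpos
        have hact' : Xf θ t0 (j+1) j = -δ := by rw [← hXd t0]; exact hact
        have hface := faceHD S hδpos.le hδd hPh' hPv' j h1 h3 hact'
        nlinarith
      · -- interior horizontal face (j < i)
        have hder : HasDerivAt (fun s => Dd θ (i,j,true) s + ε * Real.exp (C*s))
            ((Ffx H N θ t0 (i+1) j - Ffx H N θ t0 i j) + C * δ) t0 := by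
          rw [hδdef]
          exact (((hasDeriv_off S.std h1 (by omega) (by omega) t0).sub
            (hasDeriv_off S.std h1 hji (by omega) t0)).add (expDeriv ε C t0))
        have hsl := slope_nonpos ht0pos hder hg0 hgpos
        have hface := faceH S hδpos.le hδd hPh' hPv' i j h1 hji h3 hact
        nlinarith
  -- conclude
  intro s hs p hV
  by_contra hle
  push_neg at hle
  have := hSSmem s hs p hV hle
  rw [hmain] at this
  exact this
end Stage1b

section Stage2
variable {H : ℝ → ℝ} {N : ℤ} {θ : ℝ → ℤ → ℤ → ℝ} {L : ℝ}

lemma stage1 (S : Setup H N θ L) : ∀ t : ℝ, 0 ≤ t → Ph N θ t 0 ∧ Pv N θ t 0 := by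
  have hL1 := S.hL1
  set C := 4*L+1 with hCdef
  have hC : 0 < C := by rw [hCdef]; linarith
  intro t ht
  have hkey : ∀ p, Vv N p → 0 ≤ Dd θ p t := by
    intro p hV
    by_contra hneg
    push_neg at hneg
    set T := t + 1 with hTdef
    have hT : 0 < T := by rw [hTdef]; linarith
    have hE1 := Real.exp_pos (C*T)
    have hE2 := Real.exp_pos (C*t)
    have hd0 := dlt0_pos S
    set ε := min (dlt0 H N L / Real.exp (C*T)) ((- Dd θ p t) / Real.exp (C*t)) with hεdef
    have hε : 0 < ε := by
      apply lt_min
      · exact div_pos hd0 hE1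
      · apply div_pos (by linarith) hE2
    have hεd : ε * Real.exp (C*T) ≤ dlt0 H N L := by
      have h1 : ε ≤ dlt0 H N L / Real.exp (C*T) := min_le_left _ _
      calc ε * Real.exp (C*T) ≤ (dlt0 H N L / Real.exp (C*T)) * Real.exp (C*T) :=
            mul_le_mul_of_nonneg_right h1 hE1.le
      _ = dlt0 H N L := by field_simp
    have hb := barrier S T hT ε hε hεd t ⟨ht, by linarith⟩ p hV
    have h2 : ε ≤ (- Dd θ p t) / Real.exp (C*t) := min_le_right _ _
    have h3 : ε * Real.exp (C*t) ≤ - Dd θ p t := by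
      calc ε * Real.exp (C*t) ≤ ((- Dd θ p t) / Real.exp (C*t)) * Real.exp (C*t) :=
            mul_le_mul_of_nonneg_right h2 hE2.le
      _ = - Dd θ p t := by field_simp
    linarith
  constructor
  · intro i j h1 h2 h3
    have := hkey (i, j, true) ⟨h1, h2, h3⟩
    simpa [Dd] using this
  · intro i j h0 h2 h3 h4
    have := hkey (i, j, false) ⟨h0, h2, h3, h4⟩
    simpa [Dd] using this

lemma cleanHD (S : Setup H N θ L) {t : ℝ} (hPh : Ph N θ t 0) (hPv : Pv N θ t 0) :
    ∀ i : ℤ, 1 ≤ i → i ≤ N - 1 →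
      -(2*L*(Xf θ t (i+1) i)) ≤ Ffx H N θ t (i+1) i := by
  have hπ := Real.pi_gt_three
  have hL1 := S.hL1
  intro i h1 h3
  have hlo := rng_lo S le_rfl hPv
  have hhi := rng_hi S le_rfl hPv
  have hh : 0 ≤ Xf θ t (i+1) i := by
    have := hPh i i h1 le_rfl h3
    rw [Xf_diag] at this
    linarith
  have hhub : Xf θ t (i+1) i ≤ π/4 := by
    have := hhi (i+1) i h1 (by omega) (by omega)
    linarith
  have t1 : -(L * Xf θ t (i+1) i) ≤ H (Xf θ t (i+1-1) i - Xf θ t (i+1) i) := by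
    have e : Xf θ t (i+1-1) i - Xf θ t (i+1) i = -(Xf θ t (i+1) i) := by
      rw [(by ring : i+1-1 = i), Xf_diag]; ring
    rw [e, S.odd]
    have := S.Hple _ hh (by linarith)
    linarith
  have t2 : -(L * Xf θ t (i+1) i) ≤ H (Xf θ t (i+1) (i+1) - Xf θ t (i+1) i) := by
    have e : Xf θ t (i+1) (i+1) - Xf θ t (i+1) i = -(Xf θ t (i+1) i) := by
      rw [Xf_diag]; ring
    rw [e, S.odd]
    have := S.Hple _ hh (by linarith)
    linarith
  have t3 : 0 ≤ H (Xf θ t (i+1) (i-1) - Xf θ t (i+1) i) := by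
    apply S.Hnn
    · have hv := hPv (i+1) (i-1) (by omega) (by omega) (by omega) (Or.inr (by omega))
      rw [(by ring : i-1+1 = i)] at hv
      linarith
    · have e1 := hXub S le_rfl hPv (i+1) (i-1) (by omega) (by omega) (by omega) (by omega)
      have e2 := hXlb S le_rfl hPv (i+1) i (by omega) (by omega) (by omega) (Or.inl h1)
      linarith
  show _ ≤ Ffx H N θ t (i+1) i
  unfold Ffx
  by_cases hiN : i + 1 < N
  · rw [if_pos hiN]
    have t4 : 0 ≤ H (Xf θ t (i+1+1) i - Xf θ t (i+1) i) := by
      apply S.Hnn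
      · have := hPh (i+1) i h1 (by omega) (by omega); linarith
      · have e1 := hhi (i+1+1) i h1 (by omega) (by omega)
        have e2 := hlo (i+1) i h1 (by omega) (by omega)
        linarith
    linarith
  · rw [if_neg hiN]
    linarith

lemma cleanH (S : Setup H N θ L) {t : ℝ} (hPh : Ph N θ t 0) (hPv : Pv N θ t 0) :
    ∀ i j : ℤ, 1 ≤ j → j < i → i ≤ N - 1 →
      H (Xf θ t i j - Xf θ t (i-1) j) - 6*L*(Xf θ t (i+1) j - Xf θ t i j)
        ≤ Ffx H N θ t (i+1) j - Ffx H N θ t i j := by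
  have hπ := Real.pi_gt_three
  have hL1 := S.hL1
  intro i j h1 h2 h3
  have hlo := rng_lo S le_rfl hPv
  have hhi := rng_hi S le_rfl hPv
  have hh : 0 ≤ Xf θ t (i+1) j - Xf θ t i j := by
    have := hPh i j h1 (by omega) h3; linarith
  have hhub : Xf θ t (i+1) j - Xf θ t i j ≤ π/4 := by
    have e1 := hhi (i+1) j h1 (by omega) (by omega)
    have e2 := hlo i j h1 (by omega) (by omega)
    linarith
  -- west pair
  have T1 : H (Xf θ t i j - Xf θ t (i-1) j) - L*(Xf θ t (i+1) j - Xf θ t i j)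
      ≤ H (Xf θ t i j - Xf θ t (i+1) j) - H (Xf θ t (i-1) j - Xf θ t i j) := by
    have e : Xf θ t i j - Xf θ t (i+1) j = -(Xf θ t (i+1) j - Xf θ t i j) := by ring
    have e2 : Xf θ t (i-1) j - Xf θ t i j = -(Xf θ t i j - Xf θ t (i-1) j) := by ring
    rw [e, e2, S.odd, S.odd]
    have := S.Hple _ hh (by linarith)
    linarith
  -- south pair
  have T2 : -(L*(Xf θ t (i+1) j - Xf θ t i j))
      ≤ H (Xf θ t (i+1) (j+1) - Xf θ t (i+1) j) - H (Xf θ t i (j+1) - Xf θ t i j) := by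
    have hho := hPh i (j+1) (by omega) (by omega) h3
    have e1 := hlo (i+1) (j+1) (by omega) (by omega) (by omega)
    have e2 := hhi (i+1) j h1 (by omega) (by omega)
    have e3 := hlo i (j+1) (by omega) (by omega) (by omega)
    have e4 := hhi i j h1 (by omega) (by omega)
    have e5 := hlo (i+1) j h1 (by omega) (by omega)
    have e6 := hhi i (j+1) (by omega) (by omega) (by omega)
    have e7 := hhi (i+1) (j+1) (by omega) (by omega) (by omega)
    have e8 := hlo i j h1 (by omega) (by omega)
    rcases le_or_gt (Xf θ t i (j+1) - Xf θ t i j) (Xf θ t (i+1) (j+1) - Xf θ t (i+1) j)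
      with hab | hab
    · have := S.mono (Xf θ t i (j+1) - Xf θ t i j) (Xf θ t (i+1) (j+1) - Xf θ t (i+1) j)
        (by linarith) hab (by linarith)
      nlinarith
    · have hl := S.lip (Xf θ t (i+1) (j+1) - Xf θ t (i+1) j) (Xf θ t i (j+1) - Xf θ t i j)
        ⟨by linarith, by linarith⟩ ⟨by linarith, by linarith⟩
      have harg : |Xf θ t (i+1) (j+1) - Xf θ t (i+1) j - (Xf θ t i (j+1) - Xf θ t i j)|
          = Xf θ t i (j+1) - Xf θ t i j - (Xf θ t (i+1) (j+1) - Xf θ t (i+1) j) := by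
        rw [abs_of_nonpos (by linarith)]; ring
      rw [harg] at hl
      have habs := abs_le.mp hl
      have hba : Xf θ t i (j+1) - Xf θ t i j - (Xf θ t (i+1) (j+1) - Xf θ t (i+1) j)
          ≤ Xf θ t (i+1) j - Xf θ t i j := by linarith
      have hm := mul_le_mul_of_nonneg_left hba (by linarith : (0:ℝ) ≤ L)
      linarith [habs.1]
  -- north pair
  have T3 : -(2*L*(Xf θ t (i+1) j - Xf θ t i j))
      ≤ H (Xf θ t (i+1) (j-1) - Xf θ t (i+1) j) - H (Xf θ t i (j-1) - Xf θ t i j) := by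
    rcases (by omega : j = 1 ∨ 2 ≤ j) with hj1 | hj2
    · subst hj1
      have hi2 : 2 ≤ i := by omega
      have ebot1 : Xf θ t (i+1) (1-1) = π/2 - Xf θ t (i+1) 1 := by
        rw [(by ring : (1:ℤ)-1 = 0)]; exact Xf_bot θ t (by omega)
      have ebot2 : Xf θ t i (1-1) = π/2 - Xf θ t i 1 := by
        rw [(by ring : (1:ℤ)-1 = 0)]; exact Xf_bot θ t hi2
      rw [ebot1, ebot2]
      have e1 := hlo (i+1) 1 le_rfl (by omega) (by omega)
      have e2 := hhi (i+1) 1 le_rfl (by omega) (by omega)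
      have e3 := hlo i 1 le_rfl (by omega) (by omega)
      have e4 := hhi i 1 le_rfl (by omega) (by omega)
      have hl := S.lip (π/2 - Xf θ t (i+1) 1 - Xf θ t (i+1) 1)
        (π/2 - Xf θ t i 1 - Xf θ t i 1) ⟨by linarith, by linarith⟩ ⟨by linarith, by linarith⟩
      have heq : π/2 - Xf θ t (i+1) 1 - Xf θ t (i+1) 1 - (π/2 - Xf θ t i 1 - Xf θ t i 1)
          = -(2*(Xf θ t (i+1) 1 - Xf θ t i 1)) := by ring
      have harg : |2 * (Xf θ t (i+1) 1 - Xf θ t i 1)| = 2 * (Xf θ t (i+1) 1 - Xf θ t i 1) :=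
        abs_of_nonneg (by linarith)
      rw [heq, abs_neg, harg] at hl
      have habs := abs_le.mp hl
      linarith [habs.1]
    · have hho := hPh i (j-1) (by omega) (by omega) h3
      have e1 := hlo (i+1) (j-1) (by omega) (by omega) (by omega)
      have e2 := hhi (i+1) j h1 (by omega) (by omega)
      have e3 := hlo i (j-1) (by omega) (by omega) (by omega)
      have e4 := hhi i j h1 (by omega) (by omega)
      have e5 := hlo (i+1) j h1 (by omega) (by omega)
      have e6 := hhi i (j-1) (by omega) (by omega) (by omega)
      have e7 := hhi (i+1) (j-1) (by omega) (by omega) (by omega)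
      have e8 := hlo i j h1 (by omega) (by omega)
      rcases le_or_gt (Xf θ t i (j-1) - Xf θ t i j) (Xf θ t (i+1) (j-1) - Xf θ t (i+1) j)
        with hab | hab
      · have := S.mono (Xf θ t i (j-1) - Xf θ t i j) (Xf θ t (i+1) (j-1) - Xf θ t (i+1) j)
          (by linarith) hab (by linarith)
        nlinarith
      · have hl := S.lip (Xf θ t (i+1) (j-1) - Xf θ t (i+1) j) (Xf θ t i (j-1) - Xf θ t i j)
          ⟨by linarith, by linarith⟩ ⟨by linarith, by linarith⟩
        have harg : |Xf θ t (i+1) (j-1) - Xf θ t (i+1) j - (Xf θ t i (j-1) - Xf θ t i j)|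
            = Xf θ t i (j-1) - Xf θ t i j - (Xf θ t (i+1) (j-1) - Xf θ t (i+1) j) := by
          rw [abs_of_nonpos (by linarith)]; ring
        rw [harg] at hl
        have habs := abs_le.mp hl
        have hba : Xf θ t i (j-1) - Xf θ t i j - (Xf θ t (i+1) (j-1) - Xf θ t (i+1) j)
            ≤ Xf θ t (i+1) j - Xf θ t i j := by linarith
        have hm := mul_le_mul_of_nonneg_left hba (by linarith : (0:ℝ) ≤ L)
        linarith [habs.1]
  -- last terms
  have T5 : H (Xf θ t (i+1) j - Xf θ t i j) ≤ L*(Xf θ t (i+1) j - Xf θ t i j) :=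
    S.Hple _ hh (by linarith)
  show _ ≤ Ffx H N θ t (i+1) j - Ffx H N θ t i j
  unfold Ffx
  rw [(by ring : i+1-1 = i), if_pos (by omega : i < N)]
  by_cases hiN : i + 1 < N
  · rw [if_pos hiN]
    have T4 : 0 ≤ H (Xf θ t (i+1+1) j - Xf θ t (i+1) j) := by
      apply S.Hnn
      · have := hPh (i+1) j h1 (by omega) (by omega); linarith
      · have e1 := hhi (i+1+1) j h1 (by omega) (by omega)
        have e2 := hlo (i+1) j h1 (by omega) (by omega)
        linarith
    nlinarith
  · rw [if_neg hiN]
    nlinarith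
end Stage2

section Stage3
variable {H : ℝ → ℝ} {N : ℤ} {θ : ℝ → ℤ → ℤ → ℝ} {L : ℝ}

lemma expDeriv' (C t : ℝ) :
    HasDerivAt (fun s => Real.exp (C*s)) (C * Real.exp (C*t)) t := by
  have h := (Real.hasDerivAt_exp (C*t)).comp t ((hasDerivAt_id t).const_mul C)
  exact h.congr_deriv (by ring)

lemma X0val (S : Setup H N θ L) {i j : ℤ} (h1 : 1 ≤ j) (h2 : j < i) (h3 : i ≤ N) :
    Xf θ 0 i j = π/4 := by
  rw [Xf_off θ 0 h1 h2]; exact S.std.2 i j h1 h2 h3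

lemma diagPos (S : Setup H N θ L) (hst : ∀ t : ℝ, 0 ≤ t → Ph N θ t 0 ∧ Pv N θ t 0) :
    ∀ i : ℤ, 1 ≤ i → i ≤ N - 1 → ∀ t : ℝ, 0 ≤ t → 0 < Xf θ t (i+1) i := by
  have hπ := Real.pi_gt_three
  have hL1 := S.hL1
  intro i h1 h3 t ht
  set w : ℝ → ℝ := fun s => Real.exp (2*L*s) * Xf θ s (i+1) i with hw
  have hder : ∀ s : ℝ, HasDerivAt w
      (2*L*Real.exp (2*L*s) * Xf θ s (i+1) i + Real.exp (2*L*s) * Ffx H N θ s (i+1) i) s := by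
    intro s
    exact (expDeriv' (2*L) s).mul (hasDeriv_off S.std h1 (by omega) (by omega) s)
  have hmono : MonotoneOn w (Ici (0:ℝ)) := by
    apply monotoneOn_of_deriv_nonneg (convex_Ici 0)
    · exact Continuous.continuousOn (continuous_iff_continuousAt.2
        fun s => (hder s).differentiableAt.continuousAt)
    · intro s _
      exact (hder s).differentiableAt.differentiableWithinAt
    · intro s hs
      rw [interior_Ici] at hs
      rw [(hder s).deriv]
      have hcl := cleanHD S (hst s hs.le).1 (hst s hs.le).2 i h1 h3
      have hE := Real.exp_pos (2*L*s)
      have := mul_le_mul_of_nonneg_left hcl hE.le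
      nlinarith
  have hw0 : w 0 = π/4 := by
    rw [hw]
    simp only [mul_zero, Real.exp_zero, one_mul]
    exact X0val S h1 (by omega) (by omega)
  have hwt : π/4 ≤ Real.exp (2*L*t) * Xf θ t (i+1) i := by
    rw [← hw0]
    exact hmono self_mem_Ici (mem_Ici.2 ht) ht
  have hE := Real.exp_pos (2*L*t)
  nlinarith

lemma stage2 (S : Setup H N θ L) (hst : ∀ t : ℝ, 0 ≤ t → Ph N θ t 0 ∧ Pv N θ t 0) :
    ∀ j i : ℤ, 1 ≤ j → j ≤ i → i ≤ N - 1 → ∀ t : ℝ, 0 < t →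
      0 < Xf θ t (i+1) j - Xf θ t i j := by
  have hπ := Real.pi_gt_three
  have hL1 := S.hL1
  intro j i hj hji hiN
  have key : ∀ i : ℤ, j ≤ i → i ≤ N - 1 → ∀ t : ℝ, 0 < t →
      0 < Xf θ t (i+1) j - Xf θ t i j := by
    refine Int.le_induction ?_ ?_
    · intro h3 t ht
      rw [Xf_diag]
      have := diagPos S hst j hj h3 t ht.le
      linarith
    · intro i hi IH h3 t ht
      have IH' : ∀ s : ℝ, 0 < s → 0 < Xf θ s (i+1) j - Xf θ s i j := IH (by omega)
      set w : ℝ → ℝ := fun s => Real.exp (6*L*s) * (Xf θ s (i+1+1) j - Xf θ s (i+1) j)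
        with hw
      have hder : ∀ s : ℝ, HasDerivAt w
          (6*L*Real.exp (6*L*s) * (Xf θ s (i+1+1) j - Xf θ s (i+1) j) +
            Real.exp (6*L*s) * (Ffx H N θ s (i+1+1) j - Ffx H N θ s (i+1) j)) s := by
        intro s
        exact (expDeriv' (6*L) s).mul
          ((hasDeriv_off S.std hj (by omega) (by omega) s).sub
            (hasDeriv_off S.std hj (by omega) (by omega) s))
      have hsm : StrictMonoOn w (Ici (0:ℝ)) := by
        apply strictMonoOn_of_deriv_pos (convex_Ici 0)
        · exact Continuous.continuousOn (continuous_iff_continuousAt.2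
            fun s => (hder s).differentiableAt.continuousAt)
        · intro s hs
          rw [interior_Ici] at hs
          rw [(hder s).deriv]
          have hcl := cleanH S (hst s hs.le).1 (hst s hs.le).2 (i+1) j hj (by omega) h3
          rw [(by ring : i+1-1 = i)] at hcl
          have hprev := IH' s hs
          have hprevub : Xf θ s (i+1) j - Xf θ s i j ≤ π/4 := by
            have e1 := rng_hi S le_rfl (hst s hs.le).2 (i+1) j hj (by omega) (by omega)
            have e2 := rng_lo S le_rfl (hst s hs.le).2 i j hj (by omega) (by omega)
            linarith
          have hHpos : 0 < H (Xf θ s (i+1) j - Xf θ s i j) := by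
            have := S.monoS 0 (Xf θ s (i+1) j - Xf θ s i j) (by linarith) hprev
              (by linarith)
            rwa [S.zero] at this
          have hE := Real.exp_pos (6*L*s)
          have := mul_le_mul_of_nonneg_left hcl hE.le
          nlinarith
      have hw0 : w 0 = 0 := by
        rw [hw]
        simp only [mul_zero, Real.exp_zero, one_mul]
        rw [X0val S hj (by omega) (by omega), X0val S hj (by omega) (by omega)]
        ring
      have hwt : 0 < Real.exp (6*L*t) * (Xf θ t (i+1+1) j - Xf θ t (i+1) j) := by
        have := hsm self_mem_Ici (mem_Ici.2 ht.le) ht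
        rw [hw0] at this
        exact this
      have hE := Real.exp_pos (6*L*t)
      nlinarith
  exact key i hji hiN
end Stage3

theorem stmt4 (H : ℝ → ℝ) (hH : IsCoupling H) (N : ℤ) (hN : 2 ≤ N)
    (θ : ℝ → ℤ → ℤ → ℝ) (hθ : IsStdSolution H N θ) :
    ∀ t : ℝ, 0 < t → ∀ i j : ℤ, 1 ≤ j → j ≤ i → i ≤ N - 1 →
      (if i = j then (0 : ℝ) else θ t i j) < θ t (i + 1) j := by
  obtain ⟨L, hL1, hlip⟩ := cf_lip hH
  have S : Setup H N θ L :=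
    { hN := hN
      std := hθ
      hL1 := hL1
      lip := hlip
      odd := hH.2.2.1
      zero := cf_zero hH
      mono := fun a b ha hab hb =>
        (cf_mono hH).monotoneOn ⟨ha, le_trans hab hb⟩ ⟨le_trans ha hab, hb⟩ hab
      monoS := fun a b ha hab hb =>
        (cf_mono hH) ⟨ha, le_trans hab.le hb⟩ ⟨le_trans ha hab.le, hb⟩ hab }
  intro t ht i j h1 h2 h3
  have key := stage2 S (stage1 S) j i h1 h2 h3 t ht
  have e2 : Xf θ t (i+1) j = θ t (i+1) j := Xf_off θ t h1 (by omega)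
  by_cases he : i = j
  · rw [if_pos he]
    subst he
    rw [Xf_diag, e2] at key
    linarith
  · rw [if_neg he]
    rw [e2, Xf_off (i := i) (j := j) θ t h1 (by omega)] at key
    linarith
end
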